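/- arXiv:1902.00739 — 14 statements merged into one kernel-verified Lean document; each statement's English description precedes it below -/
import Mathlib

section
/- Let n₁, n₂ be positive integers, let A ∈ ℝ^{n₁×n₂} have A_{ij} > 0 for all i, j, and let b ∈ ℝ. Define U = { W ∈ ℝ^{n₁×n₂} : W_{ij} ≥ 0 for all i, j; Σ_{i,j} A_{ij} W_{ij} ≤ b; rank(W) ≤ 1 }. Then the convex hull of U equals { W ∈ ℝ^{n₁×n₂} : W_{ij} ≥ 0 for all i, j and Σ_{i,j} A_{ij} W_{ij} ≤ b }. -/
lemma rank_vecMulVec_le {m n : ℕ} (u : Fin m → ℝ) (v : Fin n → ℝ) :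
    (Matrix.vecMulVec u v).rank ≤ 1 := by
  rw [Matrix.vecMulVec_eq Unit]
  calc (Matrix.replicateCol Unit u * Matrix.replicateRow Unit v).rank ≤ (Matrix.replicateCol Unit u).rank :=
        Matrix.rank_mul_le_left _ _
    _ ≤ Fintype.card Unit := Matrix.rank_le_card_width _
    _ = 1 := by simp

/-- The convex hull of the rank-1 set with a single positive linear side
constraint is the polyhedron obtained by dropping the rank constraint. -/
theorem statement0 (n₁ n₂ : ℕ) (hn₁ : 0 < n₁) (hn₂ : 0 < n₂)
    (A : Matrix (Fin n₁) (Fin n₂) ℝ) (hA : ∀ i j, 0 < A i j) (b : ℝ) :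
    convexHull ℝ
      {W : Matrix (Fin n₁) (Fin n₂) ℝ |
        (∀ i j, 0 ≤ W i j) ∧ (∑ i, ∑ j, A i j * W i j) ≤ b ∧ W.rank ≤ 1} =
    {W : Matrix (Fin n₁) (Fin n₂) ℝ |
        (∀ i j, 0 ≤ W i j) ∧ (∑ i, ∑ j, A i j * W i j) ≤ b} := by
  have hlin : ∀ (M : Matrix (Fin n₁) (Fin n₂) ℝ) (t : ℝ),
      ∑ i, ∑ j, A i j * (t * M i j) = t * ∑ i, ∑ j, A i j * M i j := by
    intro M t
    rw [Finset.mul_sum]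
    refine Finset.sum_congr rfl fun i _ => ?_
    rw [Finset.mul_sum]
    exact Finset.sum_congr rfl fun j _ => by ring
  apply le_antisymm
  · apply convexHull_min
    · intro W hW
      exact ⟨hW.1, hW.2.1⟩
    · intro X hX Y hY a c ha hc hac
      constructor
      · intro i j
        have : (a • X + c • Y) i j = a * X i j + c * Y i j := by
          simp [Matrix.add_apply, Matrix.smul_apply, smul_eq_mul]
        rw [this]
        have := hX.1 i j
        have := hY.1 i j
        positivity
      · have hrw : ∑ i, ∑ j, A i j * (a • X + c • Y) i j
            = a * (∑ i, ∑ j, A i j * X i j) + c * (∑ i, ∑ j, A i j * Y i j) := by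
          rw [← hlin X a, ← hlin Y c, ← Finset.sum_add_distrib]
          refine Finset.sum_congr rfl fun i _ => ?_
          rw [← Finset.sum_add_distrib]
          refine Finset.sum_congr rfl fun j _ => ?_
          simp [Matrix.add_apply, Matrix.smul_apply, smul_eq_mul]
          ring
        rw [hrw]
        have h1 := mul_le_mul_of_nonneg_left hX.2 ha
        have h2 := mul_le_mul_of_nonneg_left hY.2 hc
        have hb : a * b + c * b = b := by rw [← add_mul, hac, one_mul]
        linarith
  · intro W hW
    obtain ⟨hWnn, hWb⟩ := hW
    set S : ℝ := ∑ i, ∑ j, A i j * W i j with hS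
    have hSnn : 0 ≤ S := Finset.sum_nonneg fun i _ => Finset.sum_nonneg fun j _ =>
      mul_nonneg (hA i j).le (hWnn i j)
    rcases eq_or_lt_of_le hSnn with hS0 | hSpos
    · -- S = 0 forces W = 0, which is in U
      have hW0 : W = 0 := by
        ext i j
        have h1 : ∀ i ∈ (Finset.univ : Finset (Fin n₁)),
            0 ≤ ∑ j, A i j * W i j := fun i _ =>
          Finset.sum_nonneg fun j _ => mul_nonneg (hA i j).le (hWnn i j)
        have h2 : ∑ j, A i j * W i j = 0 :=
          (Finset.sum_eq_zero_iff_of_nonneg h1).mp hS0.symm i (Finset.mem_univ i)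
        have h3 : A i j * W i j = 0 :=
          (Finset.sum_eq_zero_iff_of_nonneg
            (fun j _ => mul_nonneg (hA i j).le (hWnn i j))).mp h2 j (Finset.mem_univ j)
        have := (hA i j).ne'
        simpa [Matrix.zero_apply, this] using h3
      apply subset_convexHull
      refine ⟨hWnn, hWb, ?_⟩
      rw [hW0, Matrix.rank_zero]
      exact zero_le_one
    · -- S > 0: write W as a center of mass of rank-one matrices
      set w : Fin n₁ × Fin n₂ → ℝ := fun p => A p.1 p.2 * W p.1 p.2 with hw
      set z : Fin n₁ × Fin n₂ → Matrix (Fin n₁) (Fin n₂) ℝ := fun p =>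
        Matrix.vecMulVec (Pi.single p.1 (S / A p.1 p.2)) (Pi.single p.2 1) with hz
      have hsum : ∑ p : Fin n₁ × Fin n₂, w p = S := by
        rw [hS, Fintype.sum_prod_type]
      have key : Finset.univ.centerMass w z = W := by
        rw [Finset.centerMass, hsum]
        ext i j
        have hentry : (∑ p : Fin n₁ × Fin n₂, w p • z p) i j = S * W i j := by
          rw [Matrix.sum_apply]
          rw [Fintype.sum_prod_type]
          have : ∀ k l, (w (k, l) • z (k, l)) i j
              = (if i = k then (if j = l then A k l * W k l * (S / A k l) else 0) else 0) := by
            intro k l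
            simp only [hw, hz, Matrix.smul_apply, Matrix.vecMulVec_apply, smul_eq_mul,
              Pi.single_apply]
            by_cases hk : i = k <;> by_cases hl : j = l <;> simp [hk, hl] <;> ring
          simp only [this, Finset.sum_ite_eq, Finset.mem_univ, if_true, Finset.sum_ite_irrel,
            Finset.sum_const_zero]
          have hAne := (hA i j).ne'
          field_simp
        rw [Matrix.smul_apply, hentry, smul_eq_mul]
        field_simp
      rw [← key]
      apply Finset.centerMass_mem_convexHull
      · intro p _
        exact mul_nonneg (hA p.1 p.2).le (hWnn p.1 p.2)
      · rw [hsum]; exact hSpos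
      · intro p _
        refine ⟨?_, ?_, rank_vecMulVec_le _ _⟩
        · intro i j
          simp only [hz, Matrix.vecMulVec_apply]
          apply mul_nonneg
          · rcases eq_or_ne i p.1 with rfl | h
            · rw [Pi.single_eq_same]; exact div_nonneg hSnn (hA _ _).le
            · rw [Pi.single_eq_of_ne h]
          · rcases eq_or_ne j p.2 with rfl | h
            · rw [Pi.single_eq_same]; exact zero_le_one
            · rw [Pi.single_eq_of_ne h]
        · have : ∑ i, ∑ j, A i j * z p i j = S := by
            have hent : ∀ i j, A i j * z p i j
                = (if i = p.1 then (if j = p.2 then A p.1 p.2 * (S / A p.1 p.2) else 0) else 0) := by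
              intro i j
              simp only [hz, Matrix.vecMulVec_apply, Pi.single_apply]
              by_cases hk : i = p.1 <;> by_cases hl : j = p.2 <;> simp [hk, hl]
            simp only [hent, Finset.sum_ite_eq', Finset.mem_univ, if_true, Finset.sum_ite_irrel,
              Finset.sum_const_zero]
            have hAne := (hA p.1 p.2).ne'
            field_simp
          rw [this]
          exact hWb
end

section
/- Let n₁, n₂, m be positive integers, let α¹,…,αᵐ ∈ ℝ^{n₁}, β ∈ ℝ^{n₂} with β_j > 0 for all j, and b₁,…,b_m ∈ ℝ. Assume that { v ∈ ℝ^{n₁} : v ≥ 0 and Σ_i αᵏ_i v_i ≤ 0 for all k = 1,…,m } = {0}. Then the set { W ∈ ℝ^{n₁×n₂} : W_{ij} ≥ 0 for all i, j; Σ_{i,j} αᵏ_i β_j W_{ij} ≤ b_k for each k = 1,…,m } is bounded. -/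
/-- Under the recession condition, the polyhedron defined by entrywise nonnegativity
and the rank-1 constraint matrices αᵏβᵀ is bounded. -/
theorem statement2 (n₁ n₂ m : ℕ) (hn₁ : 0 < n₁) (hn₂ : 0 < n₂) (hm : 0 < m)
    (α : Fin m → Fin n₁ → ℝ) (β : Fin n₂ → ℝ) (hβ : ∀ j, 0 < β j) (b : Fin m → ℝ)
    (hrec : {v : Fin n₁ → ℝ | (∀ i, 0 ≤ v i) ∧ ∀ k, ∑ i, α k i * v i ≤ 0} = {0}) :
    ∃ C : ℝ, ∀ W : Matrix (Fin n₁) (Fin n₂) ℝ,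
      ((∀ i j, 0 ≤ W i j) ∧ ∀ k, ∑ i, ∑ j, α k i * β j * W i j ≤ b k) →
      ∀ i j, |W i j| ≤ C := by
  haveI : NeZero n₁ := ⟨hn₁.ne'⟩
  haveI : NeZero n₂ := ⟨hn₂.ne'⟩
  haveI : NeZero m := ⟨hm.ne'⟩
  -- the function g
  set g : (Fin n₁ → ℝ) → ℝ := fun v => ∑ k, max (∑ i, α k i * v i) 0 with hg
  have hgcont : Continuous g := by
    apply continuous_finset_sum
    intro k _
    exact (continuous_finset_sum _ fun i _ =>
      (continuous_const.mul (continuous_apply i))).max continuous_const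
  -- minimize g over the standard simplex
  obtain ⟨x, hxΔ, hxmin⟩ := (isCompact_stdSimplex ℝ (Fin n₁)).exists_isMinOn
    ⟨Pi.single 0 1, single_mem_stdSimplex ℝ 0⟩ hgcont.continuousOn
  set ε := g x with hε
  have hεpos : 0 < ε := by
    rcases lt_or_ge 0 ε with h | h
    · exact h
    · exfalso
      have hterm : ∀ k ∈ Finset.univ, (0:ℝ) ≤ max (∑ i, α k i * x i) 0 :=
        fun k _ => le_max_right _ _
      have hsum0 : ∑ k, max (∑ i, α k i * x i) 0 = 0 :=
        le_antisymm h (Finset.sum_nonneg hterm)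
      have hzero := (Finset.sum_eq_zero_iff_of_nonneg hterm).mp hsum0
      have hxmem : x ∈ {v : Fin n₁ → ℝ | (∀ i, 0 ≤ v i) ∧ ∀ k, ∑ i, α k i * v i ≤ 0} := by
        refine ⟨hxΔ.1, fun k => ?_⟩
        have := hzero k (Finset.mem_univ k)
        have : (∑ i, α k i * x i) ≤ max (∑ i, α k i * x i) 0 := le_max_left _ _
        rw [hzero k (Finset.mem_univ k)] at this
        exact this
      rw [hrec] at hxmem
      have hx0 : x = 0 := hxmem
      have := hxΔ.2
      rw [hx0] at this
      simp at this
  -- bound constants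
  set B : ℝ := ∑ k, max (b k) 0 with hB
  obtain ⟨j₀, -, hj0⟩ := Finset.exists_min_image Finset.univ β ⟨0, Finset.mem_univ 0⟩
  set βm := β j₀ with hβm
  have hβmpos : 0 < βm := hβ j₀
  refine ⟨max ((B / ε) / βm) 0, ?_⟩
  rintro W ⟨hWpos, hWb⟩ i j
  rw [abs_of_nonneg (hWpos i j)]
  -- the row sums
  set v : Fin n₁ → ℝ := fun i => ∑ j, β j * W i j with hv
  have hvpos : ∀ i, 0 ≤ v i := fun i =>
    Finset.sum_nonneg fun j _ => mul_nonneg (hβ j).le (hWpos i j)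
  have hvα : ∀ k, ∑ i, α k i * v i ≤ b k := by
    intro k
    have : ∑ i, α k i * v i = ∑ i, ∑ j, α k i * β j * W i j := by
      refine Finset.sum_congr rfl fun i _ => ?_
      rw [hv, Finset.mul_sum]
      exact Finset.sum_congr rfl fun j _ => by ring
    rw [this]; exact hWb k
  set s : ℝ := ∑ i, v i with hs
  have hsnn : 0 ≤ s := Finset.sum_nonneg fun i _ => hvpos i
  rcases eq_or_lt_of_le hsnn with hs0 | hspos
  · -- s = 0 ⇒ W = 0
    have hvi0 : ∀ i, v i = 0 := by
      intro i
      have := (Finset.sum_eq_zero_iff_of_nonneg (fun i _ => hvpos i)).mp hs0.symm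
      exact this i (Finset.mem_univ i)
    have hW0 : W i j = 0 := by
      have := (Finset.sum_eq_zero_iff_of_nonneg
        (fun j _ => mul_nonneg (hβ j).le (hWpos i j))).mp (hvi0 i)
      have h2 := this j (Finset.mem_univ j)
      have := (hβ j).ne'
      rcases mul_eq_zero.mp h2 with h | h
      · exact absurd h this
      · exact h
    rw [hW0]
    exact le_max_right _ _
  · -- s > 0
    have hsne : s ≠ 0 := hspos.ne'
    set u : Fin n₁ → ℝ := fun i => s⁻¹ * v i with hu
    have huΔ : u ∈ stdSimplex ℝ (Fin n₁) := by
      constructor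
      · intro i; exact mul_nonneg (inv_nonneg.mpr hsnn) (hvpos i)
      · rw [hu]; simp only
        rw [← Finset.mul_sum, ← hs, inv_mul_cancel₀ hsne]
    have hgu : ε ≤ g u := hxmin huΔ
    have hgv : g v = s * g u := by
      rw [hg]; simp only
      rw [Finset.mul_sum]
      refine Finset.sum_congr rfl fun k _ => ?_
      have h1 : ∑ i, α k i * v i = s * ∑ i, α k i * u i := by
        rw [Finset.mul_sum]
        refine Finset.sum_congr rfl fun i _ => ?_
        rw [hu]; field_simp
      rw [h1]
      rcases le_total (∑ i, α k i * u i) 0 with hle | hle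
      · rw [max_eq_right hle, max_eq_right (by nlinarith), mul_zero]
      · rw [max_eq_left hle, max_eq_left (by nlinarith)]
    have hgvB : g v ≤ B := by
      rw [hg, hB]
      refine Finset.sum_le_sum fun k _ => max_le_max (hvα k) le_rfl
    have hsB : s * ε ≤ B := by
      calc s * ε ≤ s * g u := by nlinarith
        _ = g v := hgv.symm
        _ ≤ B := hgvB
    have hsle : s ≤ B / ε := (le_div_iff₀ hεpos).mpr hsB
    have hWv : βm * W i j ≤ s := by
      have h1 : β j * W i j ≤ v i := by
        rw [hv]
        exact Finset.single_le_sum (fun j _ => mul_nonneg (hβ j).le (hWpos i j))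
          (Finset.mem_univ j)
      have h2 : βm * W i j ≤ β j * W i j :=
        mul_le_mul_of_nonneg_right (hj0 j (Finset.mem_univ j)) (hWpos i j)
      have h3 : v i ≤ s := Finset.single_le_sum (fun i _ => hvpos i) (Finset.mem_univ i)
      linarith
    have : W i j ≤ (B / ε) / βm := by
      rw [le_div_iff₀ hβmpos]
      calc W i j * βm = βm * W i j := by ring
        _ ≤ s := hWv
        _ ≤ B / ε := hsle
    exact this.trans (le_max_left _ _)
end

section
/- Let n₁, n₂, m be positive integers, let α¹,…,αᵐ ∈ ℝ^{n₁}, β ∈ ℝ^{n₂} with β_j > 0 for all j, and b₁,…,b_m ∈ ℝ. Define U = { W ∈ ℝ^{n₁×n₂} : W ≥ 0 entrywise; Σ_{i,j} αᵏ_i β_j W_{ij} ≤ b_k for each k = 1,…,m; rank(W) ≤ 1 }. Then every extreme point of U has at most one nonzero column, i.e., for every extreme point W of U there exists h ∈ {1,…,n₂} such that W_{ij} = 0 for all i and all j ≠ h. -/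
open Module

/-- A matrix of rank at most one decomposes as an outer product. -/
lemma aux_rank_le_one_decomp {n₁ n₂ : ℕ} (W : Matrix (Fin n₁) (Fin n₂) ℝ)
    (h : W.rank ≤ 1) : ∃ (u : Fin n₁ → ℝ) (v : Fin n₂ → ℝ), ∀ i j, W i j = u i * v j := by
  have h' : finrank ℝ (LinearMap.range W.mulVecLin) ≤ 1 := h
  obtain ⟨v₀, hv₀⟩ := finrank_le_one_iff.mp h'
  choose c hc using fun j : Fin n₂ =>
    hv₀ ⟨W.mulVec (Pi.single j 1), ⟨Pi.single j 1, rfl⟩⟩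
  refine ⟨fun i => (v₀ : Fin n₁ → ℝ) i, c, fun i j => ?_⟩
  have := congrArg (fun x : LinearMap.range W.mulVecLin => (x : Fin n₁ → ℝ) i) (hc j)
  simp [Matrix.mulVec_single] at this
  rw [← this]; ring

/-- An outer product matrix has rank at most one. -/
lemma aux_rank_vecMulVec_le_one {n₁ n₂ : ℕ} (u : Fin n₁ → ℝ) (v : Fin n₂ → ℝ) :
    (Matrix.vecMulVec u v).rank ≤ 1 := by
  have hsub : LinearMap.range (Matrix.vecMulVec u v).mulVecLin
      ≤ Submodule.span ℝ {u} := by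
    rintro x ⟨y, rfl⟩
    have hx : (Matrix.vecMulVec u v).mulVecLin y = (∑ j, v j * y j) • u := by
      funext i
      simp only [Matrix.mulVecLin_apply, Matrix.mulVec, dotProduct,
        Matrix.vecMulVec_apply, Pi.smul_apply, smul_eq_mul, Finset.sum_mul]
      exact Finset.sum_congr rfl fun j _ => by ring
    rw [hx]
    exact Submodule.smul_mem _ _ (Submodule.mem_span_singleton_self u)
  have h2 : finrank ℝ (Submodule.span ℝ ({u} : Set (Fin n₁ → ℝ))) ≤ 1 := by
    rcases eq_or_ne u 0 with rfl | hu
    · rw [Submodule.span_zero_singleton]; simp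
    · exact (finrank_span_singleton hu).le
  exact le_trans (Submodule.finrank_mono hsub) h2

/-- Every extreme point of the rank-1 set with linear side constraints given by
rank-1 constraint matrices αᵏβᵀ has at most one nonzero column. -/
theorem statement3 (n₁ n₂ m : ℕ) (hn₁ : 0 < n₁) (hn₂ : 0 < n₂) (hm : 0 < m)
    (α : Fin m → Fin n₁ → ℝ) (β : Fin n₂ → ℝ) (hβ : ∀ j, 0 < β j) (b : Fin m → ℝ) :
    ∀ W ∈ Set.extremePoints ℝ
      {W : Matrix (Fin n₁) (Fin n₂) ℝ |
        (∀ i j, 0 ≤ W i j) ∧ (∀ k, ∑ i, ∑ j, α k i * β j * W i j ≤ b k) ∧ W.rank ≤ 1},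
      ∃ h : Fin n₂, ∀ i j, j ≠ h → W i j = 0 := by
  rintro W ⟨⟨hpos, hcon, hrank⟩, hext⟩
  by_contra hcol
  push_neg at hcol
  obtain ⟨i₂, j₂, _, h2⟩ := hcol ⟨0, hn₂⟩
  obtain ⟨i₁, j₁, hne, h1⟩ := hcol j₂
  obtain ⟨u, v, hdec⟩ := aux_rank_le_one_decomp W hrank
  have hv1 : u i₁ * v j₁ ≠ 0 := by rw [← hdec]; exact h1
  have hv2 : u i₂ * v j₂ ≠ 0 := by rw [← hdec]; exact h2
  have hvj1 : v j₁ ≠ 0 := fun h => hv1 (by rw [h, mul_zero])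
  set r : ℝ := (β j₂ * v j₂) / (β j₁ * v j₁) with hr
  set e : Fin n₂ → ℝ := fun j => if j = j₂ then v j₂ else if j = j₁ then -(r * v j₁) else 0
    with he
  have he2 : e j₂ = v j₂ := by simp [he]
  have he1 : e j₁ = -(r * v j₁) := by simp [he, hne]
  have he0 : ∀ j, j ≠ j₂ → j ≠ j₁ → e j = 0 := by
    intro j hj2 hj1; simp [he, hj2, hj1]
  have hbe : ∑ j, β j * e j = 0 := by
    have hsupp : ∀ j ∈ Finset.univ, j ∉ ({j₁, j₂} : Finset (Fin n₂)) → β j * e j = 0 := by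
      intro j _ hj
      simp only [Finset.mem_insert, Finset.mem_singleton, not_or] at hj
      rw [he0 j hj.2 hj.1, mul_zero]
    rw [← Finset.sum_subset (Finset.subset_univ ({j₁, j₂} : Finset (Fin n₂))) hsupp,
      Finset.sum_pair hne]
    rw [he1, he2]
    have hb1 : β j₁ ≠ 0 := (hβ j₁).ne'
    field_simp [hr]
    have hc : β j₁ * v j₁ ≠ 0 := mul_ne_zero hb1 hvj1
    have hr' : β j₁ * r * v j₁ = β j₂ * v j₂ := by
      calc β j₁ * r * v j₁ = r * (β j₁ * v j₁) := by ring
        _ = β j₂ * v j₂ := by rw [hr]; exact div_mul_cancel₀ _ hc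
    linarith
  set ε : ℝ := min (1/2) (1/(2*(|r|+1))) with hε
  have hrpos : (0:ℝ) < 2*(|r|+1) := by positivity
  have hεpos : 0 < ε := lt_min (by norm_num) (by positivity)
  have hε1 : ε ≤ 1/2 := min_le_left _ _
  have hεr : ε * |r| ≤ 1/2 := by
    have h1' : ε ≤ 1/(2*(|r|+1)) := min_le_right _ _
    have h2' : (0:ℝ) ≤ |r| := abs_nonneg r
    rw [le_div_iff₀ hrpos] at h1'
    nlinarith
  -- the perturbed matrices
  set Wt : ℝ → Matrix (Fin n₁) (Fin n₂) ℝ :=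
    fun t => Matrix.vecMulVec u (fun j => v j + t * e j) with hWt
  have hWtapp : ∀ t i j, Wt t i j = u i * (v j + t * e j) := fun t i j => rfl
  have hmem : ∀ t : ℝ, |t| ≤ ε → Wt t ∈
      {W : Matrix (Fin n₁) (Fin n₂) ℝ |
        (∀ i j, 0 ≤ W i j) ∧ (∀ k, ∑ i, ∑ j, α k i * β j * W i j ≤ b k) ∧ W.rank ≤ 1} := by
    intro t ht
    have ht1 : |t| ≤ 1/2 := le_trans ht hε1
    have htr : |t| * |r| ≤ 1/2 := by
      calc |t| * |r| ≤ ε * |r| := by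
            exact mul_le_mul_of_nonneg_right ht (abs_nonneg r)
        _ ≤ 1/2 := hεr
    refine ⟨?_, ?_, aux_rank_vecMulVec_le_one _ _⟩
    · intro i j
      rw [hWtapp]
      by_cases hj2 : j = j₂
      · rw [hj2]
        have : u i * (v j₂ + t * e j₂) = (1 + t) * W i j₂ := by
          rw [he2, hdec]; ring
        rw [this]
        have : (0:ℝ) ≤ 1 + t := by
          have := abs_le.mp ht1; linarith [this.1]
        exact mul_nonneg this (hpos i j₂)
      · by_cases hj1 : j = j₁
        · rw [hj1]
          have : u i * (v j₁ + t * e j₁) = (1 - t * r) * W i j₁ := by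
            rw [he1, hdec]; ring
          rw [this]
          have habs : |t * r| ≤ 1/2 := by rw [abs_mul]; exact htr
          have := abs_le.mp habs
          have : (0:ℝ) ≤ 1 - t * r := by linarith [this.2]
          exact mul_nonneg this (hpos i j₁)
        · have : u i * (v j + t * e j) = W i j := by
            rw [he0 j hj2 hj1, hdec]; ring
          rw [this]; exact hpos i j
    · intro k
      have hsum : ∀ i, ∑ j, α k i * β j * Wt t i j = ∑ j, α k i * β j * W i j := by
        intro i
        have : ∀ j, α k i * β j * Wt t i j
            = α k i * β j * W i j + (α k i * u i * t) * (β j * e j) := by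
          intro j; rw [hWtapp, hdec]; ring
        rw [Finset.sum_congr rfl fun j _ => this j, Finset.sum_add_distrib,
          ← Finset.mul_sum, hbe, mul_zero, add_zero]
      calc ∑ i, ∑ j, α k i * β j * Wt t i j
          = ∑ i, ∑ j, α k i * β j * W i j := Finset.sum_congr rfl fun i _ => hsum i
        _ ≤ b k := hcon k
  have hW0 : W = Wt 0 := by
    funext i j; rw [hWtapp, hdec]; ring
  have hseg : W ∈ openSegment ℝ (Wt ε) (Wt (-ε)) := by
    refine ⟨1/2, 1/2, by norm_num, by norm_num, by norm_num, ?_⟩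
    funext i j
    simp only [Matrix.add_apply, Matrix.smul_apply, smul_eq_mul, hWtapp, hdec]
    ring
  have habsε : |ε| ≤ ε := by rw [abs_of_pos hεpos]
  have habsnε : |(-ε)| ≤ ε := by rw [abs_neg, abs_of_pos hεpos]
  have heq := hext (hmem ε habsε) (hmem (-ε) habsnε) hseg
  have := congrFun (congrFun heq i₂) j₂
  rw [hWtapp, he2, hdec] at this
  have : ε * (u i₂ * v j₂) = 0 := by linarith [this]
  rcases mul_eq_zero.mp this with h | h
  · exact absurd h hεpos.ne'
  · exact hv2 h
end

section
/- Let n₁, n₂, m be positive integers, let α¹,…,αᵐ ∈ ℝ^{n₁}, β ∈ ℝ^{n₂} with β_j > 0 for all j, and b₁,…,b_m ∈ ℝ, and assume { v ∈ ℝ^{n₁} : v ≥ 0 and Σ_i αᵏ_i v_i ≤ 0 for all k } = {0}. Define U = { W ∈ ℝ^{n₁×n₂} : W ≥ 0 entrywise; Σ_{i,j} αᵏ_i β_j W_{ij} ≤ b_k for each k; rank(W) ≤ 1 }. For h ∈ {1,…,n₂} let P_h = { γ ∈ ℝ^{n₁} : γ ≥ 0 and β_h · Σ_i αᵏ_i γ_i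 ≤ b_k for each k }. Then the set of extreme points of U equals { γ e_hᵀ : h ∈ {1,…,n₂}, γ an extreme point of P_h }, where γ e_hᵀ denotes the n₁×n₂ matrix whose h-th column equals γ and all other entries are zero. -/
open Module

lemma rank_le_one_aux {n₁ n₂ : ℕ} (c : Fin n₁ → ℝ) (s : Fin n₂ → ℝ) :
    (Matrix.of fun i j => c i * s j : Matrix (Fin n₁) (Fin n₂) ℝ).rank ≤ 1 := by
  have hsub : LinearMap.range (Matrix.of fun i j => c i * s j :
      Matrix (Fin n₁) (Fin n₂) ℝ).mulVecLin ≤ Submodule.span ℝ {c} := by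
    rintro x ⟨y, rfl⟩
    have hx : (Matrix.of fun i j => c i * s j : Matrix (Fin n₁) (Fin n₂) ℝ).mulVecLin y
        = (∑ j, s j * y j) • c := by
      ext i
      simp [Matrix.mulVecLin_apply, Matrix.mulVec, dotProduct, Finset.mul_sum,
        mul_comm, mul_assoc, mul_left_comm]
    rw [hx]
    exact Submodule.smul_mem _ _ (Submodule.mem_span_singleton_self c)
  refine le_trans (Submodule.finrank_mono hsub) ?_
  refine le_trans (finrank_span_le_card ({c} : Set (Fin n₁ → ℝ))) ?_
  simp

lemma rank_col_le_one {n₁ n₂ : ℕ} (γ : Fin n₁ → ℝ) (h : Fin n₂) :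
    (Matrix.of fun i j => if j = h then γ i else 0 : Matrix (Fin n₁) (Fin n₂) ℝ).rank ≤ 1 := by
  have : (Matrix.of fun i j => if j = h then γ i else 0 : Matrix (Fin n₁) (Fin n₂) ℝ)
      = Matrix.of fun i j => γ i * (if j = h then 1 else 0) := by
    ext i j; by_cases hj : j = h <;> simp [hj]
  rw [this]; exact rank_le_one_aux _ _

lemma sum_col_aux {n₁ n₂ : ℕ} (f : Fin n₁ → ℝ) (β : Fin n₂ → ℝ) (γ : Fin n₁ → ℝ) (h : Fin n₂) :
    ∑ i, ∑ j, f i * β j * (if j = h then γ i else 0) = β h * ∑ i, f i * γ i := by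
  rw [Finset.mul_sum]
  refine Finset.sum_congr rfl fun i _ => ?_
  rw [Finset.sum_eq_single h]
  · simp; ring
  · intro j _ hj; simp [hj]
  · simp

lemma cols_dep {n₁ n₂ : ℕ} (W : Matrix (Fin n₁) (Fin n₂) ℝ) (hr : W.rank ≤ 1)
    {i0 : Fin n₁} {h0 : Fin n₂} (hW0 : W i0 h0 ≠ 0) :
    ∀ j, ∃ t : ℝ, ∀ i, W i j = t * W i h0 := by
  set c : Fin n₁ → ℝ := fun i => W i h0 with hc
  have hcmem : ∀ j, (fun i => W i j) ∈ LinearMap.range W.mulVecLin := by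
    intro j
    refine ⟨Pi.single j 1, ?_⟩
    ext i
    simp [Matrix.mulVecLin_apply, Matrix.mulVec, dotProduct, Pi.single_apply]
  have hcne : c ≠ 0 := fun hcz => hW0 (by simpa using congrFun hcz i0)
  have hspan : Submodule.span ℝ {c} = LinearMap.range W.mulVecLin := by
    apply Submodule.eq_of_le_of_finrank_le
    · rw [Submodule.span_le, Set.singleton_subset_iff]; exact hcmem h0
    · rw [finrank_span_singleton hcne]; exact hr
  intro j
  have := hcmem j
  rw [← hspan, Submodule.mem_span_singleton] at this
  obtain ⟨t, ht⟩ := this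
  exact ⟨t, fun i => by simpa using (congrFun ht i).symm⟩

/-- The extreme points of the rank-1 set with linear side constraints given by
rank-1 constraint matrices αᵏβᵀ are exactly the matrices γ eₕᵀ where γ is an
extreme point of the polyhedron Pₕ. -/
theorem statement4 (n₁ n₂ m : ℕ) (hn₁ : 0 < n₁) (hn₂ : 0 < n₂) (hm : 0 < m)
    (α : Fin m → Fin n₁ → ℝ) (β : Fin n₂ → ℝ) (hβ : ∀ j, 0 < β j) (b : Fin m → ℝ)
    (hrec : {v : Fin n₁ → ℝ | (∀ i, 0 ≤ v i) ∧ ∀ k, ∑ i, α k i * v i ≤ 0} = {0}) :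
    Set.extremePoints ℝ
      {W : Matrix (Fin n₁) (Fin n₂) ℝ |
        (∀ i j, 0 ≤ W i j) ∧ (∀ k, ∑ i, ∑ j, α k i * β j * W i j ≤ b k) ∧ W.rank ≤ 1} =
    {W : Matrix (Fin n₁) (Fin n₂) ℝ | ∃ (h : Fin n₂) (γ : Fin n₁ → ℝ),
      γ ∈ Set.extremePoints ℝ
        {g : Fin n₁ → ℝ | (∀ i, 0 ≤ g i) ∧ ∀ k, β h * ∑ i, α k i * g i ≤ b k} ∧
      W = Matrix.of fun i j => if j = h then γ i else 0} := by
  ext W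
  simp only [Set.mem_setOf_eq]
  constructor
  · rintro ⟨⟨hpos, hcon, hrank⟩, hext⟩
    by_cases hz : ∃ i j, W i j ≠ 0
    · -- W nonzero
      obtain ⟨i0, h0, hW0⟩ := hz
      obtain ⟨t, ht⟩ := Classical.axiomOfChoice (cols_dep W hrank hW0)
      have hWpos0 : 0 < W i0 h0 := lt_of_le_of_ne (hpos i0 h0) (Ne.symm hW0)
      have hth0 : t h0 = 1 := by
        have h1 : t h0 * W i0 h0 = 1 * W i0 h0 := by
          rw [one_mul]; exact (ht h0 i0).symm
        exact mul_right_cancel₀ hW0 h1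
      have htpos : ∀ j, 0 ≤ t j := by
        intro j
        by_contra hneg
        push_neg at hneg
        nlinarith [ht j i0, hpos i0 j]
      by_cases hone : ∀ j, j ≠ h0 → t j = 0
      · -- exactly one column
        have hrepr : ∀ i j, j ≠ h0 → W i j = 0 := by
          intro i j hj; rw [ht j i, hone j hj, zero_mul]
        have hsumW : ∀ (V : Matrix (Fin n₁) (Fin n₂) ℝ), (∀ i j, j ≠ h0 → V i j = 0) →
            ∀ k, ∑ i, ∑ j, α k i * β j * V i j = β h0 * ∑ i, α k i * V i h0 := by
          intro V hV k
          rw [Finset.mul_sum]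
          refine Finset.sum_congr rfl fun i _ => ?_
          rw [Finset.sum_eq_single h0]
          · ring
          · intro j _ hj; rw [hV i j hj]; ring
          · simp
        refine ⟨h0, (fun i => W i h0), ⟨⟨fun i => hpos i h0, fun k => ?_⟩, ?_⟩, ?_⟩
        · show β h0 * ∑ i, α k i * W i h0 ≤ b k
          rw [← hsumW W hrepr k]; exact hcon k
        · rintro γ₁ ⟨hγ₁pos, hγ₁con⟩ γ₂ ⟨hγ₂pos, hγ₂con⟩ ⟨a, c, ha, hc, habc, hsum⟩
          set W₁ : Matrix (Fin n₁) (Fin n₂) ℝ :=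
            Matrix.of fun i j => if j = h0 then γ₁ i else 0 with hW₁
          set W₂ : Matrix (Fin n₁) (Fin n₂) ℝ :=
            Matrix.of fun i j => if j = h0 then γ₂ i else 0 with hW₂
          have hW₁mem : (∀ i j, 0 ≤ W₁ i j) ∧
              (∀ k, ∑ i, ∑ j, α k i * β j * W₁ i j ≤ b k) ∧ W₁.rank ≤ 1 := by
            refine ⟨fun i j => ?_, fun k => ?_, rank_col_le_one γ₁ h0⟩
            · show (0:ℝ) ≤ if j = h0 then γ₁ i else 0
              split
              · exact hγ₁pos i
              · exact le_refl 0
            · rw [hsumW W₁ (fun i j hj => by simp [hW₁, hj]) k]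
              have hcol1 : ∀ i, W₁ i h0 = γ₁ i := fun i => by simp [hW₁]
              simp only [hcol1]
              exact hγ₁con k
          have hW₂mem : (∀ i j, 0 ≤ W₂ i j) ∧
              (∀ k, ∑ i, ∑ j, α k i * β j * W₂ i j ≤ b k) ∧ W₂.rank ≤ 1 := by
            refine ⟨fun i j => ?_, fun k => ?_, rank_col_le_one γ₂ h0⟩
            · show (0:ℝ) ≤ if j = h0 then γ₂ i else 0
              split
              · exact hγ₂pos i
              · exact le_refl 0
            · rw [hsumW W₂ (fun i j hj => by simp [hW₂, hj]) k]
              have hcol2 : ∀ i, W₂ i h0 = γ₂ i := fun i => by simp [hW₂]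
              simp only [hcol2]
              exact hγ₂con k
          have hseg : W ∈ openSegment ℝ W₁ W₂ := by
            refine ⟨a, c, ha, hc, habc, ?_⟩
            ext i j
            simp only [Matrix.add_apply, Matrix.smul_apply, hW₁, hW₂, Matrix.of_apply,
              smul_eq_mul]
            by_cases hj : j = h0
            · rw [if_pos hj, if_pos hj, hj]
              exact congrFun hsum i
            · rw [if_neg hj, if_neg hj, hrepr i j hj]; ring
          have e₁ := hext hW₁mem hW₂mem hseg
          · funext i
            show γ₁ i = W i h0
            have := congrFun (congrFun e₁ i) h0
            simpa [hW₁] using this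
        · ext i j
          by_cases hj : j = h0
          · subst hj; simp
          · simp only [Matrix.of_apply, if_neg hj]
            exact hrepr i j hj
      · -- at least two nonzero columns: contradiction with extremeness
        exfalso
        push_neg at hone
        obtain ⟨j1, hj1ne, hj1t⟩ := hone
        have htj1 : 0 < t j1 := lt_of_le_of_ne (htpos j1) (Ne.symm hj1t)
        set ε := min (t h0 / β j1) (t j1 / β h0) with hε
        have hεpos : 0 < ε :=
          lt_min (div_pos (by rw [hth0]; norm_num) (hβ j1)) (div_pos htj1 (hβ h0))
        set d : Fin n₂ → ℝ := fun j => if j = h0 then β j1 else if j = j1 then -(β h0) else 0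
          with hdd
        have hd0 : ∑ j, β j * d j = 0 := by
          have h1 : ∀ j, β j * d j =
              (if j = h0 then β h0 * β j1 else 0) + (if j = j1 then -(β j1 * β h0) else 0) := by
            intro j
            simp only [hdd]
            by_cases hj : j = h0
            · rw [if_pos hj, if_pos hj, if_neg (hj ▸ (Ne.symm hj1ne) : ¬j = j1), hj]
              ring
            · by_cases hj' : j = j1
              · rw [if_neg hj, if_pos hj', if_neg hj, if_pos hj', hj']
                ring
              · rw [if_neg hj, if_neg hj', if_neg hj, if_neg hj']
                ring
          rw [Finset.sum_congr rfl fun j _ => h1 j, Finset.sum_add_distrib,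
            Finset.sum_ite_eq' Finset.univ h0, Finset.sum_ite_eq' Finset.univ j1]
          simp; ring
        have hεβ1 : ε * β j1 ≤ t h0 := by
          have := min_le_left (t h0 / β j1) (t j1 / β h0)
          calc ε * β j1 ≤ (t h0 / β j1) * β j1 :=
                mul_le_mul_of_nonneg_right this (hβ j1).le
            _ = t h0 := div_mul_cancel₀ _ (hβ j1).ne'
        have hεβ0 : ε * β h0 ≤ t j1 := by
          have := min_le_right (t h0 / β j1) (t j1 / β h0)
          calc ε * β h0 ≤ (t j1 / β h0) * β h0 :=
                mul_le_mul_of_nonneg_right this (hβ h0).le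
            _ = t j1 := div_mul_cancel₀ _ (hβ h0).ne'
        have hfac : ∀ σ : ℝ, σ = ε ∨ σ = -ε → ∀ j, 0 ≤ t j + σ * d j := by
          intro σ hσ j
          have habs : σ ≤ ε ∧ -ε ≤ σ := by rcases hσ with rfl | rfl <;> constructor <;> linarith
          by_cases hj : j = h0
          · have hdj : d j = β j1 := by simp [hdd, hj]
            rw [hdj, hj]
            nlinarith [hβ j1, habs.1, habs.2, hεβ1, htpos h0]
          · by_cases hj' : j = j1
            · have hdj : d j = -(β h0) := by simp [hdd, hj, hj', hj1ne]
              rw [hdj, hj']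
              nlinarith [hβ h0, habs.1, habs.2, hεβ0, htpos j1]
            · have hdj : d j = 0 := by simp [hdd, hj, hj']
              rw [hdj]
              simpa using htpos j
        have hkey : ∀ σ : ℝ, ∀ k, ∑ i, ∑ j, α k i * β j * (W i h0 * (t j + σ * d j)) =
            ∑ i, ∑ j, α k i * β j * W i j
              + σ * ((∑ i, α k i * W i h0) * ∑ j, β j * d j) := by
          intro σ k
          have hB : σ * ((∑ i, α k i * W i h0) * ∑ j, β j * d j) =
              ∑ i, ∑ j, σ * (α k i * W i h0 * (β j * d j)) := by
            rw [Finset.sum_mul_sum, Finset.mul_sum]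
            exact Finset.sum_congr rfl fun i _ => Finset.mul_sum _ _ _
          rw [hB, ← Finset.sum_add_distrib]
          refine Finset.sum_congr rfl fun i _ => ?_
          rw [← Finset.sum_add_distrib]
          refine Finset.sum_congr rfl fun j _ => ?_
          rw [ht j i]; ring
        set Wp : Matrix (Fin n₁) (Fin n₂) ℝ :=
          Matrix.of fun i j => W i h0 * (t j + ε * d j) with hWp
        set Wm : Matrix (Fin n₁) (Fin n₂) ℝ :=
          Matrix.of fun i j => W i h0 * (t j + (-ε) * d j) with hWm
        have hWpmem : (∀ i j, 0 ≤ Wp i j) ∧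
            (∀ k, ∑ i, ∑ j, α k i * β j * Wp i j ≤ b k) ∧ Wp.rank ≤ 1 := by
          refine ⟨fun i j => mul_nonneg (hpos i h0) (hfac ε (Or.inl rfl) j),
            fun k => ?_, rank_le_one_aux (fun i => W i h0) (fun j => t j + ε * d j)⟩
          show ∑ i, ∑ j, α k i * β j * (W i h0 * (t j + ε * d j)) ≤ b k
          rw [hkey ε k, hd0]
          simpa using hcon k
        have hWmmem : (∀ i j, 0 ≤ Wm i j) ∧
            (∀ k, ∑ i, ∑ j, α k i * β j * Wm i j ≤ b k) ∧ Wm.rank ≤ 1 := by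
          refine ⟨fun i j => mul_nonneg (hpos i h0) (hfac (-ε) (Or.inr rfl) j),
            fun k => ?_, rank_le_one_aux (fun i => W i h0) (fun j => t j + (-ε) * d j)⟩
          show ∑ i, ∑ j, α k i * β j * (W i h0 * (t j + (-ε) * d j)) ≤ b k
          rw [hkey (-ε) k, hd0]
          simpa using hcon k
        have hseg : W ∈ openSegment ℝ Wp Wm := by
          refine ⟨1/2, 1/2, by norm_num, by norm_num, by norm_num, ?_⟩
          ext i j
          simp only [Matrix.add_apply, Matrix.smul_apply, hWp, hWm, Matrix.of_apply,
            smul_eq_mul]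
          rw [ht j i]; ring
        have e₁ := hext hWpmem hWmmem hseg
        have hcontra := congrFun (congrFun e₁ i0) h0
        have hdh0 : d h0 = β j1 := by simp [hdd]
        simp only [hWp, Matrix.of_apply, hdh0, hth0] at hcontra
        nlinarith [mul_pos (mul_pos hWpos0 hεpos) (hβ j1)]
    · -- W = 0
      push_neg at hz
      refine ⟨⟨0, hn₂⟩, 0, ⟨⟨fun i => le_refl 0, fun k => ?_⟩, ?_⟩, ?_⟩
      · have := hcon k
        simpa [hz] using this
      · rintro γ₁ ⟨hγ₁, -⟩ γ₂ ⟨hγ₂, -⟩ ⟨a, c, ha, hc, habc, hsum⟩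
        have h1 : γ₁ = 0 := by
          funext i
          show γ₁ i = 0
          have hs := congrFun hsum i
          simp only [Pi.add_apply, Pi.smul_apply, smul_eq_mul, Pi.zero_apply] at hs
          nlinarith [hγ₁ i, hγ₂ i, mul_nonneg ha.le (hγ₁ i), mul_nonneg hc.le (hγ₂ i)]
        have h2 : γ₂ = 0 := by
          funext i
          show γ₂ i = 0
          have hs := congrFun hsum i
          simp only [Pi.add_apply, Pi.smul_apply, smul_eq_mul, Pi.zero_apply] at hs
          nlinarith [hγ₁ i, hγ₂ i, mul_nonneg ha.le (hγ₁ i), mul_nonneg hc.le (hγ₂ i)]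
        exact h1
      · ext i j
        simp [hz]
  · rintro ⟨h, γ, ⟨⟨hγpos, hγcon⟩, hγext⟩, rfl⟩
    constructor
    · refine ⟨fun i j => ?_, fun k => ?_, rank_col_le_one γ h⟩
      · dsimp only [Matrix.of_apply]
        split
        · exact hγpos i
        · exact le_refl 0
      · calc ∑ i, ∑ j, α k i * β j * (Matrix.of fun i j => if j = h then γ i else 0) i j
            = β h * ∑ i, α k i * γ i := sum_col_aux _ _ _ _
          _ ≤ b k := hγcon k
    · rintro W₁ ⟨hW₁pos, hW₁con, -⟩ W₂ ⟨hW₂pos, hW₂con, -⟩ ⟨a, c, ha, hc, habc, hsum⟩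
      have hoff : ∀ i j, j ≠ h → W₁ i j = 0 ∧ W₂ i j = 0 := by
        intro i j hj
        have hs := congrFun (congrFun hsum i) j
        simp only [Matrix.add_apply, Matrix.smul_apply, smul_eq_mul, Matrix.of_apply,
          if_neg hj] at hs
        constructor <;> nlinarith [hW₁pos i j, hW₂pos i j]
      have hcol : ∀ i, a * W₁ i h + c * W₂ i h = γ i := by
        intro i
        have := congrFun (congrFun hsum i) h
        simpa using this
      have hsum1 : ∀ (V : Matrix (Fin n₁) (Fin n₂) ℝ), (∀ i j, j ≠ h → V i j = 0) →
          ∀ k, ∑ i, ∑ j, α k i * β j * V i j = β h * ∑ i, α k i * V i h := by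
        intro V hV k
        rw [Finset.mul_sum]
        refine Finset.sum_congr rfl fun i _ => ?_
        rw [Finset.sum_eq_single h]
        · ring
        · intro j _ hj; rw [hV i j hj]; ring
        · simp
      have hγ₁mem : (fun i => W₁ i h) ∈ {g : Fin n₁ → ℝ |
          (∀ i, 0 ≤ g i) ∧ ∀ k, β h * ∑ i, α k i * g i ≤ b k} := by
        refine ⟨fun i => hW₁pos i h, fun k => ?_⟩
        show β h * ∑ i, α k i * W₁ i h ≤ b k
        rw [← hsum1 W₁ (fun i j hj => (hoff i j hj).1) k]
        exact hW₁con k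
      have hγ₂mem : (fun i => W₂ i h) ∈ {g : Fin n₁ → ℝ |
          (∀ i, 0 ≤ g i) ∧ ∀ k, β h * ∑ i, α k i * g i ≤ b k} := by
        refine ⟨fun i => hW₂pos i h, fun k => ?_⟩
        show β h * ∑ i, α k i * W₂ i h ≤ b k
        rw [← hsum1 W₂ (fun i j hj => (hoff i j hj).2) k]
        exact hW₂con k
      have hseg : γ ∈ openSegment ℝ (fun i => W₁ i h) (fun i => W₂ i h) :=
        ⟨a, c, ha, hc, habc, funext fun i => hcol i⟩
      have hγ₁ := hγext hγ₁mem hγ₂mem hseg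
      · ext i j
        by_cases hj : j = h
        · subst hj
          simpa using congrFun hγ₁ i
        · simp only [Matrix.of_apply, if_neg hj]
          exact (hoff i j hj).1
end

section
/- Let n₁, n₂, m be positive integers, let α¹,…,αᵐ ∈ ℝ^{n₁}, β ∈ ℝ^{n₂} with β_j > 0 for all j, and b₁,…,b_m ∈ ℝ, and assume { v ∈ ℝ^{n₁} : v ≥ 0 and Σ_i αᵏ_i v_i ≤ 0 for all k } = {0}. Define U = { W ∈ ℝ^{n₁×n₂} : W ≥ 0 entrywise; Σ_{i,j} αᵏ_i β_j W_{ij} ≤ b_k for each k; rank(W) ≤ 1 }. Then the convex hull of U is a polytope: there exists a finite set F ⊆ ℝ^{n₁×n₂} such that the convex hull of U equals the convex hull of F. -/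
open Finset Matrix

set_option linter.unusedSectionVars false

namespace Statement5Aux

private lemma dotC {d : ℕ} (a : Fin d → ℝ) : Continuous fun x : Fin d → ℝ => ∑ i, a i * x i :=
  continuous_finset_sum _ fun i _ => continuous_const.mul (continuous_apply i)

variable {d : ℕ} {ι : Type*} [Fintype ι]

private lemma S_convex (a : ι → Fin d → ℝ) (c : ι → ℝ) :
    Convex ℝ {x : Fin d → ℝ | ∀ t, ∑ i, a t i * x i ≤ c t} := by
  intro x hx y hy p q hp hq hpq
  intro t
  have : ∑ i, a t i * (p • x + q • y) i
      = p * ∑ i, a t i * x i + q * ∑ i, a t i * y i := by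
    rw [Finset.mul_sum, Finset.mul_sum, ← Finset.sum_add_distrib]
    refine Finset.sum_congr rfl fun i _ => ?_
    simp only [Pi.add_apply, Pi.smul_apply, smul_eq_mul]; ring
  rw [this]
  calc p * ∑ i, a t i * x i + q * ∑ i, a t i * y i
      ≤ p * c t + q * c t := by
        gcongr <;> [exact hx t; exact hy t]
    _ = c t := by rw [← add_mul, hpq, one_mul]

private lemma S_closed (a : ι → Fin d → ℝ) (c : ι → ℝ) :
    IsClosed {x : Fin d → ℝ | ∀ t, ∑ i, a t i * x i ≤ c t} := by
  have : {x : Fin d → ℝ | ∀ t, ∑ i, a t i * x i ≤ c t}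
      = ⋂ t, {x : Fin d → ℝ | ∑ i, a t i * x i ≤ c t} := by
    ext x; simp [Set.mem_iInter]
  rw [this]
  exact isClosed_iInter fun t => isClosed_le (dotC _) continuous_const

private lemma S_key {a : ι → Fin d → ℝ} {c : ι → ℝ} {x y : Fin d → ℝ}
    (hx : x ∈ Set.extremePoints ℝ {x : Fin d → ℝ | ∀ t, ∑ i, a t i * x i ≤ c t})
    (hy : ∀ t, ∑ i, a t i * y i ≤ c t)
    (hsub : ∀ t, ∑ i, a t i * x i = c t → ∑ i, a t i * y i = c t) : y = x := by
  classical
  obtain ⟨hxS, hext⟩ := mem_extremePoints.1 hx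
  have hxS' : ∀ t, ∑ i, a t i * x i ≤ c t := hxS
  set T : Finset ι := univ.filter (fun t => ∑ i, a t i * x i < c t) with hT
  set τ : ℝ := if h : T.Nonempty then
      min 1 (T.inf' h fun t =>
        (c t - ∑ i, a t i * x i) / (1 + |∑ i, a t i * x i - ∑ i, a t i * y i|))
    else 1 with hτdef
  have hτpos : 0 < τ := by
    rw [hτdef]; split_ifs with h
    · refine lt_min one_pos ((Finset.lt_inf'_iff h).2 fun t ht => ?_)
      have h1 : ∑ i, a t i * x i < c t := (mem_filter.1 ht).2
      have h2 : (0:ℝ) < 1 + |∑ i, a t i * x i - ∑ i, a t i * y i| := by positivity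
      exact div_pos (by linarith) h2
    · exact one_pos
  have hτle : ∀ t ∈ T,
      τ * (1 + |∑ i, a t i * x i - ∑ i, a t i * y i|) ≤ c t - ∑ i, a t i * x i := by
    intro t ht
    have hne : T.Nonempty := ⟨t, ht⟩
    have h2 : (0:ℝ) < 1 + |∑ i, a t i * x i - ∑ i, a t i * y i| := by positivity
    have hle : τ ≤ (c t - ∑ i, a t i * x i) /
        (1 + |∑ i, a t i * x i - ∑ i, a t i * y i|) := by
      rw [hτdef, dif_pos hne]
      exact (min_le_right _ _).trans (Finset.inf'_le _ ht)
    exact (le_div_iff₀ h2).1 hle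
  set x' : Fin d → ℝ := x + τ • (x - y) with hx'def
  have hx'S : x' ∈ {x : Fin d → ℝ | ∀ t, ∑ i, a t i * x i ≤ c t} := by
    intro t
    have hval : ∑ i, a t i * x' i
        = ∑ i, a t i * x i + τ * (∑ i, a t i * x i - ∑ i, a t i * y i) := by
      calc ∑ i, a t i * x' i
          = ∑ i, (a t i * x i + τ * (a t i * x i - a t i * y i)) :=
            Finset.sum_congr rfl fun i _ => by
              simp only [hx'def, Pi.add_apply, Pi.smul_apply, Pi.sub_apply, smul_eq_mul]; ring
        _ = ∑ i, a t i * x i + τ * (∑ i, a t i * x i - ∑ i, a t i * y i) := by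
            rw [Finset.sum_add_distrib, ← Finset.mul_sum, Finset.sum_sub_distrib]
    by_cases hactive : ∑ i, a t i * x i = c t
    · rw [hval, hactive, hsub t hactive]; simp
    · have htT : t ∈ T := mem_filter.2 ⟨mem_univ t, lt_of_le_of_ne (hxS' t) hactive⟩
      have h1 := hτle t htT
      have h2 : τ * (∑ i, a t i * x i - ∑ i, a t i * y i)
          ≤ τ * |∑ i, a t i * x i - ∑ i, a t i * y i| :=
        mul_le_mul_of_nonneg_left (le_abs_self _) hτpos.le
      have h3 := abs_nonneg (∑ i, a t i * x i - ∑ i, a t i * y i)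
      rw [hval]; nlinarith
  have hmem : x ∈ openSegment ℝ x' y := by
    have h1τ : (0:ℝ) < 1 + τ := by linarith
    refine ⟨(1+τ)⁻¹, τ * (1+τ)⁻¹, by positivity, by positivity, ?_, ?_⟩
    · field_simp
    · rw [hx'def]; funext i
      simp only [Pi.add_apply, Pi.smul_apply, Pi.sub_apply, smul_eq_mul]
      field_simp
      ring
  exact (hext x' hx'S y hy hmem).2

private lemma S_ext_finite (a : ι → Fin d → ℝ) (c : ι → ℝ) :
    (Set.extremePoints ℝ {x : Fin d → ℝ | ∀ t, ∑ i, a t i * x i ≤ c t}).Finite := by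
  classical
  have hinj : Set.InjOn (fun x : Fin d → ℝ => univ.filter (fun t => ∑ i, a t i * x i = c t))
      (Set.extremePoints ℝ {x : Fin d → ℝ | ∀ t, ∑ i, a t i * x i ≤ c t}) := by
    intro x hx y hy hxy
    have hact : ∀ t, (∑ i, a t i * x i = c t) → ∑ i, a t i * y i = c t := by
      intro t ht
      have hmem : t ∈ (fun x : Fin d → ℝ => univ.filter (fun t => ∑ i, a t i * x i = c t)) x :=
        mem_filter.2 ⟨mem_univ t, ht⟩
      rw [hxy] at hmem
      exact (mem_filter.1 hmem).2
    exact (S_key hx (extremePoints_subset hy) hact).symm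
  exact Set.Finite.of_finite_image (Set.toFinite _) hinj

private lemma S_repr {s : Set (Fin d → ℝ)} (hcomp : IsCompact s) (hconv : Convex ℝ s)
    (hfin : (Set.extremePoints ℝ s).Finite) :
    s = convexHull ℝ (Set.extremePoints ℝ s) := by
  conv_lhs => rw [← closure_convexHull_extremePoints hcomp hconv]
  exact (hfin.isCompact_convexHull ℝ).isClosed.closure_eq

private lemma S_compact (a : ι → Fin d → ℝ) (c : ι → ℝ)
    (hb : ∃ R, ∀ x ∈ {x : Fin d → ℝ | ∀ t, ∑ i, a t i * x i ≤ c t}, ‖x‖ ≤ R) :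
    IsCompact {x : Fin d → ℝ | ∀ t, ∑ i, a t i * x i ≤ c t} :=
  Metric.isCompact_of_isClosed_isBounded (S_closed a c)
    (isBounded_iff_forall_norm_le.2 hb)

private lemma rank_outer_le_one {n₁ n₂ : ℕ} (u : Fin n₁ → ℝ) (v : Fin n₂ → ℝ) :
    (Matrix.of fun i j => u i * v j : Matrix (Fin n₁) (Fin n₂) ℝ).rank ≤ 1 := by
  have hle : LinearMap.range (Matrix.of fun i j => u i * v j :
      Matrix (Fin n₁) (Fin n₂) ℝ).mulVecLin ≤ Submodule.span ℝ {u} := by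
    rintro _ ⟨x, rfl⟩
    rw [Matrix.mulVecLin_apply]
    have hmv : (Matrix.of fun i j => u i * v j : Matrix (Fin n₁) (Fin n₂) ℝ).mulVec x
        = (∑ j, v j * x j) • u := by
      funext i
      simp only [Matrix.mulVec, dotProduct, Matrix.of_apply, Pi.smul_apply, smul_eq_mul,
        Finset.sum_mul]
      exact Finset.sum_congr rfl fun j _ => by ring
    rw [hmv]
    exact Submodule.smul_mem _ _ (Submodule.mem_span_singleton_self u)
  refine le_trans (Submodule.finrank_mono hle) ?_
  by_cases hu : u = 0
  · subst hu; rw [Submodule.span_zero_singleton]; simp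
  · rw [finrank_span_singleton hu]

private lemma rank_one_decomp {n₁ n₂ : ℕ} {W : Matrix (Fin n₁) (Fin n₂) ℝ}
    (hr : W.rank ≤ 1) (i₀ : Fin n₁) (j₀ : Fin n₂) (h0 : W i₀ j₀ ≠ 0) :
    ∃ v : Fin n₂ → ℝ, ∀ i j, W i j = W i j₀ * v j := by
  classical
  have hcol : ∀ j, Wᵀ j ∈ LinearMap.range W.mulVecLin := fun j =>
    ⟨Pi.single j 1, by rw [Matrix.mulVecLin_apply, Matrix.mulVec_single_one]; rfl⟩
  have hx0 : Wᵀ j₀ ≠ 0 := fun h => h0 (by simpa using congrFun h i₀)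
  have hspan : Submodule.span ℝ {Wᵀ j₀} ≤ LinearMap.range W.mulVecLin := by
    rw [Submodule.span_le, Set.singleton_subset_iff]; exact hcol j₀
  have hfr : Module.finrank ℝ (LinearMap.range W.mulVecLin) ≤ 1 := hr
  have heq : Submodule.span ℝ {Wᵀ j₀} = LinearMap.range W.mulVecLin := by
    refine Submodule.eq_of_le_of_finrank_le hspan ?_
    rw [finrank_span_singleton hx0]; exact hfr
  have hex : ∀ j, ∃ cj : ℝ, ∀ i, W i j = W i j₀ * cj := by
    intro j
    have : Wᵀ j ∈ Submodule.span ℝ {Wᵀ j₀} := heq ▸ hcol j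
    obtain ⟨cj, hcj⟩ := Submodule.mem_span_singleton.1 this
    exact ⟨cj, fun i => by
      have := congrFun hcj i
      simp only [Pi.smul_apply, smul_eq_mul, Matrix.transpose_apply] at this
      rw [← this]; ring⟩
  choose v hv using hex
  exact ⟨v, fun i j => hv j i⟩

private lemma P_bounded {n₁ m : ℕ} (α : Fin m → Fin n₁ → ℝ) (b : Fin m → ℝ)
    (hrec : {v : Fin n₁ → ℝ | (∀ i, 0 ≤ v i) ∧ ∀ k, ∑ i, α k i * v i ≤ 0} = {0}) :
    ∃ R, ∀ x ∈ {u : Fin n₁ → ℝ | (∀ i, 0 ≤ u i) ∧ ∀ k, ∑ i, α k i * u i ≤ b k}, ‖x‖ ≤ R := by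
  classical
  set Δ : Set (Fin n₁ → ℝ) := {y | (∀ i, 0 ≤ y i) ∧ ∑ i, y i = 1} with hΔ
  have hΔclosed : IsClosed Δ := by
    have hΔeq : Δ = (⋂ i, {y : Fin n₁ → ℝ | 0 ≤ y i}) ∩ {y | ∑ i, y i = 1} := by
      ext y; simp [hΔ, Set.mem_iInter]
    rw [hΔeq]
    exact IsClosed.inter
      (isClosed_iInter fun i => isClosed_le continuous_const (continuous_apply i))
      (isClosed_eq (continuous_finset_sum _ fun i _ => continuous_apply i) continuous_const)
  have hΔbdd : ∀ y ∈ Δ, ‖y‖ ≤ 1 := by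
    intro y hy
    refine (pi_norm_le_iff_of_nonneg zero_le_one).2 fun i => ?_
    rw [Real.norm_eq_abs, abs_of_nonneg (hy.1 i)]
    calc y i ≤ ∑ i', y i' := Finset.single_le_sum (fun i' _ => hy.1 i') (mem_univ i)
      _ = 1 := hy.2
  have hΔcomp : IsCompact Δ :=
    Metric.isCompact_of_isClosed_isBounded hΔclosed (isBounded_iff_forall_norm_le.2 ⟨1, hΔbdd⟩)
  rcases Nat.eq_zero_or_pos n₁ with h0 | hn₁
  · subst h0
    exact ⟨0, fun x _ => by rw [Subsingleton.elim x 0, norm_zero]⟩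
  have hΔne : Δ.Nonempty := by
    refine ⟨fun _ => (n₁ : ℝ)⁻¹, fun i => by positivity, ?_⟩
    rw [Finset.sum_const, card_univ, Fintype.card_fin, nsmul_eq_mul]
    field_simp
  set g : (Fin n₁ → ℝ) → ℝ := fun y => ∑ k, max (∑ i, α k i * y i) 0 with hg
  have hgcont : Continuous g :=
    continuous_finset_sum _ fun k _ => (dotC _).max continuous_const
  obtain ⟨y₀, hy₀, hmin⟩ := hΔcomp.exists_isMinOn hΔne hgcont.continuousOn
  have hy₀ne : ¬((∀ i, 0 ≤ y₀ i) ∧ ∀ k, ∑ i, α k i * y₀ i ≤ 0) := by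
    intro h
    have h0 : y₀ ∈ ({0} : Set (Fin n₁ → ℝ)) := hrec ▸ h
    have h0' : y₀ = 0 := h0
    rw [h0'] at hy₀
    simpa using hy₀.2
  have hε : 0 < g y₀ := by
    push_neg at hy₀ne
    obtain ⟨k, hk⟩ := hy₀ne hy₀.1
    show (0:ℝ) < ∑ k, max (∑ i, α k i * y₀ i) 0
    calc (0:ℝ) < max (∑ i, α k i * y₀ i) 0 := lt_max_iff.2 (Or.inl hk)
      _ ≤ ∑ k, max (∑ i, α k i * y₀ i) 0 :=
        Finset.single_le_sum (f := fun k => max (∑ i, α k i * y₀ i) 0)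
          (fun k' _ => le_max_right _ _) (mem_univ k)
  set C : ℝ := ∑ k, max (b k) 0 with hCdef
  have hC : 0 ≤ C := Finset.sum_nonneg fun k _ => le_max_right _ _
  refine ⟨C / g y₀, ?_⟩
  intro x hx
  obtain ⟨hx1, hx2⟩ := hx
  have hSle : ∑ i, x i ≤ C / g y₀ := by
    rcases lt_or_ge 0 (∑ i, x i) with hS | hS
    · set S : ℝ := ∑ i, x i with hSdef
      have hyΔ : (S⁻¹ • x) ∈ Δ := by
        refine ⟨fun i => mul_nonneg (inv_nonneg.2 hS.le) (hx1 i), ?_⟩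
        have : ∑ i, (S⁻¹ • x) i = S⁻¹ * ∑ i, x i := by
          rw [Finset.mul_sum]
          exact Finset.sum_congr rfl fun i _ => by simp
        rw [this, ← hSdef, inv_mul_cancel₀ hS.ne']
      have h1 : g y₀ ≤ g (S⁻¹ • x) := isMinOn_iff.1 hmin _ hyΔ
      have h2 : g (S⁻¹ • x) = S⁻¹ * g x := by
        rw [hg]
        simp only []
        rw [Finset.mul_sum]
        refine Finset.sum_congr rfl fun k _ => ?_
        have hin : ∑ i, α k i * (S⁻¹ • x) i = S⁻¹ * ∑ i, α k i * x i := by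
          rw [Finset.mul_sum]
          refine Finset.sum_congr rfl fun i _ => by simp; ring
        rw [hin, mul_max_of_nonneg _ _ (inv_nonneg.2 hS.le), mul_zero]
      have h3 : g x ≤ C := Finset.sum_le_sum fun k _ => max_le_max (hx2 k) le_rfl
      have h4 : g y₀ ≤ S⁻¹ * C :=
        h1.trans (h2 ▸ mul_le_mul_of_nonneg_left h3 (inv_nonneg.2 hS.le))
      rw [le_div_iff₀ hε]
      calc S * g y₀ ≤ S * (S⁻¹ * C) := mul_le_mul_of_nonneg_left h4 hS.le
        _ = C := by field_simp
    · exact hS.trans (div_nonneg hC hε.le)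
  refine (pi_norm_le_iff_of_nonneg (div_nonneg hC hε.le)).2 fun i => ?_
  rw [Real.norm_eq_abs, abs_of_nonneg (hx1 i)]
  exact le_trans (Finset.single_le_sum (fun i' _ => hx1 i') (mem_univ i)) hSle

private lemma Q_bounded {n₂ : ℕ} (β : Fin n₂ → ℝ) (hβ : ∀ j, 0 < β j) :
    ∃ R, ∀ v ∈ {v : Fin n₂ → ℝ | (∀ j, 0 ≤ v j) ∧ ∑ j, β j * v j = 1}, ‖v‖ ≤ R := by
  refine ⟨∑ j, (β j)⁻¹, ?_⟩
  intro v hv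
  have hR : 0 ≤ ∑ j, (β j)⁻¹ := Finset.sum_nonneg fun j _ => inv_nonneg.2 (hβ j).le
  refine (pi_norm_le_iff_of_nonneg hR).2 fun j => ?_
  rw [Real.norm_eq_abs, abs_of_nonneg (hv.1 j)]
  have h1 : β j * v j ≤ 1 := by
    rw [← hv.2]
    exact Finset.single_le_sum (fun j' _ => mul_nonneg (hβ j').le (hv.1 j')) (mem_univ j)
  have h2 : v j ≤ (β j)⁻¹ :=
    (mul_le_mul_iff_right₀ (hβ j)).1 (by rw [mul_inv_cancel₀ (hβ j).ne']; exact h1)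
  exact h2.trans (Finset.single_le_sum (fun j' _ => inv_nonneg.2 (hβ j').le) (mem_univ j))

private lemma sum_neg_single {d : ℕ} (x : Fin d → ℝ) (i : Fin d) :
    ∑ i'', (if i'' = i then (-1:ℝ) else 0) * x i'' = -x i := by
  rw [Finset.sum_eq_single i (fun b _ hb => by simp [hb]) (fun h => absurd (mem_univ i) h)]
  simp

private lemma P_eq {n₁ m : ℕ} (α : Fin m → Fin n₁ → ℝ) (b : Fin m → ℝ) :
    {u : Fin n₁ → ℝ | (∀ i, 0 ≤ u i) ∧ ∀ k, ∑ i, α k i * u i ≤ b k}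
      = {x : Fin n₁ → ℝ | ∀ t : Fin m ⊕ Fin n₁,
          ∑ i, Sum.elim α (fun i' i'' => if i'' = i' then (-1:ℝ) else 0) t i * x i
            ≤ Sum.elim b (fun _ => (0:ℝ)) t} := by
  ext x
  simp only [Set.mem_setOf_eq]
  constructor
  · rintro ⟨h1, h2⟩ t
    rcases t with k | i
    · simpa using h2 k
    · simp only [Sum.elim_inr]
      rw [sum_neg_single]
      exact neg_nonpos.2 (h1 i)
  · intro h
    refine ⟨fun i => ?_, fun k => by simpa using h (Sum.inl k)⟩
    have := h (Sum.inr i)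
    simp only [Sum.elim_inr] at this
    rw [sum_neg_single] at this
    linarith
private lemma Q_eq {n₂ : ℕ} (β : Fin n₂ → ℝ) :
    {v : Fin n₂ → ℝ | (∀ j, 0 ≤ v j) ∧ ∑ j, β j * v j = 1}
      = {x : Fin n₂ → ℝ | ∀ t : Fin n₂ ⊕ Bool,
          ∑ j, Sum.elim (fun j' j'' => if j'' = j' then (-1:ℝ) else 0)
            (fun s => if s then β else fun j => -β j) t j * x j
            ≤ Sum.elim (fun _ => (0:ℝ)) (fun s => if s then 1 else -1) t} := by
  ext x
  simp only [Set.mem_setOf_eq]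
  have hnegsum : ∑ j, -β j * x j = -∑ j, β j * x j := by
    rw [← Finset.sum_neg_distrib]
    exact Finset.sum_congr rfl fun j _ => by ring
  constructor
  · rintro ⟨h1, h2⟩ t
    rcases t with j | s
    · simp only [Sum.elim_inl]
      rw [sum_neg_single]
      exact neg_nonpos.2 (h1 j)
    · cases s
      · simp only [Sum.elim_inr, Bool.false_eq_true, if_false]
        rw [hnegsum, h2]
      · simp only [Sum.elim_inr, if_true]
        rw [h2]
  · intro h
    refine ⟨fun j => ?_, ?_⟩
    · have := h (Sum.inl j)
      simp only [Sum.elim_inl] at this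
      rw [sum_neg_single] at this
      linarith
    · have ht := h (Sum.inr true)
      have hf := h (Sum.inr false)
      simp only [Sum.elim_inr, if_true] at ht
      simp only [Sum.elim_inr, Bool.false_eq_true, if_false] at hf
      rw [hnegsum] at hf
      have h1S : (1:ℝ) ≤ ∑ j, β j * x j := by
        rw [← neg_le_neg_iff]; exact hf
      exact le_antisymm ht h1S

private lemma poly_repr {d : ℕ} {ι : Type*} [Fintype ι] (a : ι → Fin d → ℝ) (c : ι → ℝ)
    (hb : ∃ R, ∀ x ∈ {x : Fin d → ℝ | ∀ t, ∑ i, a t i * x i ≤ c t}, ‖x‖ ≤ R) :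
    ∃ s : Finset (Fin d → ℝ),
      (↑s ⊆ {x : Fin d → ℝ | ∀ t, ∑ i, a t i * x i ≤ c t}) ∧
      {x : Fin d → ℝ | ∀ t, ∑ i, a t i * x i ≤ c t} = convexHull ℝ (↑s : Set (Fin d → ℝ)) := by
  have hfin := S_ext_finite a c
  refine ⟨hfin.toFinset, ?_, ?_⟩
  · rw [Set.Finite.coe_toFinset]; exact extremePoints_subset
  · rw [Set.Finite.coe_toFinset]
    exact S_repr (S_compact a c hb) (S_convex a c) hfin

private lemma P_repr {n₁ m : ℕ} (α : Fin m → Fin n₁ → ℝ) (b : Fin m → ℝ)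
    (hrec : {v : Fin n₁ → ℝ | (∀ i, 0 ≤ v i) ∧ ∀ k, ∑ i, α k i * v i ≤ 0} = {0}) :
    ∃ s : Finset (Fin n₁ → ℝ),
      (↑s ⊆ {u : Fin n₁ → ℝ | (∀ i, 0 ≤ u i) ∧ ∀ k, ∑ i, α k i * u i ≤ b k}) ∧
      {u : Fin n₁ → ℝ | (∀ i, 0 ≤ u i) ∧ ∀ k, ∑ i, α k i * u i ≤ b k}
        = convexHull ℝ (↑s : Set (Fin n₁ → ℝ)) := by
  rw [P_eq α b]
  exact poly_repr _ _ (by rw [← P_eq α b]; exact P_bounded α b hrec)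

private lemma Q_repr {n₂ : ℕ} (β : Fin n₂ → ℝ) (hβ : ∀ j, 0 < β j) :
    ∃ s : Finset (Fin n₂ → ℝ),
      (↑s ⊆ {v : Fin n₂ → ℝ | (∀ j, 0 ≤ v j) ∧ ∑ j, β j * v j = 1}) ∧
      {v : Fin n₂ → ℝ | (∀ j, 0 ≤ v j) ∧ ∑ j, β j * v j = 1}
        = convexHull ℝ (↑s : Set (Fin n₂ → ℝ)) := by
  rw [Q_eq β]
  exact poly_repr _ _ (by rw [← Q_eq β]; exact Q_bounded β hβ)

end Statement5Aux


open Statement5Aux in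
/-- Under the recession condition, the convex hull of the rank-1 set with linear
side constraints given by rank-1 constraint matrices αᵏβᵀ is a polytope. -/
theorem statement5 (n₁ n₂ m : ℕ) (hn₁ : 0 < n₁) (hn₂ : 0 < n₂) (hm : 0 < m)
    (α : Fin m → Fin n₁ → ℝ) (β : Fin n₂ → ℝ) (hβ : ∀ j, 0 < β j) (b : Fin m → ℝ)
    (hrec : {v : Fin n₁ → ℝ | (∀ i, 0 ≤ v i) ∧ ∀ k, ∑ i, α k i * v i ≤ 0} = {0}) :
    ∃ F : Finset (Matrix (Fin n₁) (Fin n₂) ℝ),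
      convexHull ℝ
        {W : Matrix (Fin n₁) (Fin n₂) ℝ |
          (∀ i j, 0 ≤ W i j) ∧ (∀ k, ∑ i, ∑ j, α k i * β j * W i j ≤ b k) ∧ W.rank ≤ 1} =
      convexHull ℝ (F : Set (Matrix (Fin n₁) (Fin n₂) ℝ)) := by
  classical
  obtain ⟨sP, hsPsub, hsPrep⟩ := P_repr α b hrec
  obtain ⟨sQ, hsQsub, hsQrep⟩ := Q_repr β hβ
  have hUdec : {W : Matrix (Fin n₁) (Fin n₂) ℝ |
      (∀ i j, 0 ≤ W i j) ∧ (∀ k, ∑ i, ∑ j, α k i * β j * W i j ≤ b k) ∧ W.rank ≤ 1}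
    = {W : Matrix (Fin n₁) (Fin n₂) ℝ |
        ∃ u ∈ {u : Fin n₁ → ℝ | (∀ i, 0 ≤ u i) ∧ ∀ k, ∑ i, α k i * u i ≤ b k},
        ∃ v ∈ {v : Fin n₂ → ℝ | (∀ j, 0 ≤ v j) ∧ ∑ j, β j * v j = 1},
        W = Matrix.of fun i j => u i * v j} := by
    ext W
    simp only [Set.mem_setOf_eq]
    constructor
    · rintro ⟨hW1, hW2, hW3⟩
      by_cases hW0 : W = 0
      · subst hW0
        refine ⟨0, ⟨fun i => le_refl 0, fun k => by simpa using hW2 k⟩,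
          Pi.single ⟨0, hn₂⟩ (β ⟨0, hn₂⟩)⁻¹, ⟨?_, ?_⟩, ?_⟩
        · intro j
          rw [Pi.single_apply]
          split_ifs
          · exact inv_nonneg.2 (hβ _).le
          · exact le_refl 0
        · rw [Finset.sum_eq_single (⟨0, hn₂⟩ : Fin n₂)
            (fun j _ hj => by rw [Pi.single_apply, if_neg hj, mul_zero])
            (fun h => absurd (mem_univ _) h)]
          rw [Pi.single_apply, if_pos rfl, mul_inv_cancel₀ (hβ _).ne']
        · ext i j
          simp
      · have hWne : ∃ i j, W i j ≠ 0 := by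
          by_contra h; push_neg at h; exact hW0 (by ext i j; simpa using h i j)
        obtain ⟨i₀, j₀, hW00⟩ := hWne
        obtain ⟨v, hv⟩ := rank_one_decomp hW3 i₀ j₀ hW00
        have hpos : 0 < W i₀ j₀ := lt_of_le_of_ne (hW1 i₀ j₀) (Ne.symm hW00)
        have hv0 : ∀ j, 0 ≤ v j := by
          intro j
          by_contra hneg
          push_neg at hneg
          have h1 := hW1 i₀ j
          rw [hv i₀ j] at h1
          nlinarith
        have hvj₀ : v j₀ = 1 :=
          mul_left_cancel₀ (ne_of_gt hpos) ((hv i₀ j₀).symm.trans (mul_one _).symm)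
        set S : ℝ := ∑ j, β j * v j with hSdef
        have hS : 0 < S := by
          have h1 : β j₀ * v j₀ ≤ S :=
            Finset.single_le_sum (fun j _ => mul_nonneg (hβ j).le (hv0 j)) (mem_univ j₀)
          rw [hvj₀, mul_one] at h1
          exact lt_of_lt_of_le (hβ j₀) h1
        refine ⟨S • fun i => W i j₀, ⟨?_, ?_⟩, S⁻¹ • v, ⟨?_, ?_⟩, ?_⟩
        · intro i
          simp only [Pi.smul_apply, smul_eq_mul]
          exact mul_nonneg hS.le (hW1 i j₀)
        · intro k
          have hcalc : ∑ i, α k i * (S • fun i' => W i' j₀) i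
              = ∑ i, ∑ j, α k i * β j * W i j := by
            calc ∑ i, α k i * (S • fun i' => W i' j₀) i
                = ∑ i, (α k i * W i j₀) * S := Finset.sum_congr rfl fun i _ => by
                    simp only [Pi.smul_apply, smul_eq_mul]; ring
              _ = (∑ i, α k i * W i j₀) * S := (Finset.sum_mul _ _ _).symm
              _ = (∑ i, α k i * W i j₀) * (∑ j, β j * v j) := by rw [hSdef]
              _ = ∑ i, ∑ j, (α k i * W i j₀) * (β j * v j) := Finset.sum_mul_sum _ _ _ _
              _ = ∑ i, ∑ j, α k i * β j * W i j := Finset.sum_congr rfl fun i _ =>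
                    Finset.sum_congr rfl fun j _ => by rw [hv i j]; ring
          rw [hcalc]
          exact hW2 k
        · intro j
          simp only [Pi.smul_apply, smul_eq_mul]
          exact mul_nonneg (inv_nonneg.2 hS.le) (hv0 j)
        · calc ∑ j, β j * (S⁻¹ • v) j = S⁻¹ * ∑ j, β j * v j := by
                rw [Finset.mul_sum]
                exact Finset.sum_congr rfl fun j _ => by
                  simp only [Pi.smul_apply, smul_eq_mul]; ring
            _ = 1 := by rw [← hSdef, inv_mul_cancel₀ hS.ne']
        · ext i j
          simp only [Matrix.of_apply, Pi.smul_apply, smul_eq_mul]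
          rw [hv i j]
          field_simp
    · rintro ⟨u, ⟨hu1, hu2⟩, v, ⟨hv1, hv2⟩, rfl⟩
      refine ⟨fun i j => ?_, fun k => ?_, rank_outer_le_one u v⟩
      · simp only [Matrix.of_apply]
        exact mul_nonneg (hu1 i) (hv1 j)
      · have hfact : ∑ i, ∑ j, α k i * β j * (Matrix.of fun i j => u i * v j) i j
            = (∑ i, α k i * u i) * (∑ j, β j * v j) := by
          rw [Finset.sum_mul_sum]
          exact Finset.sum_congr rfl fun i _ => Finset.sum_congr rfl fun j _ => by
            simp only [Matrix.of_apply]; ring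
        rw [hfact, hv2, mul_one]
        exact hu2 k
  refine ⟨(sP ×ˢ sQ).image (fun pq => Matrix.of fun i j => pq.1 i * pq.2 j), ?_⟩
  rw [hUdec]
  apply Set.Subset.antisymm
  · refine convexHull_min ?_ (convex_convexHull ℝ _)
    rintro W ⟨u, hu, v, hv, rfl⟩
    obtain ⟨wP, hwP0, hwP1, hwPsum⟩ := Finset.mem_convexHull'.1 (hsPrep ▸ hu)
    obtain ⟨wQ, hwQ0, hwQ1, hwQsum⟩ := Finset.mem_convexHull'.1 (hsQrep ▸ hv)
    have hsum1 : ∑ pq ∈ sP ×ˢ sQ, wP pq.1 * wQ pq.2 = 1 := by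
      rw [Finset.sum_product, ← Finset.sum_mul_sum, hwP1, hwQ1, mul_one]
    have hmem : (sP ×ˢ sQ).centerMass (fun pq => wP pq.1 * wQ pq.2)
        (fun pq => Matrix.of fun i j => pq.1 i * pq.2 j)
        ∈ convexHull ℝ (↑((sP ×ˢ sQ).image
            (fun pq => Matrix.of fun i j => pq.1 i * pq.2 j)) :
          Set (Matrix (Fin n₁) (Fin n₂) ℝ)) := by
      refine Finset.centerMass_mem_convexHull _ ?_ ?_ ?_
      · intro pq hpq
        exact mul_nonneg (hwP0 _ (Finset.mem_product.1 hpq).1)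
          (hwQ0 _ (Finset.mem_product.1 hpq).2)
      · rw [hsum1]; exact one_pos
      · intro pq hpq
        exact Finset.mem_coe.2 (Finset.mem_image_of_mem _ hpq)
    rw [Finset.centerMass_eq_of_sum_1 _ _ hsum1] at hmem
    have hui : ∀ i, u i = ∑ p ∈ sP, wP p * p i := by
      intro i
      conv_lhs => rw [← hwPsum]
      rw [Finset.sum_apply]
      exact Finset.sum_congr rfl fun p _ => by simp
    have hvj : ∀ j, v j = ∑ q ∈ sQ, wQ q * q j := by
      intro j
      conv_lhs => rw [← hwQsum]
      rw [Finset.sum_apply]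
      exact Finset.sum_congr rfl fun q _ => by simp
    have heq : (∑ pq ∈ sP ×ˢ sQ, (wP pq.1 * wQ pq.2) •
          (Matrix.of fun i j => pq.1 i * pq.2 j : Matrix (Fin n₁) (Fin n₂) ℝ))
        = Matrix.of fun i j => u i * v j := by
      ext i j
      rw [Matrix.sum_apply]
      calc ∑ pq ∈ sP ×ˢ sQ, ((wP pq.1 * wQ pq.2) •
              (Matrix.of fun i j => pq.1 i * pq.2 j : Matrix (Fin n₁) (Fin n₂) ℝ)) i j
          = ∑ pq ∈ sP ×ˢ sQ, (wP pq.1 * pq.1 i) * (wQ pq.2 * pq.2 j) :=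
            Finset.sum_congr rfl fun pq _ => by
              simp only [Matrix.smul_apply, Matrix.of_apply, smul_eq_mul]; ring
        _ = (∑ p ∈ sP, wP p * p i) * (∑ q ∈ sQ, wQ q * q j) := by
            rw [Finset.sum_product]
            exact (Finset.sum_mul_sum sP sQ (fun p => wP p * p i) (fun q => wQ q * q j)).symm
        _ = u i * v j := by rw [← hui, ← hvj]
    rw [heq] at hmem
    exact hmem
  · refine convexHull_mono ?_
    intro W hW
    obtain ⟨pq, hpq, rfl⟩ := Finset.mem_image.1 (Finset.mem_coe.1 hW)
    exact ⟨pq.1, hsPsub (Finset.mem_coe.2 (Finset.mem_product.1 hpq).1),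
      pq.2, hsQsub (Finset.mem_coe.2 (Finset.mem_product.1 hpq).2), rfl⟩
end

section
/- Let n₁, n₂, m be positive integers, let α¹,…,αᵐ ∈ ℝ^{n₁}, β ∈ ℝ^{n₂} with β_j > 0 for all j, and b₁,…,b_m ∈ ℝ, and assume { v ∈ ℝ^{n₁} : v ≥ 0 and Σ_i αᵏ_i v_i ≤ 0 for all k } = {0}. Define U = { W ∈ ℝ^{n₁×n₂} : W ≥ 0 entrywise; Σ_{i,j} αᵏ_i β_j W_{ij} ≤ b_k for each k; rank(W) ≤ 1 }. Then the convex hull of U equals { W ∈ ℝ^{n₁×n₂} : W ≥ 0 entrywise, and there exists t ∈ ℝ^{n₂} with Σ_{j=1}^{n₂} t_j = 1, t_j ≥ 0 for all j, and Σ_{i=1}^{n₁} αᵏ_i β_j W_{ij} ≤ b_k t_j for every k = 1,…,m and every j = 1,…,n₂ }. -/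
open Finset

/-- A matrix of rank at most one factors as an outer product. -/
lemma factor_of_rank_le_one {n₁ n₂ : ℕ} (W : Matrix (Fin n₁) (Fin n₂) ℝ)
    (h : W.rank ≤ 1) : ∃ u : Fin n₁ → ℝ, ∃ v : Fin n₂ → ℝ, ∀ i j, W i j = u i * v j := by
  rw [Matrix.rank] at h
  obtain ⟨g, hg⟩ := finrank_le_one_iff.mp h
  choose c hc using fun j : Fin n₂ =>
    hg ⟨W.mulVec (Pi.single j 1), LinearMap.mem_range_self _ _⟩
  refine ⟨fun i => (g : (Fin n₁ → ℝ)) i, c, fun i j => ?_⟩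
  have h1 := congrFun (congrArg Subtype.val (hc j)) i
  simp only [Submodule.coe_smul, Pi.smul_apply, smul_eq_mul] at h1
  have h2 : W.mulVec (Pi.single j 1) i = W i j := by
    simp [Matrix.mulVec, dotProduct, Pi.single_apply, mul_ite]
  rw [h2] at h1
  rw [← h1]; ring

/-- An outer product has rank at most one. -/
lemma rank_le_one_of_factor {n₁ n₂ : ℕ} (W : Matrix (Fin n₁) (Fin n₂) ℝ)
    (u : Fin n₁ → ℝ) (v : Fin n₂ → ℝ) (h : ∀ i j, W i j = u i * v j) : W.rank ≤ 1 := by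
  have hW : W = Matrix.replicateCol (Fin 1) u * Matrix.replicateRow (Fin 1) v := by
    ext i j
    simp [Matrix.mul_apply, Matrix.replicateCol, Matrix.replicateRow, h i j]
  rw [hW]
  calc (Matrix.replicateCol (Fin 1) u * Matrix.replicateRow (Fin 1) v).rank
      ≤ (Matrix.replicateCol (Fin 1) u).rank := Matrix.rank_mul_le_left _ _
    _ ≤ Fintype.card (Fin 1) := Matrix.rank_le_card_width _
    _ = 1 := by simp

/-- The convex hull of the rank-1 set with linear side constraints given by rank-1
constraint matrices αᵏβᵀ equals the projection of the compact extended formulation. -/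
theorem statement6 (n₁ n₂ m : ℕ) (hn₁ : 0 < n₁) (hn₂ : 0 < n₂) (hm : 0 < m)
    (α : Fin m → Fin n₁ → ℝ) (β : Fin n₂ → ℝ) (hβ : ∀ j, 0 < β j) (b : Fin m → ℝ)
    (hrec : {v : Fin n₁ → ℝ | (∀ i, 0 ≤ v i) ∧ ∀ k, ∑ i, α k i * v i ≤ 0} = {0}) :
    convexHull ℝ
      {W : Matrix (Fin n₁) (Fin n₂) ℝ |
        (∀ i j, 0 ≤ W i j) ∧ (∀ k, ∑ i, ∑ j, α k i * β j * W i j ≤ b k) ∧ W.rank ≤ 1} =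
    {W : Matrix (Fin n₁) (Fin n₂) ℝ |
      (∀ i j, 0 ≤ W i j) ∧
      ∃ t : Fin n₂ → ℝ, (∑ j, t j) = 1 ∧ (∀ j, 0 ≤ t j) ∧
        ∀ k j, ∑ i, α k i * β j * W i j ≤ b k * t j} := by
  classical
  set R : Set (Matrix (Fin n₁) (Fin n₂) ℝ) :=
    {W : Matrix (Fin n₁) (Fin n₂) ℝ |
      (∀ i j, 0 ≤ W i j) ∧
      ∃ t : Fin n₂ → ℝ, (∑ j, t j) = 1 ∧ (∀ j, 0 ≤ t j) ∧
        ∀ k j, ∑ i, α k i * β j * W i j ≤ b k * t j} with hR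
  set U : Set (Matrix (Fin n₁) (Fin n₂) ℝ) :=
    {W : Matrix (Fin n₁) (Fin n₂) ℝ |
      (∀ i j, 0 ≤ W i j) ∧ (∀ k, ∑ i, ∑ j, α k i * β j * W i j ≤ b k) ∧ W.rank ≤ 1} with hU
  apply Set.Subset.antisymm
  · -- convexHull U ⊆ R
    apply convexHull_min
    · -- U ⊆ R
      rintro W ⟨hWnn, hWc, hWr⟩
      refine ⟨hWnn, ?_⟩
      by_cases hW0 : W = 0
      · refine ⟨fun _ => (n₂ : ℝ)⁻¹, ?_, fun _ => by positivity, fun k j => ?_⟩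
        · simp [Finset.card_univ]
          field_simp
        · have hb : 0 ≤ b k := by
            have := hWc k
            simp [hW0] at this
            exact this
          have : ∑ i, α k i * β j * W i j = 0 := by simp [hW0]
          rw [this]
          positivity
      · obtain ⟨u, v, huv⟩ := factor_of_rank_le_one W hWr
        -- find nonzero entry
        have hex : ∃ i j, W i j ≠ 0 := by
          by_contra h
          push_neg at h
          exact hW0 (by ext i j; exact h i j)
        obtain ⟨i₀, j₀, hij⟩ := hex
        have hpos : 0 < W i₀ j₀ := lt_of_le_of_ne (hWnn i₀ j₀) (Ne.symm hij)
        set u' : Fin n₁ → ℝ := fun i => W i j₀ with hu'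
        set v' : Fin n₂ → ℝ := fun j => W i₀ j / W i₀ j₀ with hv'
        have hv'nn : ∀ j, 0 ≤ v' j := fun j => div_nonneg (hWnn i₀ j) hpos.le
        have hfac : ∀ i j, W i j = u' i * v' j := by
          intro i j
          have h1 : W i j₀ = u i * v j₀ := huv i j₀
          have h2 : W i₀ j = u i₀ * v j := huv i₀ j
          have h3 : W i₀ j₀ = u i₀ * v j₀ := huv i₀ j₀
          simp only [hu', hv']
          rw [h1, h2, h3, huv i j]
          have hu0 : u i₀ ≠ 0 := by
            intro h; rw [huv i₀ j₀, h] at hij; simp at hij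
          have hv0 : v j₀ ≠ 0 := by
            intro h; rw [huv i₀ j₀, h] at hij; simp at hij
          field_simp
        set S : ℝ := ∑ j, β j * v' j with hS
        have hSpos : 0 < S := by
          apply Finset.sum_pos' (fun j _ => mul_nonneg (hβ j).le (hv'nn j))
          refine ⟨j₀, Finset.mem_univ _, ?_⟩
          have : v' j₀ = 1 := by simp [hv', div_self hij]
          rw [this, mul_one]; exact hβ j₀
        refine ⟨fun j => β j * v' j / S, ?_, fun j => div_nonneg (mul_nonneg (hβ j).le (hv'nn j)) hSpos.le, ?_⟩
        · rw [← Finset.sum_div, ← hS, div_self hSpos.ne']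
        · intro k j
          have hkey : ∑ i, ∑ j, α k i * β j * W i j = (∑ i, α k i * u' i) * S := by
            rw [hS, Finset.sum_mul_sum]
            refine Finset.sum_congr rfl fun i _ => Finset.sum_congr rfl fun j _ => ?_
            rw [hfac i j]; ring
          have hAS : (∑ i, α k i * u' i) * S ≤ b k := hkey ▸ hWc k
          have hLHS : ∑ i, α k i * β j * W i j = (∑ i, α k i * u' i) * (β j * v' j) := by
            rw [Finset.sum_mul]
            refine Finset.sum_congr rfl fun i _ => ?_
            rw [hfac i j]; ring
          rw [hLHS]
          have hc : 0 ≤ β j * v' j / S := div_nonneg (mul_nonneg (hβ j).le (hv'nn j)) hSpos.le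
          have := mul_le_mul_of_nonneg_right hAS hc
          calc (∑ i, α k i * u' i) * (β j * v' j)
              = (∑ i, α k i * u' i) * S * (β j * v' j / S) := by
                field_simp
            _ ≤ b k * (β j * v' j / S) := this
    · -- R is convex
      rintro W₁ ⟨h1nn, t₁, h1s, h1nn', h1c⟩ W₂ ⟨h2nn, t₂, h2s, h2nn', h2c⟩ a c ha hc hac
      refine ⟨fun i j => ?_, fun j => a * t₁ j + c * t₂ j, ?_, fun j => ?_, fun k j => ?_⟩
      · simp only [Matrix.add_apply, Matrix.smul_apply, smul_eq_mul]
        have := h1nn i j; have := h2nn i j; nlinarith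
      · rw [Finset.sum_add_distrib, ← Finset.mul_sum, ← Finset.mul_sum, h1s, h2s]
        linarith
      · show 0 ≤ a * t₁ j + c * t₂ j
        have := h1nn' j; have := h2nn' j; nlinarith
      · have key : ∑ i, α k i * β j * (a • W₁ + c • W₂) i j
            = a * (∑ i, α k i * β j * W₁ i j) + c * (∑ i, α k i * β j * W₂ i j) := by
          rw [Finset.mul_sum, Finset.mul_sum, ← Finset.sum_add_distrib]
          refine Finset.sum_congr rfl fun i _ => ?_
          simp only [Matrix.add_apply, Matrix.smul_apply, smul_eq_mul]
          ring
        rw [key]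
        have e1 := mul_le_mul_of_nonneg_left (h1c k j) ha
        have e2 := mul_le_mul_of_nonneg_left (h2c k j) hc
        calc a * (∑ i, α k i * β j * W₁ i j) + c * (∑ i, α k i * β j * W₂ i j)
            ≤ a * (b k * t₁ j) + c * (b k * t₂ j) := by linarith
          _ = b k * (a * t₁ j + c * t₂ j) := by ring
  · -- R ⊆ convexHull U
    rintro W ⟨hWnn, t, hts, htnn, htc⟩
    set s : Finset (Fin n₂) := Finset.univ.filter (fun j => 0 < t j) with hs
    have hzero : ∀ j, j ∉ s → ∀ i, W i j = 0 := by
      intro j hj i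
      have htj : t j = 0 := by
        by_contra h
        exact hj (Finset.mem_filter.mpr ⟨Finset.mem_univ _, lt_of_le_of_ne (htnn j) (Ne.symm h)⟩)
      have hmem : (fun i => β j * W i j) ∈
          {v : Fin n₁ → ℝ | (∀ i, 0 ≤ v i) ∧ ∀ k, ∑ i, α k i * v i ≤ 0} := by
        refine ⟨fun i => mul_nonneg (hβ j).le (hWnn i j), fun k => ?_⟩
        have := htc k j
        rw [htj, mul_zero] at this
        calc ∑ i, α k i * (β j * W i j) = ∑ i, α k i * β j * W i j := by
              refine Finset.sum_congr rfl fun i _ => by ring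
          _ ≤ 0 := this
      rw [hrec] at hmem
      have : β j * W i j = 0 := congrFun hmem i
      rcases mul_eq_zero.mp this with h | h
      · exact absurd h (hβ j).ne'
      · exact h
    have hsum : ∑ j ∈ s, t j = 1 := by
      rw [← hts]
      apply Finset.sum_filter_of_ne
      intro j _ hj
      exact lt_of_le_of_ne (htnn j) (Ne.symm hj)
    set M : Fin n₂ → Matrix (Fin n₁) (Fin n₂) ℝ :=
      fun c => Matrix.of fun i j' => if j' = c then W i c / t c else 0 with hM
    have hMU : ∀ c ∈ s, M c ∈ U := by
      intro c hc
      have htc' : 0 < t c := (Finset.mem_filter.mp hc).2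
      refine ⟨fun i j => ?_, fun k => ?_, ?_⟩
      · simp only [hM, Matrix.of_apply]
        split
        · exact div_nonneg (hWnn i c) htc'.le
        · exact le_rfl
      · have hinner : ∀ i, ∑ j, α k i * β j * M c i j = α k i * β c * W i c / t c := by
          intro i
          rw [Finset.sum_eq_single c]
          · simp [hM]; ring
          · intro j _ hj; simp [hM, hj]
          · intro h; exact absurd (Finset.mem_univ c) h
        calc ∑ i, ∑ j, α k i * β j * M c i j = ∑ i, α k i * β c * W i c / t c := by
              exact Finset.sum_congr rfl fun i _ => hinner i
          _ = (∑ i, α k i * β c * W i c) / t c := by rw [Finset.sum_div]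
          _ ≤ b k := by
              rw [div_le_iff₀ htc']
              exact htc k c
      · apply rank_le_one_of_factor _ (fun i => W i c / t c) (fun j' => if j' = c then 1 else 0)
        intro i j
        simp only [hM, Matrix.of_apply]
        split <;> simp
    have hW : W = s.centerMass t M := by
      rw [Finset.centerMass_eq_of_sum_1 _ _ hsum]
      ext i j
      rw [Matrix.sum_apply]
      simp only [Matrix.smul_apply, hM, Matrix.of_apply, smul_eq_mul, mul_ite, mul_zero]
      rw [Finset.sum_ite_eq s j (fun c => t c * (W i c / t c))]
      by_cases hj : j ∈ s
      · rw [if_pos hj]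
        have : t j ≠ 0 := ((Finset.mem_filter.mp hj).2).ne'
        field_simp
      · rw [if_neg hj]
        exact hzero j hj i
    rw [hW]
    exact Finset.centerMass_mem_convexHull s (fun j hj => (htnn j)) (by rw [hsum]; norm_num) hMU
end

section
/- Let n₁, n₂ be positive integers, A¹, A² ∈ ℝ^{n₁×n₂}, and b₁, b₂ ∈ ℝ, and define U = { W ∈ ℝ^{n₁×n₂} : W ≥ 0 entrywise; Σ_{i,j} Aᵏ_{ij} W_{ij} ≤ b_k for k = 1, 2; rank(W) ≤ 1 }. Assume U is bounded. Then every extreme point W of U is supported on a 2×2 submatrix: there exist sets R ⊆ {1,…,n₁} and C ⊆ {1,…,n₂} with |R| ≤ 2 and |C| ≤ 2 such that W_{ij} = 0 whenever i ∉ R or j ∉ C. -/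
open Matrix Finset

private lemma rank_vmv_le {m n : ℕ} (u : Fin m → ℝ) (v : Fin n → ℝ) :
    (vecMulVec u v).rank ≤ 1 := by
  rw [Matrix.vecMulVec_eq Unit]
  exact (Matrix.rank_mul_le_left _ _).trans
    (by simpa using Matrix.rank_le_card_width (Matrix.replicateCol Unit u))

private lemma exists_decomp {m n : ℕ} (W : Matrix (Fin m) (Fin n) ℝ) (h : W.rank ≤ 1) :
    ∃ u v, W = vecMulVec u v := by
  rw [Matrix.rank, finrank_le_one_iff] at h
  obtain ⟨⟨u, hu⟩, h⟩ := h
  refine ⟨u, fun j => Classical.choose (h ⟨W.mulVec (Pi.single j 1),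
    LinearMap.mem_range_self _ _⟩), ?_⟩
  ext i j
  have := Classical.choose_spec (h ⟨W.mulVec (Pi.single j 1), LinearMap.mem_range_self _ _⟩)
  have h2 := congrArg (fun x => x.1 i) this
  simp [Matrix.mulVec_single] at h2
  simp [Matrix.vecMulVec]
  rw [← h2]; ring

/-- The key perturbation lemma: if `vecMulVec u v` is an extreme point and `v j₀ = 1`,
then `u` is supported on at most 2 indices. -/
private lemma aux_support {m n : ℕ} (A : Fin 2 → Matrix (Fin m) (Fin n) ℝ) (b : Fin 2 → ℝ)
    (u : Fin m → ℝ) (v : Fin n → ℝ) (hu : ∀ i, 0 ≤ u i) (hv : ∀ j, 0 ≤ v j)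
    (j₀ : Fin n) (hv0 : v j₀ = 1)
    (hext : vecMulVec u v ∈ Set.extremePoints ℝ
      {W : Matrix (Fin m) (Fin n) ℝ |
        (∀ i j, 0 ≤ W i j) ∧ (∀ k, ∑ i, ∑ j, A k i j * W i j ≤ b k) ∧ W.rank ≤ 1}) :
    ∃ R : Finset (Fin m), R.card ≤ 2 ∧ ∀ i ∉ R, u i = 0 := by
  classical
  refine ⟨Finset.univ.filter (fun i => u i ≠ 0), ?_, fun i hi => by simpa using hi⟩
  by_contra hcard
  push_neg at hcard
  obtain ⟨s, hs, hs3⟩ := Finset.exists_subset_card_eq hcard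
  obtain ⟨a, c, e, hac, hae, hce, rfl⟩ := Finset.card_eq_three.mp hs3
  have ha : 0 < u a := lt_of_le_of_ne (hu a)
    (Ne.symm (by simpa using hs (by simp : a ∈ ({a, c, e} : Finset (Fin m)))))
  have hc : 0 < u c := lt_of_le_of_ne (hu c)
    (Ne.symm (by simpa using hs (by simp : c ∈ ({a, c, e} : Finset (Fin m)))))
  have he : 0 < u e := lt_of_le_of_ne (hu e)
    (Ne.symm (by simpa using hs (by simp : e ∈ ({a, c, e} : Finset (Fin m)))))
  set g : Fin 2 → Fin m → ℝ := fun k i => ∑ j, A k i j * v j with hg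
  let L : (Fin 3 → ℝ) →ₗ[ℝ] (Fin 2 → ℝ) :=
    { toFun := fun t k => t 0 * g k a + t 1 * g k c + t 2 * g k e
      map_add' := by intro x y; funext k; simp [add_mul]; ring
      map_smul' := by intro r x; funext k; simp [mul_add]; ring }
  have hLni : ¬ Function.Injective L := by
    intro h
    have := LinearMap.finrank_le_finrank_of_injective h
    simp [Module.finrank_pi] at this
  rw [← LinearMap.ker_eq_bot] at hLni
  obtain ⟨t₀, ht₀mem, ht₀ne⟩ := Submodule.ne_bot_iff _ |>.mp hLni
  have hL0 : ∀ k, t₀ 0 * g k a + t₀ 1 * g k c + t₀ 2 * g k e = 0 := by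
    intro k
    have : L t₀ = 0 := ht₀mem
    exact congrFun this k
  set d : Fin m → ℝ := fun i =>
    if i = a then t₀ 0 else if i = c then t₀ 1 else if i = e then t₀ 2 else 0 with hd
  have hda : d a = t₀ 0 := by simp [hd]
  have hdc : d c = t₀ 1 := by simp [hd, Ne.symm hac]
  have hde : d e = t₀ 2 := by simp [hd, Ne.symm hae, Ne.symm hce]
  have hsum : ∀ (g' : Fin m → ℝ),
      ∑ i, d i * g' i = t₀ 0 * g' a + t₀ 1 * g' c + t₀ 2 * g' e := by
    intro g'
    have : ∀ i, d i * g' i = (if i = a then t₀ 0 * g' a else 0) +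
        ((if i = c then t₀ 1 * g' c else 0) + (if i = e then t₀ 2 * g' e else 0)) := by
      intro i
      simp only [hd]
      split_ifs with h1 h2 h3 <;> subst_eqs <;> simp_all <;> ring
    rw [Finset.sum_congr rfl (fun i _ => this i)]
    rw [Finset.sum_add_distrib, Finset.sum_add_distrib]
    simp [Finset.sum_ite_eq']
    ring
  set ε : ℝ := min (u a / (|t₀ 0| + 1)) (min (u c / (|t₀ 1| + 1)) (u e / (|t₀ 2| + 1))) with hε
  have hεpos : 0 < ε := by
    apply lt_min (by positivity) (lt_min (by positivity) (by positivity))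
  have habs : ∀ i, ε * |d i| ≤ u i := by
    intro i
    by_cases h1 : i = a
    · subst h1
      have h2 : ε ≤ u i / (|t₀ 0| + 1) := min_le_left _ _
      rw [le_div_iff₀ (by positivity)] at h2
      rw [hda]; nlinarith [hεpos.le, abs_nonneg (t₀ 0)]
    by_cases h2 : i = c
    · subst h2
      have h3 : ε ≤ u i / (|t₀ 1| + 1) := le_trans (min_le_right _ _) (min_le_left _ _)
      rw [le_div_iff₀ (by positivity)] at h3
      rw [hdc]; nlinarith [hεpos.le, abs_nonneg (t₀ 1)]
    by_cases h3 : i = e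
    · subst h3
      have h4 : ε ≤ u i / (|t₀ 2| + 1) := le_trans (min_le_right _ _) (min_le_right _ _)
      rw [le_div_iff₀ (by positivity)] at h4
      rw [hde]; nlinarith [hεpos.le, abs_nonneg (t₀ 2)]
    · simp [hd, h1, h2, h3]; exact hu i
  have hnn : ∀ i, 0 ≤ u i + ε * d i ∧ 0 ≤ u i - ε * d i := by
    intro i
    have h1 := habs i
    have h2 : ε * d i ≤ ε * |d i| := by
      apply mul_le_mul_of_nonneg_left (le_abs_self _) hεpos.le
    have h3 : -(ε * |d i|) ≤ ε * d i := by
      rw [neg_le]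
      calc -(ε * d i) = ε * (-(d i)) := by ring
        _ ≤ ε * |d i| := mul_le_mul_of_nonneg_left (neg_le_abs _) hεpos.le
    constructor <;> linarith
  -- constraint computation
  have hCsum : ∀ (w : Fin m → ℝ) k,
      ∑ i, ∑ j, A k i j * (vecMulVec w v) i j = ∑ i, w i * g k i := by
    intro w k
    refine Finset.sum_congr rfl fun i _ => ?_
    rw [hg, Finset.mul_sum]
    refine Finset.sum_congr rfl fun j _ => ?_
    simp [Matrix.vecMulVec_apply]; ring
  have hWmem := hext.1
  obtain ⟨hWnn, hWcon, -⟩ := hWmem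
  have hmem : ∀ s : ℝ, s = 1 ∨ s = -1 →
      vecMulVec (fun i => u i + s * (ε * d i)) v ∈
      {W : Matrix (Fin m) (Fin n) ℝ |
        (∀ i j, 0 ≤ W i j) ∧ (∀ k, ∑ i, ∑ j, A k i j * W i j ≤ b k) ∧ W.rank ≤ 1} := by
    intro s hs
    refine ⟨fun i j => ?_, fun k => ?_, rank_vmv_le _ _⟩
    · apply mul_nonneg _ (hv j)
      rcases hs with rfl | rfl
      · have := (hnn i).1; show (0:ℝ) ≤ u i + 1 * (ε * d i); linarith
      · have := (hnn i).2; show (0:ℝ) ≤ u i + (-1) * (ε * d i); linarith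
    · rw [hCsum]
      have expand : ∑ i, (u i + s * (ε * d i)) * g k i
          = (∑ i, u i * g k i) + s * ε * (∑ i, d i * g k i) := by
        rw [Finset.mul_sum, ← Finset.sum_add_distrib]
        refine Finset.sum_congr rfl fun i _ => by ring
      rw [expand, hsum, hL0 k, mul_zero, add_zero, ← hCsum]
      exact hWcon k
  have hmid : vecMulVec u v ∈ openSegment ℝ
      (vecMulVec (fun i => u i + 1 * (ε * d i)) v)
      (vecMulVec (fun i => u i + (-1) * (ε * d i)) v) := by
    refine ⟨1/2, 1/2, by norm_num, by norm_num, by norm_num, ?_⟩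
    ext i j
    simp [Matrix.vecMulVec_apply, Matrix.add_apply, Matrix.smul_apply]
    ring
  have heq1 := hext.2 (hmem 1 (Or.inl rfl)) (hmem (-1) (Or.inr rfl)) hmid
  obtain ⟨l, hl⟩ := Function.ne_iff.mp ht₀ne
  simp only [Pi.zero_apply] at hl
  have key : ∀ i, (u i + 1 * (ε * d i)) * v j₀ = u i * v j₀ := by
    intro i
    have := congrFun (congrFun heq1 i) j₀
    simpa [Matrix.vecMulVec_apply] using this
  have hzero : ∀ i, d i = 0 := by
    intro i
    have := key i
    rw [hv0] at this
    have : ε * d i = 0 := by linarith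
    rcases mul_eq_zero.mp this with h | h
    · exact absurd h hεpos.ne'
    · exact h
  fin_cases l
  · exact hl (hda ▸ hzero a)
  · exact hl (hdc ▸ hzero c)
  · exact hl (hde ▸ hzero e)

private lemma mem_transpose {m n : ℕ} (A : Fin 2 → Matrix (Fin m) (Fin n) ℝ) (b : Fin 2 → ℝ)
    (W : Matrix (Fin m) (Fin n) ℝ)
    (h : W ∈ {W : Matrix (Fin m) (Fin n) ℝ |
      (∀ i j, 0 ≤ W i j) ∧ (∀ k, ∑ i, ∑ j, A k i j * W i j ≤ b k) ∧ W.rank ≤ 1}) :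
    Wᵀ ∈ {V : Matrix (Fin n) (Fin m) ℝ |
      (∀ j i, 0 ≤ V j i) ∧ (∀ k, ∑ j, ∑ i, (A k)ᵀ j i * V j i ≤ b k) ∧ V.rank ≤ 1} := by
  obtain ⟨h1, h2, h3⟩ := h
  refine ⟨fun j i => h1 i j, fun k => ?_, by rw [Matrix.rank_transpose]; exact h3⟩
  rw [Finset.sum_comm]
  exact le_of_eq_of_le (by simp [Matrix.transpose_apply]) (h2 k)

private lemma ext_transpose {m n : ℕ} (A : Fin 2 → Matrix (Fin m) (Fin n) ℝ) (b : Fin 2 → ℝ)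
    (W : Matrix (Fin m) (Fin n) ℝ)
    (h : W ∈ Set.extremePoints ℝ {W : Matrix (Fin m) (Fin n) ℝ |
      (∀ i j, 0 ≤ W i j) ∧ (∀ k, ∑ i, ∑ j, A k i j * W i j ≤ b k) ∧ W.rank ≤ 1}) :
    Wᵀ ∈ Set.extremePoints ℝ {V : Matrix (Fin n) (Fin m) ℝ |
      (∀ j i, 0 ≤ V j i) ∧ (∀ k, ∑ j, ∑ i, (A k)ᵀ j i * V j i ≤ b k) ∧ V.rank ≤ 1} := by
  refine ⟨mem_transpose A b W h.1, fun Y hY Z hZ hseg => ?_⟩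
  have hYt := mem_transpose (fun k => (A k)ᵀ) b Y hY
  have hZt := mem_transpose (fun k => (A k)ᵀ) b Z hZ
  simp only [Matrix.transpose_transpose] at hYt hZt
  obtain ⟨p, q, hp, hq, hpq, heq⟩ := hseg
  have heq' : p • Yᵀ + q • Zᵀ = W := by
    have := congrArg Matrix.transpose heq
    simpa [Matrix.transpose_add, Matrix.transpose_smul] using this
  have hY2 := h.2 hYt hZt ⟨p, q, hp, hq, hpq, heq'⟩
  rw [← hY2]; simp

/-- For a bounded rank-1 set with two arbitrary linear side constraints, every
extreme point is supported on a 2×2 submatrix. -/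
theorem statement7 (n₁ n₂ : ℕ) (hn₁ : 0 < n₁) (hn₂ : 0 < n₂)
    (A : Fin 2 → Matrix (Fin n₁) (Fin n₂) ℝ) (b : Fin 2 → ℝ)
    (hbdd : ∃ c : ℝ, ∀ W : Matrix (Fin n₁) (Fin n₂) ℝ,
      ((∀ i j, 0 ≤ W i j) ∧ (∀ k, ∑ i, ∑ j, A k i j * W i j ≤ b k) ∧ W.rank ≤ 1) →
      ∀ i j, |W i j| ≤ c) :
    ∀ W ∈ Set.extremePoints ℝ
      {W : Matrix (Fin n₁) (Fin n₂) ℝ |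
        (∀ i j, 0 ≤ W i j) ∧ (∀ k, ∑ i, ∑ j, A k i j * W i j ≤ b k) ∧ W.rank ≤ 1},
      ∃ (R : Finset (Fin n₁)) (C : Finset (Fin n₂)),
        R.card ≤ 2 ∧ C.card ≤ 2 ∧ ∀ i j, (i ∉ R ∨ j ∉ C) → W i j = 0 := by
  classical
  intro W hW
  by_cases hW0 : W = 0
  · exact ⟨∅, ∅, by norm_num, by norm_num, fun i j _ => by simp [hW0]⟩
  obtain ⟨hWnn, hWcon, hWrk⟩ := hW.1
  have hne : ∃ i₀ j₀, W i₀ j₀ ≠ 0 := by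
    by_contra h
    push_neg at h
    exact hW0 (by ext i j; simpa using h i j)
  obtain ⟨i₀, j₀, hij⟩ := hne
  have hpos : 0 < W i₀ j₀ := lt_of_le_of_ne (hWnn i₀ j₀) (Ne.symm hij)
  obtain ⟨u, v, hWuv⟩ := exists_decomp W hWrk
  have happly : ∀ i j, W i j = u i * v j := by
    intro i j; rw [hWuv]; rfl
  have hden : u i₀ * v j₀ ≠ 0 := by rw [← happly]; exact hij
  -- row decomposition
  set u₁ : Fin n₁ → ℝ := fun i => W i j₀ with hu₁
  set v₁ : Fin n₂ → ℝ := fun j => W i₀ j / W i₀ j₀ with hv₁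
  have key1 : ∀ i j, W i j = u₁ i * v₁ j := by
    intro i j
    simp only [hu₁, hv₁, happly]
    field_simp
    rw [mul_assoc (u i * v j), mul_div_assoc, div_self (by rwa [mul_comm] : v j₀ * u i₀ ≠ 0), mul_one]
  have hWvmv1 : W = vecMulVec u₁ v₁ := by
    ext i j; rw [key1]; rfl
  obtain ⟨R, hRcard, hR⟩ := aux_support A b u₁ v₁ (fun i => hWnn i j₀)
    (fun j => div_nonneg (hWnn i₀ j) hpos.le) j₀
    (by simp only [hv₁]; field_simp) (hWvmv1 ▸ hW)
  -- column decomposition via transpose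
  set v₂ : Fin n₂ → ℝ := fun j => W i₀ j with hv₂
  set u₂ : Fin n₁ → ℝ := fun i => W i j₀ / W i₀ j₀ with hu₂
  have key2 : ∀ j i, Wᵀ j i = v₂ j * u₂ i := by
    intro j i
    simp only [Matrix.transpose_apply, hv₂, hu₂, happly]
    field_simp
    rw [mul_assoc (u i * v j), mul_div_assoc, div_self hden, mul_one]
  have hWvmv2 : Wᵀ = vecMulVec v₂ u₂ := by
    ext j i; rw [key2]; rfl
  have hextT := ext_transpose A b W hW
  rw [hWvmv2] at hextT
  obtain ⟨C, hCcard, hC⟩ := aux_support (fun k => (A k)ᵀ) b v₂ u₂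
    (fun j => hWnn i₀ j) (fun i => div_nonneg (hWnn i j₀) hpos.le) i₀
    (by simp only [hu₂]; field_simp) hextT
  refine ⟨R, C, hRcard, hCcard, fun i j hij' => ?_⟩
  rcases hij' with h | h
  · rw [key1, hR i h, zero_mul]
  · have := key2 j i
    rw [Matrix.transpose_apply] at this
    rw [this, hC j h, zero_mul]
end

section
/- Let n ≥ 3 and m be positive integers, let α¹,…,αᵐ, γ¹,…,γᵐ ∈ ℝ be nonnegative scalars, let β, δ ∈ ℝⁿ have all coordinates strictly positive, and let b₁,…,b_m ∈ ℝ. For each k set Aᵏ = αᵏ β βᵀ + γᵏ δ δᵀ ∈ ℝ^{n×n}, and define U = { W ∈ ℝ^{n×n} : W ≥ 0 entrywise; Σ_{i,j} Aᵏ_{ij} W_{ij} ≤ b_k for each k = 1,…,m; rank(W) ≤ 1 }. Assume U is bounded. Then every extreme point W of U is supported on a 2×2 submatrix: there exist sets R, C ⊆ {1,…,n} with |R| ≤ 2 and |C| ≤ 2 such that W_{ij} = 0 whenever i ∉ R or j ∉ C. -/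
open Matrix Finset

private lemma key_sum {n : ℕ} (a g : ℝ) (β δ u y : Fin n → ℝ) :
    ∑ i, ∑ j, (a * (β i * β j) + g * (δ i * δ j)) * (u i * y j)
      = a * ((∑ i, β i * u i) * (∑ j, β j * y j))
        + g * ((∑ i, δ i * u i) * (∑ j, δ j * y j)) := by
  rw [Finset.sum_mul_sum, Finset.sum_mul_sum, Finset.mul_sum, Finset.mul_sum,
    ← Finset.sum_add_distrib]
  refine Finset.sum_congr rfl fun i _ => ?_
  rw [Finset.mul_sum, Finset.mul_sum, ← Finset.sum_add_distrib]
  exact Finset.sum_congr rfl fun j _ => by ring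

private lemma rank_vmv {n : ℕ} (u y : Fin n → ℝ) : (Matrix.vecMulVec u y).rank ≤ 1 := by
  rw [Matrix.vecMulVec_eq (Fin 1)]
  refine (Matrix.rank_mul_le_left _ _).trans ?_
  have h := Matrix.rank_le_card_width (Matrix.replicateCol (Fin 1) u)
  simp only [Fintype.card_unique] at h
  exact h

private lemma sum_triple {n : ℕ} {i1 i2 i3 : Fin n} (h12 : i1 ≠ i2) (h13 : i1 ≠ i3)
    (h23 : i2 ≠ i3) (g : Fin n → ℝ) (hg : ∀ i, i ≠ i1 → i ≠ i2 → i ≠ i3 → g i = 0) :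
    ∑ i, g i = g i1 + g i2 + g i3 := by
  classical
  rw [← Finset.sum_subset (Finset.subset_univ ({i1, i2, i3} : Finset (Fin n)))]
  · rw [Finset.sum_insert (by simp [h12, h13]), Finset.sum_insert (by simp [h23]),
      Finset.sum_singleton, add_assoc]
  · intro i _ hi
    simp only [Finset.mem_insert, Finset.mem_singleton, not_or] at hi
    exact hg i hi.1 hi.2.1 hi.2.2

private lemma exists_v {n : ℕ} (β δ : Fin n → ℝ) (hβ : ∀ i, 0 < β i)
    {i1 i2 i3 : Fin n} (h12 : i1 ≠ i2) (h13 : i1 ≠ i3) (h23 : i2 ≠ i3) :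
    ∃ v : Fin n → ℝ, (∃ a, (a = i1 ∨ a = i2 ∨ a = i3) ∧ v a ≠ 0) ∧
      (∀ i, i ≠ i1 → i ≠ i2 → i ≠ i3 → v i = 0) ∧
      (∑ i, β i * v i) = 0 ∧ (∑ i, δ i * v i) = 0 := by
  by_cases hd : β i1 * δ i2 - β i2 * δ i1 = 0
  · refine ⟨fun i => if i = i1 then β i2 else if i = i2 then -(β i1) else 0,
      ⟨i1, Or.inl rfl, by simp [(hβ i2).ne']⟩,
      fun i hi1 hi2 _ => by simp [hi1, hi2], ?_, ?_⟩
    · rw [sum_triple h12 h13 h23 _ (fun i hi1 hi2 _ => by simp [hi1, hi2])]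
      simp [h12.symm, h13.symm, h23.symm]
      ring
    · rw [sum_triple h12 h13 h23 _ (fun i hi1 hi2 _ => by simp [hi1, hi2])]
      simp [h12.symm, h13.symm, h23.symm]
      linarith [hd]
  · refine ⟨fun i => if i = i1 then β i2 * δ i3 - β i3 * δ i2
        else if i = i2 then β i3 * δ i1 - β i1 * δ i3
        else if i = i3 then β i1 * δ i2 - β i2 * δ i1 else 0,
      ⟨i3, Or.inr (Or.inr rfl), by simp [h13.symm, h23.symm, hd]⟩,
      fun i hi1 hi2 hi3 => by simp [hi1, hi2, hi3], ?_, ?_⟩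
    · rw [sum_triple h12 h13 h23 _ (fun i hi1 hi2 hi3 => by simp [hi1, hi2, hi3])]
      simp [h12.symm, h13.symm, h23.symm]
      ring
    · rw [sum_triple h12 h13 h23 _ (fun i hi1 hi2 hi3 => by simp [hi1, hi2, hi3])]
      simp [h12.symm, h13.symm, h23.symm]
      ring

private lemma mem_trans {n m : ℕ} {α γ : Fin m → ℝ} {β δ : Fin n → ℝ} {b : Fin m → ℝ}
    {W : Matrix (Fin n) (Fin n) ℝ}
    (h : W ∈ {W : Matrix (Fin n) (Fin n) ℝ |
        (∀ i j, 0 ≤ W i j) ∧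
        (∀ k, ∑ i, ∑ j, (α k * (β i * β j) + γ k * (δ i * δ j)) * W i j ≤ b k) ∧
        W.rank ≤ 1}) :
    Wᵀ ∈ {W : Matrix (Fin n) (Fin n) ℝ |
        (∀ i j, 0 ≤ W i j) ∧
        (∀ k, ∑ i, ∑ j, (α k * (β i * β j) + γ k * (δ i * δ j)) * W i j ≤ b k) ∧
        W.rank ≤ 1} := by
  obtain ⟨h1, h2, h3⟩ := h
  refine ⟨fun i j => h1 j i, fun k => ?_, by rw [Matrix.rank_transpose]; exact h3⟩
  have he : ∑ i, ∑ j, (α k * (β i * β j) + γ k * (δ i * δ j)) * Wᵀ i j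
      = ∑ i, ∑ j, (α k * (β i * β j) + γ k * (δ i * δ j)) * W i j := by
    simp only [Matrix.transpose_apply]
    rw [Finset.sum_comm]
    exact Finset.sum_congr rfl fun i _ => Finset.sum_congr rfl fun j _ => by ring
  rw [he]; exact h2 k

private lemma ext_trans {n m : ℕ} {α γ : Fin m → ℝ} {β δ : Fin n → ℝ} {b : Fin m → ℝ}
    {W : Matrix (Fin n) (Fin n) ℝ}
    (h : W ∈ Set.extremePoints ℝ {W : Matrix (Fin n) (Fin n) ℝ |
        (∀ i j, 0 ≤ W i j) ∧
        (∀ k, ∑ i, ∑ j, (α k * (β i * β j) + γ k * (δ i * δ j)) * W i j ≤ b k) ∧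
        W.rank ≤ 1}) :
    Wᵀ ∈ Set.extremePoints ℝ {W : Matrix (Fin n) (Fin n) ℝ |
        (∀ i j, 0 ≤ W i j) ∧
        (∀ k, ∑ i, ∑ j, (α k * (β i * β j) + γ k * (δ i * δ j)) * W i j ≤ b k) ∧
        W.rank ≤ 1} := by
  obtain ⟨hW, hkey⟩ := h
  refine ⟨mem_trans hW, ?_⟩
  rintro A hA B hB ⟨u, w, hu, hw, huw, heq⟩
  have heq' : u • Aᵀ + w • Bᵀ = W := by
    have h' := congrArg Matrix.transpose heq
    simpa [Matrix.transpose_add, Matrix.transpose_smul] using h'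
  have hA' := hkey (mem_trans hA) (mem_trans hB) ⟨u, w, hu, hw, huw, heq'⟩
  rw [← Matrix.transpose_transpose A, hA']

private lemma not_extreme {n m : ℕ} (α γ : Fin m → ℝ) (β δ : Fin n → ℝ) (b : Fin m → ℝ)
    (hβ : ∀ i, 0 < β i)
    (x y : Fin n → ℝ) (hx : ∀ i, 0 ≤ x i) (hy : ∀ j, 0 ≤ y j)
    {j0 : Fin n} (hyj : y j0 ≠ 0)
    {i1 i2 i3 : Fin n} (h12 : i1 ≠ i2) (h13 : i1 ≠ i3) (h23 : i2 ≠ i3)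
    (hx1 : x i1 ≠ 0) (hx2 : x i2 ≠ 0) (hx3 : x i3 ≠ 0)
    (hcon : ∀ k, ∑ i, ∑ j, (α k * (β i * β j) + γ k * (δ i * δ j)) * (x i * y j) ≤ b k) :
    Matrix.vecMulVec x y ∉ Set.extremePoints ℝ
      {W : Matrix (Fin n) (Fin n) ℝ |
        (∀ i j, 0 ≤ W i j) ∧
        (∀ k, ∑ i, ∑ j, (α k * (β i * β j) + γ k * (δ i * δ j)) * W i j ≤ b k) ∧
        W.rank ≤ 1} := by
  intro hext
  obtain ⟨v, ⟨a, haT, hva⟩, hvsupp, hβv, hδv⟩ := exists_v β δ hβ h12 h13 h23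
  have hx1' : 0 < x i1 := (hx i1).lt_of_ne (Ne.symm hx1)
  have hx2' : 0 < x i2 := (hx i2).lt_of_ne (Ne.symm hx2)
  have hx3' : 0 < x i3 := (hx i3).lt_of_ne (Ne.symm hx3)
  set ε : ℝ := min (min (x i1 / (|v i1| + 1)) (x i2 / (|v i2| + 1))) (x i3 / (|v i3| + 1))
    with hεdef
  have hε : 0 < ε :=
    lt_min (lt_min (div_pos hx1' (by positivity)) (div_pos hx2' (by positivity)))
      (div_pos hx3' (by positivity))
  have hbound : ∀ i, |ε * v i| ≤ x i := by
    intro i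
    rcases eq_or_ne i i1 with rfl | hi1
    · have hle : ε ≤ x i / (|v i| + 1) := (min_le_left _ _).trans (min_le_left _ _)
      have h1 : (0:ℝ) < |v i| + 1 := by positivity
      have h2 := (le_div_iff₀ h1).mp hle
      rw [abs_mul, abs_of_pos hε]
      nlinarith [abs_nonneg (v i)]
    rcases eq_or_ne i i2 with rfl | hi2
    · have hle : ε ≤ x i / (|v i| + 1) := (min_le_left _ _).trans (min_le_right _ _)
      have h1 : (0:ℝ) < |v i| + 1 := by positivity
      have h2 := (le_div_iff₀ h1).mp hle
      rw [abs_mul, abs_of_pos hε]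
      nlinarith [abs_nonneg (v i)]
    rcases eq_or_ne i i3 with rfl | hi3
    · have hle : ε ≤ x i / (|v i| + 1) := min_le_right _ _
      have h1 : (0:ℝ) < |v i| + 1 := by positivity
      have h2 := (le_div_iff₀ h1).mp hle
      rw [abs_mul, abs_of_pos hε]
      nlinarith [abs_nonneg (v i)]
    · rw [hvsupp i hi1 hi2 hi3, mul_zero, abs_zero]
      exact hx i
  have hmem : ∀ s : ℝ, (∀ i, 0 ≤ x i + s * v i) →
      Matrix.vecMulVec (fun i => x i + s * v i) y ∈
        {W : Matrix (Fin n) (Fin n) ℝ |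
          (∀ i j, 0 ≤ W i j) ∧
          (∀ k, ∑ i, ∑ j, (α k * (β i * β j) + γ k * (δ i * δ j)) * W i j ≤ b k) ∧
          W.rank ≤ 1} := by
    intro s hpos
    refine ⟨fun i j => by
        simp only [Matrix.vecMulVec_apply]
        exact mul_nonneg (hpos i) (hy j), fun k => ?_, rank_vmv _ _⟩
    have hsplit : ∀ w : Fin n → ℝ, (∑ i, w i * v i) = 0 →
        (∑ i, w i * (x i + s * v i)) = ∑ i, w i * x i := by
      intro w hw
      have h' : (∑ i, w i * (x i + s * v i)) = (∑ i, w i * x i) + s * ∑ i, w i * v i := by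
        rw [Finset.mul_sum, ← Finset.sum_add_distrib]
        exact Finset.sum_congr rfl fun i _ => by ring
      rw [h', hw, mul_zero, add_zero]
    calc ∑ i, ∑ j, (α k * (β i * β j) + γ k * (δ i * δ j)) *
            (Matrix.vecMulVec (fun i => x i + s * v i) y) i j
        = α k * ((∑ i, β i * (x i + s * v i)) * (∑ j, β j * y j))
          + γ k * ((∑ i, δ i * (x i + s * v i)) * (∑ j, δ j * y j)) := by
          simp only [Matrix.vecMulVec_apply]
          exact key_sum _ _ _ _ _ _
      _ = α k * ((∑ i, β i * x i) * (∑ j, β j * y j))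
          + γ k * ((∑ i, δ i * x i) * (∑ j, δ j * y j)) := by
          rw [hsplit β hβv, hsplit δ hδv]
      _ = ∑ i, ∑ j, (α k * (β i * β j) + γ k * (δ i * δ j)) * (x i * y j) :=
          (key_sum _ _ _ _ _ _).symm
      _ ≤ b k := hcon k
  have hA : Matrix.vecMulVec (fun i => x i + ε * v i) y ∈ _ :=
    hmem ε fun i => by
      have h1 := hbound i
      have h2 := neg_abs_le (ε * v i)
      linarith
  have hB : Matrix.vecMulVec (fun i => x i + (-ε) * v i) y ∈ _ :=
    hmem (-ε) fun i => by
      have h1 := hbound i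
      have h2 := le_abs_self (ε * v i)
      have h3 : (-ε) * v i = -(ε * v i) := by ring
      rw [h3]
      linarith
  obtain ⟨-, hkey⟩ := hext
  have hseg : Matrix.vecMulVec x y ∈ openSegment ℝ
      (Matrix.vecMulVec (fun i => x i + ε * v i) y)
      (Matrix.vecMulVec (fun i => x i + (-ε) * v i) y) := by
    refine ⟨1/2, 1/2, by norm_num, by norm_num, by norm_num, ?_⟩
    ext i j
    simp only [Matrix.add_apply, Matrix.smul_apply, Matrix.vecMulVec_apply, smul_eq_mul]
    ring
  have hAeq := hkey hA hB hseg
  have hfa := congrFun (congrFun hAeq a) j0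
  simp only [Matrix.vecMulVec_apply] at hfa
  have h0 : ε * v a * y j0 = 0 := by linear_combination hfa
  rcases mul_eq_zero.mp h0 with h | h
  · rcases mul_eq_zero.mp h with h' | h'
    · exact hε.ne' h'
    · exact hva h'
  · exact hyj h

/-- For a bounded rank-1 set with side constraints given by matrices
Aᵏ = αᵏ β βᵀ + γᵏ δ δᵀ (αᵏ, γᵏ ≥ 0 scalars, β, δ > 0), every extreme point is
supported on a 2×2 submatrix. -/
theorem statement8 (n m : ℕ) (hn : 3 ≤ n) (hm : 0 < m)
    (α γ : Fin m → ℝ) (hα : ∀ k, 0 ≤ α k) (hγ : ∀ k, 0 ≤ γ k)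
    (β δ : Fin n → ℝ) (hβ : ∀ i, 0 < β i) (hδ : ∀ i, 0 < δ i) (b : Fin m → ℝ)
    (hbdd : ∃ c : ℝ, ∀ W : Matrix (Fin n) (Fin n) ℝ,
      ((∀ i j, 0 ≤ W i j) ∧
        (∀ k, ∑ i, ∑ j, (α k * (β i * β j) + γ k * (δ i * δ j)) * W i j ≤ b k) ∧
        W.rank ≤ 1) →
      ∀ i j, |W i j| ≤ c) :
    ∀ W ∈ Set.extremePoints ℝ
      {W : Matrix (Fin n) (Fin n) ℝ |
        (∀ i j, 0 ≤ W i j) ∧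
        (∀ k, ∑ i, ∑ j, (α k * (β i * β j) + γ k * (δ i * δ j)) * W i j ≤ b k) ∧
        W.rank ≤ 1},
      ∃ (R C : Finset (Fin n)),
        R.card ≤ 2 ∧ C.card ≤ 2 ∧ ∀ i j, (i ∉ R ∨ j ∉ C) → W i j = 0 := by
  classical
  intro W hW
  obtain ⟨hpos, hcon, hrank⟩ := hW.1
  by_cases hW0 : W = 0
  · exact ⟨∅, ∅, by simp, by simp, fun i j _ => by simp [hW0]⟩
  have hex : ∃ i0 j0, W i0 j0 ≠ 0 := by
    by_contra hc
    push_neg at hc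
    exact hW0 (by ext i j; simpa using hc i j)
  obtain ⟨i0, j0, hne0⟩ := hex
  have hW00 : 0 < W i0 j0 := (hpos i0 j0).lt_of_ne (Ne.symm hne0)
  have hW00' : W i0 j0 ≠ 0 := hW00.ne'
  have hdet : ∀ i j, W i j * W i0 j0 = W i j0 * W i0 j := by
    intro i j
    by_contra hne
    have hD : W i j * W i0 j0 - W i j0 * W i0 j ≠ 0 := sub_ne_zero.mpr hne
    have h1 : (fun r => W r j) ∈ LinearMap.range W.mulVecLin :=
      ⟨Pi.single j 1, by ext r; simp [Matrix.mulVecLin_apply]⟩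
    have h2 : (fun r => W r j0) ∈ LinearMap.range W.mulVecLin :=
      ⟨Pi.single j0 1, by ext r; simp [Matrix.mulVecLin_apply]⟩
    have hli : LinearIndependent ℝ ![(fun r => W r j), (fun r => W r j0)] := by
      rw [LinearIndependent.pair_iff]
      intro s t hst
      have e1 : s * W i j + t * W i j0 = 0 := by simpa using congrFun hst i
      have e2 : s * W i0 j + t * W i0 j0 = 0 := by simpa using congrFun hst i0
      have hs : s * (W i j * W i0 j0 - W i j0 * W i0 j) = 0 := by
        linear_combination W i0 j0 * e1 - W i j0 * e2
      have ht : t * (W i j * W i0 j0 - W i j0 * W i0 j) = 0 := by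
        linear_combination W i j * e2 - W i0 j * e1
      exact ⟨(mul_eq_zero.mp hs).resolve_right hD, (mul_eq_zero.mp ht).resolve_right hD⟩
    have hle : Submodule.span ℝ (Set.range ![(fun r => W r j), (fun r => W r j0)])
        ≤ LinearMap.range W.mulVecLin := by
      rw [Submodule.span_le]
      rintro z ⟨i', rfl⟩
      fin_cases i'
      · simpa using h1
      · simpa using h2
    have h2le := Submodule.finrank_mono hle
    rw [finrank_span_eq_card hli] at h2le
    have hr : W.rank = Module.finrank ℝ (LinearMap.range W.mulVecLin) := rfl
    rw [← hr] at h2le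
    simp at h2le
    omega
  set x : Fin n → ℝ := fun i => W i j0 with hxdef
  set y : Fin n → ℝ := fun j => W i0 j / W i0 j0 with hydef
  have hxy : ∀ i j, W i j = x i * y j := by
    intro i j
    show W i j = W i j0 * (W i0 j / W i0 j0)
    field_simp
    linarith [hdet i j]
  have hxnn : ∀ i, 0 ≤ x i := fun i => hpos i j0
  have hynn : ∀ j, 0 ≤ y j := fun j => div_nonneg (hpos i0 j) hW00.le
  have hy0 : y j0 ≠ 0 := by
    show W i0 j0 / W i0 j0 ≠ 0
    exact div_ne_zero hne0 hW00'
  have hx0 : x i0 ≠ 0 := hne0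
  have hvmv : W = Matrix.vecMulVec x y := by
    ext i j; simp only [Matrix.vecMulVec_apply]; exact hxy i j
  refine ⟨Finset.univ.filter (fun i => x i ≠ 0), Finset.univ.filter (fun j => y j ≠ 0),
    ?_, ?_, ?_⟩
  · by_contra hc
    push_neg at hc
    obtain ⟨a1, a2, a3, ha1, ha2, ha3, h12, h13, h23⟩ := Finset.two_lt_card_iff.mp hc
    simp only [Finset.mem_filter] at ha1 ha2 ha3
    have hconxy : ∀ k, ∑ i, ∑ j, (α k * (β i * β j) + γ k * (δ i * δ j)) * (x i * y j) ≤ b k := by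
      intro k
      calc ∑ i, ∑ j, (α k * (β i * β j) + γ k * (δ i * δ j)) * (x i * y j)
          = ∑ i, ∑ j, (α k * (β i * β j) + γ k * (δ i * δ j)) * W i j :=
            Finset.sum_congr rfl fun i _ => Finset.sum_congr rfl fun j _ => by rw [hxy i j]
        _ ≤ b k := hcon k
    have hWe := hW
    rw [hvmv] at hWe
    exact not_extreme α γ β δ b hβ x y hxnn hynn hy0 h12 h13 h23 ha1.2 ha2.2 ha3.2 hconxy hWe
  · by_contra hc
    push_neg at hc
    obtain ⟨a1, a2, a3, ha1, ha2, ha3, h12, h13, h23⟩ := Finset.two_lt_card_iff.mp hc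
    simp only [Finset.mem_filter] at ha1 ha2 ha3
    have hWt := ext_trans hW
    have hvmvT : Wᵀ = Matrix.vecMulVec y x := by
      ext i j
      simp only [Matrix.transpose_apply, Matrix.vecMulVec_apply]
      rw [hxy j i]; ring
    have hconyx : ∀ k, ∑ i, ∑ j, (α k * (β i * β j) + γ k * (δ i * δ j)) * (y i * x j) ≤ b k := by
      intro k
      calc ∑ i, ∑ j, (α k * (β i * β j) + γ k * (δ i * δ j)) * (y i * x j)
          = ∑ i, ∑ j, (α k * (β i * β j) + γ k * (δ i * δ j)) * Wᵀ i j :=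
            Finset.sum_congr rfl fun i _ => Finset.sum_congr rfl fun j _ => by
              rw [Matrix.transpose_apply, hxy j i]; ring
        _ ≤ b k := (mem_trans hW.1).2.1 k
    rw [hvmvT] at hWt
    exact not_extreme α γ β δ b hβ y x hynn hxnn hx0 h12 h13 h23 ha1.2 ha2.2 ha3.2 hconyx hWt
  · intro i j hij
    rcases hij with hi | hj
    · simp only [Finset.mem_filter, Finset.mem_univ, true_and, not_not] at hi
      rw [hxy i j, hi, zero_mul]
    · simp only [Finset.mem_filter, Finset.mem_univ, true_and, not_not] at hj
      rw [hxy i j, hj, mul_zero]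
end

section
/- Let n₁, n₂ be positive integers and l, u ∈ ℝ^{n₁} with 0 ≤ l_i ≤ u_i for all i. Define U^row(l,u) = { W ∈ ℝ^{n₁×n₂} : W_{ij} ≥ 0 for all i, j; l_i ≤ Σ_{j=1}^{n₂} W_{ij} ≤ u_i for each i = 1,…,n₁; rank(W) ≤ 1 }. Then the convex hull of U^row(l,u) is a polytope: there exists a finite set F ⊆ ℝ^{n₁×n₂} such that the convex hull of U^row(l,u) equals the convex hull of F. -/
open Matrix Module Submodule

/-- rank of a matrix of the form `c ⬝ e_j^T` is at most 1 -/
lemma aux_rank_le_one {n₁ n₂ : ℕ} (c : Fin n₁ → ℝ) (j : Fin n₂) :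
    (Matrix.of fun i j' => c i * (if j' = j then (1:ℝ) else 0)).rank ≤ 1 := by
  have h : LinearMap.range (Matrix.of fun i j' =>
      c i * (if j' = j then (1:ℝ) else 0)).mulVecLin ≤ Submodule.span ℝ {c} := by
    rintro _ ⟨x, rfl⟩
    refine Submodule.mem_span_singleton.2 ⟨x j, ?_⟩
    ext i
    simp [Matrix.mulVecLin, Matrix.mulVec, dotProduct, mul_ite, ite_mul, mul_comm]
  calc (Matrix.of fun i j' => c i * (if j' = j then (1:ℝ) else 0)).rank
      ≤ finrank ℝ (Submodule.span ℝ ({c} : Set (Fin n₁ → ℝ))) := Submodule.finrank_mono h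
    _ ≤ 1 := by simpa using finrank_span_le_card ({c} : Set (Fin n₁ → ℝ))

/-- a nonzero nonneg matrix of rank ≤ 1 factors as (row sums) ⊗ b with b a prob. vector -/
lemma aux_decomp {n₁ n₂ : ℕ} (W : Matrix (Fin n₁) (Fin n₂) ℝ)
    (hpos : ∀ i j, 0 ≤ W i j) (hr : W.rank ≤ 1) (hW : W ≠ 0) :
    ∃ b : Fin n₂ → ℝ, (∀ j, 0 ≤ b j) ∧ (∑ j, b j = 1) ∧
      ∀ i j, W i j = (∑ j', W i j') * b j := by
  -- get a spanning vector for the column space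
  have hP : (LinearMap.range W.mulVecLin).IsPrincipal :=
    (Submodule.finrank_le_one_iff_isPrincipal _).1 hr
  obtain ⟨v, hv⟩ := hP
  have hcol : ∀ j, ∃ cj : ℝ, (fun i => W i j) = cj • v := by
    intro j
    have hmem : (fun i => W i j) ∈ LinearMap.range W.mulVecLin := by
      refine ⟨Pi.single j 1, ?_⟩
      simp [Matrix.mulVecLin]
      rfl
    rw [hv] at hmem
    obtain ⟨cj, hcj⟩ := Submodule.mem_span_singleton.1 hmem
    exact ⟨cj, hcj.symm⟩
  choose c hc using hcol
  have hWc : ∀ i j, W i j = c j * v i := by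
    intro i j
    simpa using congrFun (hc j) i
  -- pick a nonzero entry
  have : ∃ i j, W i j ≠ 0 := by
    by_contra h
    push_neg at h
    exact hW (by ext i j; simp [h])
  obtain ⟨i₀, j₀, hij⟩ := this
  have hWpos : 0 < W i₀ j₀ := lt_of_le_of_ne (hpos i₀ j₀) (Ne.symm hij)
  have ha : 0 < ∑ j', W i₀ j' := by
    have := Finset.single_le_sum (f := fun j => W i₀ j) (fun j _ => hpos i₀ j)
      (Finset.mem_univ j₀)
    linarith
  set s : ℝ := ∑ j, c j with hs
  have hsv : s * v i₀ = ∑ j', W i₀ j' := by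
    rw [hs, Finset.sum_mul]
    exact Finset.sum_congr rfl fun j _ => (hWc i₀ j).symm
  have hsvne : s * v i₀ ≠ 0 := by rw [hsv]; exact ne_of_gt ha
  have hsne : s ≠ 0 := fun h => hsvne (by rw [h, zero_mul])
  have hvne : v i₀ ≠ 0 := fun h => hsvne (by rw [h, mul_zero])
  refine ⟨fun j => W i₀ j / (∑ j', W i₀ j'), fun j => div_nonneg (hpos i₀ j) ha.le, ?_, ?_⟩
  · rw [← Finset.sum_div, div_self (ne_of_gt ha)]
  · intro i j
    have hbj : W i₀ j / (∑ j', W i₀ j') = c j / s := by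
      rw [hWc i₀ j, ← hsv]
      field_simp
    show W i j = (∑ j', W i j') * (W i₀ j / ∑ j', W i₀ j')
    rw [hbj]
    have hai : (∑ j', W i j') = s * v i := by
      rw [hs, Finset.sum_mul]
      exact Finset.sum_congr rfl fun j' _ => hWc i j'
    rw [hai, hWc i j]
    field_simp

/-- The convex hull of the row-bounded rank-1 set U^row(l,u) is a polytope. -/
theorem statement9 (n₁ n₂ : ℕ) (hn₁ : 0 < n₁) (hn₂ : 0 < n₂)
    (l u : Fin n₁ → ℝ) (hl : ∀ i, 0 ≤ l i) (hlu : ∀ i, l i ≤ u i) :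
    ∃ F : Finset (Matrix (Fin n₁) (Fin n₂) ℝ),
      convexHull ℝ
        {W : Matrix (Fin n₁) (Fin n₂) ℝ |
          (∀ i j, 0 ≤ W i j) ∧ (∀ i, l i ≤ ∑ j, W i j ∧ ∑ j, W i j ≤ u i) ∧
          W.rank ≤ 1} =
      convexHull ℝ (F : Set (Matrix (Fin n₁) (Fin n₂) ℝ)) := by
  classical
  -- the linear map sending a vector r to the matrix r ⊗ e_j
  let L : Fin n₂ → ((Fin n₁ → ℝ) →ₗ[ℝ] Matrix (Fin n₁) (Fin n₂) ℝ) := fun j =>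
    { toFun := fun r => Matrix.of fun i j' => r i * (if j' = j then (1:ℝ) else 0)
      map_add' := by intro x y; ext i j'; by_cases h : j' = j <;> simp [h, add_mul]
      map_smul' := by intro c x; ext i j'; by_cases h : j' = j <;> simp [h, mul_assoc] }
  let f : (Fin n₁ → Bool) × Fin n₂ → Matrix (Fin n₁) (Fin n₂) ℝ := fun p =>
    L p.2 (fun i => if p.1 i then u i else l i)
  refine ⟨Finset.image f Finset.univ, ?_⟩
  set U : Set (Matrix (Fin n₁) (Fin n₂) ℝ) :=
    {W | (∀ i j, 0 ≤ W i j) ∧ (∀ i, l i ≤ ∑ j, W i j ∧ ∑ j, W i j ≤ u i) ∧ W.rank ≤ 1}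
  have hFU : ((Finset.image f Finset.univ : Finset (Matrix (Fin n₁) (Fin n₂) ℝ)) :
      Set (Matrix (Fin n₁) (Fin n₂) ℝ)) ⊆ U := by
    intro W hW
    simp only [Finset.coe_image, Finset.coe_univ, Set.image_univ, Set.mem_range] at hW
    obtain ⟨⟨ε, j⟩, rfl⟩ := hW
    set c : Fin n₁ → ℝ := fun i => if ε i then u i else l i with hcdef
    have hc0 : ∀ i, 0 ≤ c i := fun i => by
      by_cases h : ε i <;> simp [hcdef, h, hl i, (hl i).trans (hlu i)]
    have hcl : ∀ i, l i ≤ c i := fun i => by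
      by_cases h : ε i <;> simp [hcdef, h, hlu i]
    have hcu : ∀ i, c i ≤ u i := fun i => by
      by_cases h : ε i <;> simp [hcdef, h, hlu i]
    refine ⟨?_, ?_, ?_⟩
    · intro i j'
      show 0 ≤ c i * (if j' = j then (1:ℝ) else 0)
      apply mul_nonneg (hc0 i)
      split <;> norm_num
    · intro i
      have hsum : (∑ j', f (ε, j) i j') = c i := by
        show (∑ j', c i * (if j' = j then (1:ℝ) else 0)) = c i
        simp [mul_ite]
      rw [hsum]
      exact ⟨hcl i, hcu i⟩
    · exact aux_rank_le_one c j
  have h1 : convexHull ℝ ((Finset.image f Finset.univ : Finset _) :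
      Set (Matrix (Fin n₁) (Fin n₂) ℝ)) ⊆ convexHull ℝ U := convexHull_mono hFU
  -- the vertex set of the box
  have hUF : U ⊆ convexHull ℝ ((Finset.image f Finset.univ : Finset _) :
      Set (Matrix (Fin n₁) (Fin n₂) ℝ)) := by
    intro W hW
    obtain ⟨hpos, hrow, hr⟩ := hW
    -- key fact: any vector in the box, tensored with e_j, is in the hull
    have hbox : ∀ (a : Fin n₁ → ℝ), (∀ i, l i ≤ a i ∧ a i ≤ u i) → ∀ j : Fin n₂,
        L j a ∈ convexHull ℝ ((Finset.image f Finset.univ : Finset _) :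
          Set (Matrix (Fin n₁) (Fin n₂) ℝ)) := by
      intro a ha j
      have hamem : a ∈ convexHull ℝ (Set.pi Set.univ fun i => ({l i, u i} : Set ℝ)) := by
        rw [convexHull_pi]
        intro i _
        show a i ∈ convexHull ℝ ({l i, u i} : Set ℝ)
        rw [convexHull_pair, segment_eq_Icc (hlu i)]
        exact Set.mem_Icc.2 (ha i)
      have : L j a ∈ L j '' convexHull ℝ (Set.pi Set.univ fun i => ({l i, u i} : Set ℝ)) :=
        Set.mem_image_of_mem _ hamem
      rw [LinearMap.image_convexHull] at this
      refine convexHull_mono ?_ this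
      rintro _ ⟨r, hr', rfl⟩
      simp only [Finset.coe_image, Finset.coe_univ, Set.image_univ, Set.mem_range]
      refine ⟨⟨fun i => decide (r i = u i), j⟩, ?_⟩
      have hre : (fun i => if decide (r i = u i) = true then u i else l i) = r := by
        funext i
        have hmem := hr' i (Set.mem_univ i)
        simp only [Set.mem_insert_iff, Set.mem_singleton_iff] at hmem
        by_cases hru : r i = u i
        · simp [hru]
        · simp only [decide_eq_true_eq, if_neg hru]
          exact (hmem.resolve_right hru).symm
      show L j (fun i => if decide (r i = u i) = true then u i else l i) = L j r
      rw [hre]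
    by_cases hW0 : W = 0
    · -- the zero matrix: row sums are 0 so l = 0, and W = L j l
      subst hW0
      have hl0 : ∀ i, l i = 0 := by
        intro i
        have := (hrow i).1
        simp only [Matrix.zero_apply, Finset.sum_const_zero] at this
        linarith [hl i]
      have hmem := hbox l (fun i => ⟨le_refl _, hlu i⟩) ⟨0, hn₂⟩
      have h0 : L ⟨0, hn₂⟩ l = 0 := by
        ext i j'
        show l i * (if j' = ⟨0, hn₂⟩ then (1:ℝ) else 0) = 0
        rw [hl0 i, zero_mul]
      rw [h0] at hmem
      exact hmem
    · obtain ⟨b, hb0, hb1, hWab⟩ := aux_decomp W hpos hr hW0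
      have hkey : W = ∑ j, b j • L j (fun i => ∑ j', W i j') := by
        ext i j'
        rw [Matrix.sum_apply]
        have heach : ∀ j, (b j • L j fun i => ∑ j'', W i j'') i j' =
            if j = j' then (∑ j'', W i j'') * b j else 0 := by
          intro j
          show b j * ((∑ j'', W i j'') * (if j' = j then (1:ℝ) else 0)) =
            if j = j' then (∑ j'', W i j'') * b j else 0
          by_cases h : j' = j
          · subst h; simp [mul_comm]
          · simp [h, Ne.symm h]
        rw [Finset.sum_congr rfl fun j _ => heach j, Finset.sum_ite_eq']
        simp [hWab i j']
      rw [hkey]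
      exact (convex_convexHull ℝ _).sum_mem (fun j _ => hb0 j) hb1
        (fun j _ => hbox _ (fun i => hrow i) j)
  exact Set.Subset.antisymm (convexHull_min hUF (convex_convexHull ℝ _)) h1
end

section
/- Let n₁, n₂ be positive integers and l, u ∈ ℝ^{n₁} with 0 ≤ l_i ≤ u_i and u_i > 0 for all i. Define U^row(l,u) = { W ∈ ℝ^{n₁×n₂} : W_{ij} ≥ 0 for all i, j; l_i ≤ Σ_{j=1}^{n₂} W_{ij} ≤ u_i for each i; rank(W) ≤ 1 } and let I = { i : l_i > 0 }. Then a matrix W ∈ ℝ^{n₁×n₂} belongs to the convex hull of U^row(l,u) if and only if: (a) W_{ij} ≥ 0 for all i, j; (b) for every function σ : {1,…,n₂} → {1,…,n₁}, Σ_{j=1}^{n₂} W_{σ(j),j} / u_{σ(j)} ≤ 1; (c) if I is nonempty, then for every function τ : {1,…,n₂} → I, Σ_{j=1}^{n₂} W_{τ(j),j} / l_{τ(j)} ≥ 1; (d) l_{i₁} W_{i₂ j} ≤ u_{i₂} W_{i₁ j} for every j ∈ {1,…,n₂}, every i₁ ∈ I and every i₂ ∈ {1,…,n₁} with i₂ ≠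 i₁. -/
open Finset

private lemma aux_exists_t {n : ℕ} (f g : Fin n → ℝ) (hfg : ∀ j, f j ≤ g j)
    (hS : ∑ j, f j ≤ 1) (hT : 1 ≤ ∑ j, g j) :
    ∃ t : Fin n → ℝ, (∀ j, f j ≤ t j) ∧ (∀ j, t j ≤ g j) ∧ ∑ j, t j = 1 := by
  set S := ∑ j, f j with hSdef
  set T := ∑ j, g j with hTdef
  by_cases h : T = S
  · have h1 : (1:ℝ) ≤ S := h ▸ hT
    exact ⟨f, fun j => le_refl _, hfg, le_antisymm hS h1⟩
  · have hST : S ≤ T := Finset.sum_le_sum fun j _ => hfg j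
    have hST' : 0 < T - S := by
      rcases lt_or_eq_of_le hST with h' | h'
      · linarith
      · exact absurd h'.symm h
    set θ := (1 - S) / (T - S) with hθ
    have hθ0 : 0 ≤ θ := div_nonneg (by linarith) (by linarith)
    have hθ1 : θ ≤ 1 := by rw [hθ, div_le_one hST']; linarith
    refine ⟨fun j => f j + θ * (g j - f j), fun j => ?_, fun j => ?_, ?_⟩
    · show f j ≤ f j + θ * (g j - f j)
      nlinarith [mul_nonneg hθ0 (sub_nonneg.2 (hfg j))]
    · show f j + θ * (g j - f j) ≤ g j
      nlinarith [mul_nonneg (sub_nonneg.2 hθ1) (sub_nonneg.2 (hfg j))]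
    · have hs : ∑ j, (f j + θ * (g j - f j)) = S + θ * (T - S) := by
        rw [Finset.sum_add_distrib, ← Finset.mul_sum, Finset.sum_sub_distrib]
      rw [hs, hθ, div_mul_cancel₀ _ (ne_of_gt hST')]; ring

private lemma aux_rank_factor {n₁ n₂ : ℕ} (A : Matrix (Fin n₁) (Fin n₂) ℝ)
    (h : A.rank ≤ 1) : ∃ (v : Fin n₁ → ℝ) (a : Fin n₂ → ℝ), ∀ i j, A i j = v i * a j := by
  rw [Matrix.rank, Submodule.finrank_le_one_iff_isPrincipal] at h
  obtain ⟨v, hv⟩ := h.principal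
  have hcol : ∀ j : Fin n₂, ∃ c : ℝ, ∀ i, A i j = c * v i := by
    intro j
    have hmem : A.mulVec (Pi.single j 1) ∈ LinearMap.range A.mulVecLin :=
      ⟨Pi.single j 1, rfl⟩
    rw [hv, Submodule.mem_span_singleton] at hmem
    obtain ⟨c, hc⟩ := hmem
    refine ⟨c, fun i => ?_⟩
    have := congrFun hc i
    simp only [Matrix.mulVec_single, Pi.smul_apply, smul_eq_mul, mul_one, MulOpposite.op_one, one_smul, Matrix.col_apply] at this
    exact this.symm
  choose a ha using hcol
  exact ⟨v, a, fun i j => by rw [ha j i]; ring⟩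

private lemma aux_mem {n₁ n₂ : ℕ} (hn₂ : 0 < n₂) (l u : Fin n₁ → ℝ)
    (hl : ∀ i, 0 ≤ l i) (hlu : ∀ i, l i ≤ u i) (hu : ∀ i, 0 < u i)
    (W : Matrix (Fin n₁) (Fin n₂) ℝ)
    (hpos : ∀ i j, 0 ≤ W i j) (hrow : ∀ i, l i ≤ ∑ j, W i j ∧ ∑ j, W i j ≤ u i)
    (hrank : W.rank ≤ 1) :
    (∀ σ : Fin n₂ → Fin n₁, ∑ j, W (σ j) j / u (σ j) ≤ 1) ∧
    (∀ τ : Fin n₂ → Fin n₁, (∀ j, 0 < l (τ j)) → 1 ≤ ∑ j, W (τ j) j / l (τ j)) ∧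
    (∀ (j : Fin n₂) (i₁ i₂ : Fin n₁), 0 < l i₁ → i₂ ≠ i₁ →
        l i₁ * W i₂ j ≤ u i₂ * W i₁ j) := by
  obtain ⟨v, a, hva⟩ := aux_rank_factor W hrank
  set r : Fin n₁ → ℝ := fun i => ∑ j, W i j with hr
  have key : ∀ i i' j, W i j * r i' = W i' j * r i := by
    intro i i' j
    simp only [hr, Finset.mul_sum]
    refine Finset.sum_congr rfl fun j' _ => ?_
    rw [hva i j, hva i' j', hva i' j, hva i j']
    ring
  have hnorm : ∀ i₀, 0 < r i₀ → ∀ i j, W i j = r i * (W i₀ j / r i₀) := by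
    intro i₀ h0 i j
    have hne : r i₀ ≠ 0 := ne_of_gt h0
    have hk := key i i₀ j
    field_simp
    linarith
  have hvsum : ∀ i₀, 0 < r i₀ → ∑ j, W i₀ j / r i₀ = 1 := by
    intro i₀ h0
    rw [← Finset.sum_div]
    have h0' : (∑ j, W i₀ j) ≠ 0 := ne_of_gt h0
    exact div_self h0'
  refine ⟨?_, ?_, ?_⟩
  · intro σ
    by_cases hW : ∀ i j, W i j = 0
    · simp only [hW, zero_div, Finset.sum_const_zero]; norm_num
    · push_neg at hW
      obtain ⟨i₀, j₀, hij⟩ := hW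
      have h0 : 0 < r i₀ := by
        have h1 : 0 < W i₀ j₀ := lt_of_le_of_ne (hpos _ _) (Ne.symm hij)
        have h2 : W i₀ j₀ ≤ r i₀ :=
          Finset.single_le_sum (fun j _ => hpos i₀ j) (Finset.mem_univ j₀)
        linarith
      calc ∑ j, W (σ j) j / u (σ j) ≤ ∑ j, W i₀ j / r i₀ := by
            refine Finset.sum_le_sum fun j _ => ?_
            rw [hnorm i₀ h0 (σ j) j, div_le_iff₀ (hu (σ j))]
            have h1 : r (σ j) ≤ u (σ j) := (hrow (σ j)).2
            have h2 : 0 ≤ W i₀ j / r i₀ := div_nonneg (hpos _ _) h0.le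
            nlinarith
        _ = 1 := hvsum i₀ h0
  · intro τ hτ
    set i₀ := τ ⟨0, hn₂⟩ with hi₀
    have h0 : 0 < r i₀ := lt_of_lt_of_le (hτ _) (hrow i₀).1
    calc (1:ℝ) = ∑ j, W i₀ j / r i₀ := (hvsum i₀ h0).symm
      _ ≤ ∑ j, W (τ j) j / l (τ j) := by
          refine Finset.sum_le_sum fun j _ => ?_
          rw [hnorm i₀ h0 (τ j) j, le_div_iff₀ (hτ j)]
          have h1 : l (τ j) ≤ r (τ j) := (hrow (τ j)).1
          have h2 : 0 ≤ W i₀ j / r i₀ := div_nonneg (hpos _ _) h0.le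
          nlinarith
  · intro j i₁ i₂ hl₁ _
    have hk := key i₂ i₁ j
    nlinarith [mul_nonneg (hpos i₁ j) (sub_nonneg.2 (hrow i₂).2),
      mul_nonneg (hpos i₂ j) (sub_nonneg.2 (hrow i₁).1)]

/-- Description of the convex hull of the row-bounded rank-1 set U^row(l,u) in the
original space: nonnegativity, the partition inequalities for upper and lower row
bounds, and the ratio inequalities. Partitions (T₁,…,T_{n₁}) of the column set are
encoded by functions σ : columns → rows via T_i = σ⁻¹(i). -/
theorem statement11 (n₁ n₂ : ℕ) (hn₁ : 0 < n₁) (hn₂ : 0 < n₂)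
    (l u : Fin n₁ → ℝ) (hl : ∀ i, 0 ≤ l i) (hlu : ∀ i, l i ≤ u i) (hu : ∀ i, 0 < u i)
    (W : Matrix (Fin n₁) (Fin n₂) ℝ) :
    W ∈ convexHull ℝ
        {W : Matrix (Fin n₁) (Fin n₂) ℝ |
          (∀ i j, 0 ≤ W i j) ∧ (∀ i, l i ≤ ∑ j, W i j ∧ ∑ j, W i j ≤ u i) ∧
          W.rank ≤ 1} ↔
      ((∀ i j, 0 ≤ W i j) ∧
       (∀ σ : Fin n₂ → Fin n₁, ∑ j, W (σ j) j / u (σ j) ≤ 1) ∧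
       (∀ τ : Fin n₂ → Fin n₁, (∀ j, 0 < l (τ j)) → 1 ≤ ∑ j, W (τ j) j / l (τ j)) ∧
       (∀ (j : Fin n₂) (i₁ i₂ : Fin n₁), 0 < l i₁ → i₂ ≠ i₁ →
          l i₁ * W i₂ j ≤ u i₂ * W i₁ j)) := by
  set S : Set (Matrix (Fin n₁) (Fin n₂) ℝ) :=
    {W : Matrix (Fin n₁) (Fin n₂) ℝ |
      (∀ i j, 0 ≤ W i j) ∧ (∀ i, l i ≤ ∑ j, W i j ∧ ∑ j, W i j ≤ u i) ∧
      W.rank ≤ 1} with hSdef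
  set C : Set (Matrix (Fin n₁) (Fin n₂) ℝ) :=
    {W : Matrix (Fin n₁) (Fin n₂) ℝ |
      (∀ i j, 0 ≤ W i j) ∧
      (∀ σ : Fin n₂ → Fin n₁, ∑ j, W (σ j) j / u (σ j) ≤ 1) ∧
      (∀ τ : Fin n₂ → Fin n₁, (∀ j, 0 < l (τ j)) → 1 ≤ ∑ j, W (τ j) j / l (τ j)) ∧
      (∀ (j : Fin n₂) (i₁ i₂ : Fin n₁), 0 < l i₁ → i₂ ≠ i₁ →
          l i₁ * W i₂ j ≤ u i₂ * W i₁ j)} with hCdef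
  constructor
  · -- forward direction
    intro hmem
    have hsub : S ⊆ C := by
      intro A hA
      obtain ⟨h1, h2, h3⟩ := hA
      obtain ⟨hb, hc, hd⟩ := aux_mem hn₂ l u hl hlu hu A h1 h2 h3
      exact ⟨h1, hb, hc, hd⟩
    have hconv : Convex ℝ C := by
      intro A hA B hB p q hp hq hpq
      obtain ⟨hA1, hA2, hA3, hA4⟩ := hA
      obtain ⟨hB1, hB2, hB3, hB4⟩ := hB
      have hEnt : ∀ i j, (p • A + q • B) i j = p * A i j + q * B i j := by
        intro i j; simp [Matrix.add_apply, Matrix.smul_apply, smul_eq_mul]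
      refine ⟨?_, ?_, ?_, ?_⟩
      · intro i j
        rw [hEnt]
        exact add_nonneg (mul_nonneg hp (hA1 i j)) (mul_nonneg hq (hB1 i j))
      · intro σ
        have hsum : ∑ j, (p • A + q • B) (σ j) j / u (σ j)
            = p * (∑ j, A (σ j) j / u (σ j)) + q * (∑ j, B (σ j) j / u (σ j)) := by
          rw [Finset.mul_sum, Finset.mul_sum, ← Finset.sum_add_distrib]
          refine Finset.sum_congr rfl fun j _ => ?_
          rw [hEnt]; ring
        rw [hsum]
        nlinarith [hA2 σ, hB2 σ]
      · intro τ hτ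
        have hsum : ∑ j, (p • A + q • B) (τ j) j / l (τ j)
            = p * (∑ j, A (τ j) j / l (τ j)) + q * (∑ j, B (τ j) j / l (τ j)) := by
          rw [Finset.mul_sum, Finset.mul_sum, ← Finset.sum_add_distrib]
          refine Finset.sum_congr rfl fun j _ => ?_
          rw [hEnt]; ring
        rw [hsum]
        nlinarith [hA3 τ hτ, hB3 τ hτ]
      · intro j i₁ i₂ h1 h2
        rw [hEnt i₂ j, hEnt i₁ j]
        nlinarith [hA4 j i₁ i₂ h1 h2, hB4 j i₁ i₂ h1 h2]
    exact convexHull_min hsub hconv hmem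
  · -- reverse direction
    rintro ⟨hpos, hb, hc, hd⟩
    haveI : Nonempty (Fin n₁) := ⟨⟨0, hn₁⟩⟩
    have hne : (Finset.univ : Finset (Fin n₁)).Nonempty := Finset.univ_nonempty
    set f : Fin n₂ → ℝ := fun j => Finset.univ.sup' hne (fun i => W i j / u i) with hf
    have hf0 : ∀ j, 0 ≤ f j := by
      intro j
      exact le_trans (div_nonneg (hpos ⟨0, hn₁⟩ j) (hu (⟨0, hn₁⟩ : Fin n₁)).le)
        (Finset.le_sup' (fun i => W i j / u i) (Finset.mem_univ (⟨0, hn₁⟩ : Fin n₁)))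
    have hfW : ∀ i j, W i j ≤ u i * f j := by
      intro i j
      have h1 : W i j / u i ≤ f j :=
        Finset.le_sup' (fun i => W i j / u i) (Finset.mem_univ i)
      rw [div_le_iff₀ (hu i)] at h1
      linarith
    have hfsum : ∑ j, f j ≤ 1 := by
      have hσ : ∀ j, ∃ i, f j = W i j / u i := by
        intro j
        obtain ⟨b, _, hb'⟩ := Finset.exists_mem_eq_sup' hne (fun i => W i j / u i)
        exact ⟨b, hb'⟩
      choose σ hσ' using hσ
      calc ∑ j, f j = ∑ j, W (σ j) j / u (σ j) := Finset.sum_congr rfl fun j _ => hσ' j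
        _ ≤ 1 := hb σ
    have hg : ∃ g : Fin n₂ → ℝ, (∀ j, f j ≤ g j) ∧ 1 ≤ ∑ j, g j ∧
        ∀ i j (t : ℝ), t ≤ g j → l i * t ≤ W i j := by
      set I : Finset (Fin n₁) := Finset.univ.filter (fun i => 0 < l i) with hI
      by_cases hIne : I.Nonempty
      · refine ⟨fun j => I.inf' hIne (fun i => W i j / l i), ?_, ?_, ?_⟩
        · intro j
          apply Finset.sup'_le
          intro i _
          apply Finset.le_inf'
          intro i' hi'
          have hli' : 0 < l i' := (Finset.mem_filter.1 hi').2
          rw [div_le_div_iff₀ (hu i) hli']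
          by_cases hii : i = i'
          · subst hii
            nlinarith [hpos i j, hlu i]
          · have := hd j i' i hli' hii
            linarith
        · have hτ : ∀ j, ∃ i, i ∈ I ∧ I.inf' hIne (fun i => W i j / l i) = W i j / l i := by
            intro j
            obtain ⟨b, hbI, hb'⟩ := Finset.exists_mem_eq_inf' hIne (fun i => W i j / l i)
            exact ⟨b, hbI, hb'⟩
          choose τ hτI hτeq using hτ
          calc (1:ℝ) ≤ ∑ j, W (τ j) j / l (τ j) :=
                hc τ (fun j => (Finset.mem_filter.1 (hτI j)).2)
            _ = ∑ j, I.inf' hIne (fun i => W i j / l i) :=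
                Finset.sum_congr rfl fun j _ => (hτeq j).symm
        · intro i j t ht
          by_cases hli : 0 < l i
          · have h1 : I.inf' hIne (fun i' => W i' j / l i') ≤ W i j / l i :=
              Finset.inf'_le _ (Finset.mem_filter.2 ⟨Finset.mem_univ i, hli⟩)
            have h2 : t ≤ W i j / l i := le_trans ht h1
            rw [le_div_iff₀ hli] at h2
            linarith
          · have h0 : l i = 0 := le_antisymm (not_lt.1 hli) (hl i)
            rw [h0, zero_mul]
            exact hpos i j
      · refine ⟨fun j => f j + 1, fun j => by show f j ≤ f j + 1; linarith, ?_, ?_⟩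
        · have h0 : 0 ≤ ∑ j, f j := Finset.sum_nonneg fun j _ => hf0 j
          have hs : ∑ j : Fin n₂, (f j + 1) = (∑ j, f j) + n₂ := by
            rw [Finset.sum_add_distrib]
            simp [Finset.card_univ]
          rw [hs]
          have h1 : (1:ℝ) ≤ n₂ := by exact_mod_cast hn₂
          linarith
        · intro i j t ht
          have hli : l i = 0 := by
            by_contra h
            exact hIne ⟨i, Finset.mem_filter.2 ⟨Finset.mem_univ i,
              lt_of_le_of_ne (hl i) (Ne.symm h)⟩⟩
          rw [hli, zero_mul]
          exact hpos i j
    obtain ⟨g, hfg, hgsum, hgW⟩ := hg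
    obtain ⟨t, hft, htg, htsum⟩ := aux_exists_t f g hfg hfsum hgsum
    have ht0 : ∀ j, 0 ≤ t j := fun j => le_trans (hf0 j) (hft j)
    set c : Fin n₂ → Fin n₁ → ℝ :=
      fun j i => if 0 < t j then W i j / t j else u i with hcdef
    set E : Fin n₂ → Matrix (Fin n₁) (Fin n₂) ℝ :=
      fun j => Matrix.of (fun i j' => if j' = j then c j i else 0) with hEdef
    have hES : ∀ j, E j ∈ S := by
      intro j
      refine ⟨?_, ?_, ?_⟩
      · intro i j'
        simp only [hEdef, hcdef, Matrix.of_apply]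
        split_ifs with h1 h2
        · exact div_nonneg (hpos i j) (le_of_lt h2)
        · exact (hu i).le
        · exact le_refl 0
      · intro i
        have hsum : ∑ j', E j i j' = c j i := by
          simp [hEdef, Finset.sum_ite_eq]
        rw [hsum]
        simp only [hcdef]
        split_ifs with h1
        · constructor
          · rw [le_div_iff₀ h1]
            exact hgW i j (t j) (htg j)
          · rw [div_le_iff₀ h1]
            calc W i j ≤ u i * f j := hfW i j
              _ ≤ u i * t j := mul_le_mul_of_nonneg_left (hft j) (hu i).le
        · exact ⟨hlu i, le_refl _⟩
      · have hfac : E j = Matrix.vecMulVec (c j) (Pi.single j 1) := by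
          ext i j'
          simp only [hEdef, Matrix.of_apply, Matrix.vecMulVec_apply, Pi.single_apply]
          split_ifs <;> ring
        rw [hfac, Matrix.vecMulVec_eq (Fin 1)]
        refine le_trans (Matrix.rank_mul_le_left _ _) ?_
        exact le_trans (Matrix.rank_le_card_width _) (by simp)
    have hWsum : W = ∑ j, t j • E j := by
      ext i j''
      have hrhs : (∑ j, t j • E j) i j'' = ∑ j, t j * E j i j'' := by
        simp [Matrix.sum_apply, Matrix.smul_apply, smul_eq_mul]
      rw [hrhs]
      have hterm : ∀ j, t j * E j i j'' = if j'' = j then t j * c j i else 0 := by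
        intro j
        simp only [hEdef, Matrix.of_apply]
        split_ifs <;> ring
      rw [Finset.sum_congr rfl (fun j _ => hterm j), Finset.sum_ite_eq]
      simp only [Finset.mem_univ, if_true, hcdef]
      split_ifs with h1
      · rw [mul_comm, div_mul_cancel₀ _ (ne_of_gt h1)]
      · have h0 : t j'' = 0 := le_antisymm (not_lt.1 h1) (ht0 j'')
        have hW0 : W i j'' = 0 := by
          have h2 : W i j'' ≤ u i * f j'' := hfW i j''
          have h3 : f j'' ≤ 0 := le_trans (hft j'') (le_of_eq h0)
          have h4 : u i * f j'' ≤ 0 :=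
            mul_nonpos_of_nonneg_of_nonpos (hu i).le h3
          exact le_antisymm (le_trans h2 h4) (hpos i j'')
        rw [hW0, h0, zero_mul]
    rw [hWsum]
    exact (convex_convexHull ℝ S).sum_mem (fun j _ => ht0 j) htsum
      (fun j _ => subset_convexHull ℝ S (hES j))
end

section
/- Let n₁, n₂ be positive integers, l, u ∈ ℝ^{n₁} with 0 ≤ l_i ≤ u_i and 0 < u_i for all i, and scalars L, M ∈ ℝ with 0 ≤ L ≤ M and u_i ≤ M for all i. Define U^row+(l,u,L,M) = { W ∈ ℝ^{n₁×n₂} : W_{ij} ≥ 0 for all i, j; l_i ≤ Σ_{j=1}^{n₂} W_{ij} ≤ u_i for each i; L ≤ Σ_{i=1}^{n₁} Σ_{j=1}^{n₂} W_{ij} ≤ M; rank(W) ≤ 1 }. Then the convex hull of U^row+(l,u,L,M) equals the projection onto W of the polyhedron { (W, t) ∈ ℝ^{n₁×n₂} × ℝ^{n₂} : Σ_{j=1}^{n₂} t_j = 1; t_j ≥ 0 for all j; L t_j ≤ Σ_{i=1}^{n₁} W_{ij} ≤ M t_j for all j; l_i t_j ≤ W_{ij} ≤ u_i t_j for all i,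 j }. -/
/-!
A nonnegative matrix of rank at most one factors as `W i j = r i * t j`, where `r` is the vector
of row sums and `t` lies in the standard simplex (the normalized column sums, or any vertex if
`W = 0`); this `t` certifies that `W` lies in the projection, which is convex. Conversely, if
`(W, t)` is feasible then `W = ∑ j, t j • W⁽ʲ⁾`, where `W⁽ʲ⁾` keeps only the `j`-th column of `W`,
divided by `t j`. For `t j ≠ 0` the matrix `W⁽ʲ⁾` has rank one, row sums `W i j / t j ∈ [l i, u i]`
and total sum `(∑ i, W i j) / t j ∈ [L, M]`, so it lies in `U^row+(l, u, L, M)`.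
-/

open Finset Matrix

namespace Matrix

variable {K m n : Type*} [Field K] [Fintype n]

theorem sum_smul_vecMulVec_col_div_single [DecidableEq n] {W : Matrix m n K} {t : n → K}
    (hW : ∀ i j, t j = 0 → W i j = 0) :
    ∑ j, t j • vecMulVec (fun i => W i j / t j) (Pi.single j 1) = W := by
  ext i j
  by_cases ht : t j = 0 <;> simp [Matrix.sum_apply, vecMulVec_apply, Pi.single_apply, ht, hW,
    mul_div_cancel₀]

variable [Fintype m]

theorem exists_eq_vecMulVec_of_rank_le_one {W : Matrix m n K} (h : W.rank ≤ 1) :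
    ∃ v : m → K, ∃ c : n → K, W = vecMulVec v c := by
  rw [rank_eq_finrank_span_cols, Submodule.finrank_le_one_iff_isPrincipal] at h
  obtain ⟨v, hv⟩ := h.principal
  have hcol (j : n) : ∃ c : K, c • v = W.col j := by
    rw [← Submodule.mem_span_singleton, ← hv]
    exact Submodule.subset_span ⟨j, rfl⟩
  choose c hc using hcol
  refine ⟨v, c, ext fun i j => ?_⟩
  rw [vecMulVec_apply, ← col_apply W j i, ← hc j, Pi.smul_apply, smul_eq_mul, mul_comm]

theorem mul_sum_sum_eq_of_rank_le_one {W : Matrix m n K} (h : W.rank ≤ 1) (i : m) (j : n) :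
    W i j * ∑ i', ∑ j', W i' j' = (∑ j', W i j') * ∑ i', W i' j := by
  obtain ⟨v, c, rfl⟩ := exists_eq_vecMulVec_of_rank_le_one h
  simp only [vecMulVec_apply, ← mul_sum, ← sum_mul]
  ring

end Matrix

section RowBounded

variable {K m n : Type*} [Field K] [LinearOrder K] [IsStrictOrderedRing K] [Fintype m] [Fintype n]

theorem Matrix.exists_mem_stdSimplex_eq_rowSum_mul [Nonempty n] {W : Matrix m n K}
    (hW : ∀ i j, 0 ≤ W i j) (h : W.rank ≤ 1) :
    ∃ t ∈ stdSimplex K n, ∀ i j, W i j = (∑ j', W i j') * t j := by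
  classical
  set s := ∑ i, ∑ j, W i j
  by_cases hs : s = 0
  · have hzero : ∀ i j, W i j = 0 := fun i j => by
      have hrow := (sum_eq_zero_iff_of_nonneg fun i _ => sum_nonneg fun j _ => hW i j).1 hs i
        (mem_univ i)
      exact (sum_eq_zero_iff_of_nonneg fun j _ => hW i j).1 hrow j (mem_univ j)
    exact ⟨Pi.single (Classical.arbitrary n) 1, single_mem_stdSimplex K _, fun i j => by
      simp [hzero]⟩
  · refine ⟨fun j => (∑ i, W i j) / s, ⟨fun j => ?_, ?_⟩, fun i j => ?_⟩
    · exact div_nonneg (sum_nonneg fun i _ => hW i j) (sum_nonneg fun i _ =>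
        sum_nonneg fun j _ => hW i j)
    · rw [← sum_div, sum_comm, div_self hs]
    · rw [mul_div_assoc', eq_div_iff hs, mul_sum_sum_eq_of_rank_le_one h]

/-- The set `U^row+(l, u, L, M)`. -/
def rankOneRowBounded (l u : m → K) (L M : K) : Set (Matrix m n K) :=
  {W | (∀ i j, 0 ≤ W i j) ∧ (∀ i, l i ≤ ∑ j, W i j ∧ ∑ j, W i j ≤ u i) ∧
    (L ≤ ∑ i, ∑ j, W i j ∧ ∑ i, ∑ j, W i j ≤ M) ∧ W.rank ≤ 1}

def rankOneRowBoundedExtended (l u : m → K) (L M : K) : Set (Matrix m n K) :=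
  {W | ∃ t : n → K, (∑ j, t j) = 1 ∧ (∀ j, 0 ≤ t j) ∧
    (∀ j, L * t j ≤ ∑ i, W i j ∧ ∑ i, W i j ≤ M * t j) ∧
    (∀ i j, l i * t j ≤ W i j ∧ W i j ≤ u i * t j)}

variable {l u : m → K} {L M : K}

theorem convex_rankOneRowBoundedExtended :
    Convex K (rankOneRowBoundedExtended l u L M : Set (Matrix m n K)) := by
  rintro W₁ ⟨t₁, ht₁, ht₁0, hcol₁, hent₁⟩ W₂ ⟨t₂, ht₂, ht₂0, hcol₂, hent₂⟩ a b ha hb hab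
  have combine {x₁ x₂ y₁ y₂ : K} (h₁ : x₁ ≤ y₁) (h₂ : x₂ ≤ y₂) : a * x₁ + b * x₂ ≤ a * y₁ + b * y₂ :=
    add_le_add (mul_le_mul_of_nonneg_left h₁ ha) (mul_le_mul_of_nonneg_left h₂ hb)
  have hcol (j : n) : ∑ i, (a • W₁ + b • W₂) i j = a * ∑ i, W₁ i j + b * ∑ i, W₂ i j := by
    simp [sum_add_distrib, mul_sum]
  have hscale (c : K) (j : n) : c * (a * t₁ j + b * t₂ j) = a * (c * t₁ j) + b * (c * t₂ j) := by
    ring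
  refine ⟨fun j => a * t₁ j + b * t₂ j, ?_, fun j => ?_, fun j => ?_, fun i j => ?_⟩
  · rw [sum_add_distrib, ← mul_sum, ← mul_sum, ht₁, ht₂, mul_one, mul_one, hab]
  · exact add_nonneg (mul_nonneg ha (ht₁0 j)) (mul_nonneg hb (ht₂0 j))
  · rw [hcol, hscale, hscale]
    exact ⟨combine (hcol₁ j).1 (hcol₂ j).1, combine (hcol₁ j).2 (hcol₂ j).2⟩
  · rw [Matrix.add_apply, Matrix.smul_apply, Matrix.smul_apply, smul_eq_mul, smul_eq_mul,
      hscale, hscale]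
    exact ⟨combine (hent₁ i j).1 (hent₂ i j).1, combine (hent₁ i j).2 (hent₂ i j).2⟩

theorem rankOneRowBounded_subset_extended [Nonempty n] :
    (rankOneRowBounded l u L M : Set (Matrix m n K)) ⊆ rankOneRowBoundedExtended l u L M := by
  rintro W ⟨hW, hrow, ⟨hL, hM⟩, hrank⟩
  obtain ⟨t, ⟨ht0, ht⟩, hWt⟩ := exists_mem_stdSimplex_eq_rowSum_mul hW hrank
  have hcol (j : n) : ∑ i, W i j = (∑ i, ∑ j, W i j) * t j := by
    simp only [hWt _ j, sum_mul]
  refine ⟨t, ht, ht0, fun j => ?_, fun i j => ?_⟩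
  · rw [hcol]
    exact ⟨mul_le_mul_of_nonneg_right hL (ht0 j), mul_le_mul_of_nonneg_right hM (ht0 j)⟩
  · rw [hWt i j]
    exact ⟨mul_le_mul_of_nonneg_right (hrow i).1 (ht0 j),
      mul_le_mul_of_nonneg_right (hrow i).2 (ht0 j)⟩

theorem vecMulVec_single_mem_rankOneRowBounded [DecidableEq n] (hl : ∀ i, 0 ≤ l i) {v : m → K}
    (hv : ∀ i, l i ≤ v i ∧ v i ≤ u i) (hsum : L ≤ ∑ i, v i ∧ ∑ i, v i ≤ M) (j : n) :
    vecMulVec v (Pi.single j 1) ∈ rankOneRowBounded l u L M := by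
  have hrow (i : m) : ∑ j', vecMulVec v (Pi.single j 1) i j' = v i := by
    simp [vecMulVec_apply, Pi.single_apply]
  refine ⟨fun i j' => ?_, fun i => by rw [hrow]; exact hv i, by simp only [hrow]; exact hsum,
    rank_vecMulVec_le _ _⟩
  rw [vecMulVec_apply]
  exact mul_nonneg ((hl i).trans (hv i).1) (by by_cases h : j' = j <;> simp [h])

theorem rankOneRowBoundedExtended_subset_convexHull (hl : ∀ i, 0 ≤ l i) :
    (rankOneRowBoundedExtended l u L M : Set (Matrix m n K)) ⊆
      convexHull K (rankOneRowBounded l u L M) := by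
  classical
  rintro W ⟨t, ht, ht0, hcol, hent⟩
  have hW0 (i : m) (j : n) (htj : t j = 0) : W i j = 0 :=
    le_antisymm (by simpa [htj] using (hent i j).2) (by simpa [htj] using (hent i j).1)
  rw [← sum_smul_vecMulVec_col_div_single hW0, ← finsum_eq_sum_of_fintype]
  refine (convex_convexHull K _).finsum_mem ht0 (by rwa [finsum_eq_sum_of_fintype])
    fun j htj => subset_convexHull K _ ?_
  have htj : 0 < t j := (ht0 j).lt_of_ne' htj
  refine vecMulVec_single_mem_rankOneRowBounded hl (fun i => ?_) ?_ j
  · exact ⟨(le_div_iff₀ htj).2 (hent i j).1, (div_le_iff₀ htj).2 (hent i j).2⟩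
  · rw [← sum_div]
    exact ⟨(le_div_iff₀ htj).2 (hcol j).1, (div_le_iff₀ htj).2 (hcol j).2⟩

theorem convexHull_rankOneRowBounded [Nonempty n] (hl : ∀ i, 0 ≤ l i) :
    convexHull K (rankOneRowBounded l u L M : Set (Matrix m n K)) =
      rankOneRowBoundedExtended l u L M :=
  (convexHull_min rankOneRowBounded_subset_extended convex_rankOneRowBoundedExtended).antisymm
    (rankOneRowBoundedExtended_subset_convexHull hl)

end RowBounded

theorem statement14_general (n₁ n₂ : ℕ) (hn₂ : 0 < n₂)
    (l u : Fin n₁ → ℝ) (L M : ℝ)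
    (hl : ∀ i, 0 ≤ l i) :
    convexHull ℝ
      {W : Matrix (Fin n₁) (Fin n₂) ℝ |
        (∀ i j, 0 ≤ W i j) ∧ (∀ i, l i ≤ ∑ j, W i j ∧ ∑ j, W i j ≤ u i) ∧
        (L ≤ ∑ i, ∑ j, W i j ∧ ∑ i, ∑ j, W i j ≤ M) ∧ W.rank ≤ 1} =
    {W : Matrix (Fin n₁) (Fin n₂) ℝ | ∃ t : Fin n₂ → ℝ,
      (∑ j, t j) = 1 ∧ (∀ j, 0 ≤ t j) ∧
      (∀ j, L * t j ≤ ∑ i, W i j ∧ ∑ i, W i j ≤ M * t j) ∧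
      (∀ i j, l i * t j ≤ W i j ∧ W i j ≤ u i * t j)} :=
  have : Nonempty (Fin n₂) := ⟨⟨0, hn₂⟩⟩
  convexHull_rankOneRowBounded hl

/-- The convex hull of the row-bounded rank-1 set with an additional bound on the
total entry sum, U^row+(l,u,L,M), equals the projection of the extended
formulation onto the W variables. -/
theorem statement14 (n₁ n₂ : ℕ) (hn₁ : 0 < n₁) (hn₂ : 0 < n₂)
    (l u : Fin n₁ → ℝ) (L M : ℝ)
    (hl : ∀ i, 0 ≤ l i) (hlu : ∀ i, l i ≤ u i) (hu : ∀ i, 0 < u i)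
    (hL : 0 ≤ L) (hLM : L ≤ M) (huM : ∀ i, u i ≤ M) :
    convexHull ℝ
      {W : Matrix (Fin n₁) (Fin n₂) ℝ |
        (∀ i j, 0 ≤ W i j) ∧ (∀ i, l i ≤ ∑ j, W i j ∧ ∑ j, W i j ≤ u i) ∧
        (L ≤ ∑ i, ∑ j, W i j ∧ ∑ i, ∑ j, W i j ≤ M) ∧ W.rank ≤ 1} =
    {W : Matrix (Fin n₁) (Fin n₂) ℝ | ∃ t : Fin n₂ → ℝ,
      (∑ j, t j) = 1 ∧ (∀ j, 0 ≤ t j) ∧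
      (∀ j, L * t j ≤ ∑ i, W i j ∧ ∑ i, W i j ≤ M * t j) ∧
      (∀ i j, l i * t j ≤ W i j ∧ W i j ≤ u i * t j)} :=
  statement14_general n₁ n₂ hn₂ l u L M hl
end

section
/- Let S be the set of 2×2 real matrices W with W_{ij} ≥ 0 for all i, j, rank(W) ≤ 1, row sums satisfying W₁₁ + W₁₂ ≤ 1 and W₂₁ + W₂₂ = 1, and column sums satisfying W₁₁ + W₂₁ = 1 and W₁₂ + W₂₂ ≤ 1. Then for every a ∈ [0, 1/2], the matrix M(a) with entries M(a)₁₁ = a, M(a)₁₂ = a²/(1−a), M(a)₂₁ = 1−a, M(a)₂₂ = a belongs to S and is an extreme point of S. -/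
/-- The intersection of the row-bounded rank-1 set with row bounds l = (0,1),
u = (1,1) and the column-bounded rank-1 set with column bounds l' = (1,0),
u' = (1,1), in the space of 2×2 real matrices. -/
def rowColSet : Set (Matrix (Fin 2) (Fin 2) ℝ) :=
  {W | (∀ i j, 0 ≤ W i j) ∧ W.rank ≤ 1 ∧
    W 0 0 + W 0 1 ≤ 1 ∧ W 1 0 + W 1 1 = 1 ∧
    W 0 0 + W 1 0 = 1 ∧ W 0 1 + W 1 1 ≤ 1}

private lemma rank_le_one_of_row_smul (A : Matrix (Fin 2) (Fin 2) ℝ) (c : ℝ)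
    (h : A 0 = c • A 1) : A.rank ≤ 1 := by
  rw [Matrix.rank_eq_finrank_span_row]
  have hsub : Set.range A ⊆ (Submodule.span ℝ {A 1} : Submodule ℝ (Fin 2 → ℝ)) := by
    rintro _ ⟨i, rfl⟩
    fin_cases i
    · show A 0 ∈ _; rw [h]; exact Submodule.smul_mem _ _ (Submodule.subset_span rfl)
    · exact Submodule.subset_span (show A 1 ∈ _ from rfl)
  calc Module.finrank ℝ (Submodule.span ℝ (Set.range A))
      ≤ Module.finrank ℝ (Submodule.span ℝ {A 1}) :=
        Submodule.finrank_mono (Submodule.span_le.mpr hsub)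
    _ ≤ 1 := by simpa using finrank_span_le_card ({A 1} : Set (Fin 2 → ℝ))

private lemma det_eq_zero_of_rank_le_one (A : Matrix (Fin 2) (Fin 2) ℝ)
    (h : A.rank ≤ 1) : A.det = 0 := by
  by_contra hd
  have : A.rank = 2 := by
    have := Matrix.rank_of_isUnit A
      ((Matrix.isUnit_iff_isUnit_det A).mpr (isUnit_iff_ne_zero.mpr hd))
    simpa using this
  omega

/-- Every element of `rowColSet` is determined by its (0,0) entry. -/
private lemma char_of_mem {W : Matrix (Fin 2) (Fin 2) ℝ} (hW : W ∈ rowColSet) :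
    (0 ≤ W 0 0 ∧ W 0 0 ≤ 1 / 2) ∧ W 1 1 = W 0 0 ∧ W 1 0 = 1 - W 0 0 ∧
      W 0 1 = (W 0 0) ^ 2 / (1 - W 0 0) := by
  obtain ⟨hpos, hrank, hr1, hr2, hc1, hc2⟩ := hW
  set t := W 0 0 with ht
  have h11 : W 1 1 = t := by linarith
  have h10 : W 1 0 = 1 - t := by linarith
  have hdet : W.det = 0 := det_eq_zero_of_rank_le_one W hrank
  rw [Matrix.det_fin_two] at hdet
  have hdet' : t * t - W 0 1 * (1 - t) = 0 := by rw [h11, h10] at hdet; linarith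
  have ht1 : t < 1 := by
    rcases lt_or_ge t 1 with h | h
    · exact h
    · exfalso
      have h10' : (0:ℝ) ≤ 1 - t := h10 ▸ hpos 1 0
      have : t = 1 := le_antisymm (by linarith) h
      rw [this] at hdet'
      have h01 := hpos 0 1
      nlinarith
  have h1t : (0:ℝ) < 1 - t := by linarith
  have h01 : W 0 1 = t ^ 2 / (1 - t) := by
    rw [eq_div_iff h1t.ne']
    nlinarith
  have ht0 : 0 ≤ t := hpos 0 0
  have hhalf : t ≤ 1 / 2 := by
    rw [h01] at hr1
    have h' : t ^ 2 / (1 - t) ≤ 1 - t := by linarith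
    rw [div_le_iff₀ h1t] at h'
    nlinarith
  exact ⟨⟨ht0, hhalf⟩, h11, h10, h01⟩

private lemma M_mem {a : ℝ} (h0 : 0 ≤ a) (h2 : a ≤ 1 / 2) :
    (Matrix.of ![![a, a ^ 2 / (1 - a)], ![1 - a, a]]) ∈ rowColSet := by
  have h1a : (0:ℝ) < 1 - a := by linarith
  set M := (Matrix.of ![![a, a ^ 2 / (1 - a)], ![1 - a, a]]) with hM
  have e00 : M 0 0 = a := rfl
  have e01 : M 0 1 = a ^ 2 / (1 - a) := rfl
  have e10 : M 1 0 = 1 - a := rfl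
  have e11 : M 1 1 = a := rfl
  have hrow : M 0 = (a / (1 - a)) • M 1 := by
    funext j
    fin_cases j
    · show M 0 0 = (a / (1 - a)) * M 1 0
      rw [e00, e10]; field_simp
    · show M 0 1 = (a / (1 - a)) * M 1 1
      rw [e01, e11]; field_simp
  have hkey : a ^ 2 / (1 - a) ≤ a := by
    rw [div_le_iff₀ h1a]; nlinarith
  refine ⟨?_, rank_le_one_of_row_smul M _ hrow, ?_, ?_, ?_, ?_⟩
  · intro i j
    fin_cases i <;> fin_cases j
    · show (0:ℝ) ≤ a; linarith
    · show (0:ℝ) ≤ a ^ 2 / (1 - a); positivity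
    · show (0:ℝ) ≤ 1 - a; linarith
    · show (0:ℝ) ≤ a; linarith
  · show a + a ^ 2 / (1 - a) ≤ 1; linarith
  · show 1 - a + a = 1; ring
  · show a + (1 - a) = 1; ring
  · show a ^ 2 / (1 - a) + a ≤ 1; linarith

/-- For every a ∈ [0, 1/2], the matrix [[a, a²/(1−a)], [1−a, a]] belongs to the
set `rowColSet` and is an extreme point of it. -/
theorem statement16 :
    ∀ a ∈ Set.Icc (0 : ℝ) (1 / 2),
      (Matrix.of ![![a, a ^ 2 / (1 - a)], ![1 - a, a]]) ∈ rowColSet ∧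
      (Matrix.of ![![a, a ^ 2 / (1 - a)], ![1 - a, a]]) ∈
        Set.extremePoints ℝ rowColSet := by
  rintro a ⟨h0, h2⟩
  have hmem := M_mem h0 h2
  refine ⟨hmem, hmem, ?_⟩
  rintro y hy z hz ⟨p, q, hp, hq, hpq, hsum⟩
  obtain ⟨⟨hy0, hy2⟩, hy11, hy10, hy01⟩ := char_of_mem hy
  obtain ⟨⟨hz0, hz2⟩, hz11, hz10, hz01⟩ := char_of_mem hz
  set b := y 0 0
  set c := z 0 0
  have hb1 : (0:ℝ) < 1 - b := by linarith
  have hc1 : (0:ℝ) < 1 - c := by linarith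
  have ha1 : (0:ℝ) < 1 - a := by linarith
  have h00 : p * b + q * c = a := by
    have := congrFun (congrFun hsum 0) 0
    simpa using this
  have h01 : p * (b ^ 2 / (1 - b)) + q * (c ^ 2 / (1 - c)) = a ^ 2 / (1 - a) := by
    have := congrFun (congrFun hsum 0) 1
    simp only [Matrix.add_apply, Matrix.smul_apply, smul_eq_mul] at this
    rw [hy01, hz01] at this
    simpa using this
  have hbc : b = c := by
    have key : p * q * (b - c) ^ 2 = 0 := by
      have ha : a = p * b + q * c := h00.symm
      rw [ha] at h01
      have hq' : q = 1 - p := by linarith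
      rw [hq'] at h01 ⊢
      have hb' : (1:ℝ) - b ≠ 0 := hb1.ne'
      have hc' : (1:ℝ) - c ≠ 0 := hc1.ne'
      have ha' : (1:ℝ) - (p * b + (1 - p) * c) ≠ 0 := by rw [hq'] at ha; rw [← ha]; exact ha1.ne'
      field_simp at h01
      linear_combination h01
    have h2 : (b - c) ^ 2 = 0 := by
      rcases mul_eq_zero.mp key with h | h
      · exact absurd h (by positivity)
      · exact h
    have := pow_eq_zero_iff (n := 2) (by norm_num) |>.mp h2
    linarith
  have hba : b = a := by rw [hbc] at h00 ⊢; nlinarith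
  have hca : c = a := hbc ▸ hba
  refine (?_ : y = Matrix.of ![![a, a ^ 2 / (1 - a)], ![1 - a, a]] ∧
    z = Matrix.of ![![a, a ^ 2 / (1 - a)], ![1 - a, a]]).1
  constructor
  · funext i j
    fin_cases i <;> fin_cases j <;>
      simp only [Matrix.of_apply, Matrix.cons_val', Matrix.cons_val_zero, Matrix.cons_val_one,
        Matrix.head_cons, Matrix.empty_val', Matrix.cons_val_fin_one, Matrix.head_fin_const]
    · exact hba
    · show y 0 1 = a ^ 2 / (1 - a); rw [hy01, hba]
    · show y 1 0 = 1 - a; rw [hy10, hba]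
    · show y 1 1 = a; rw [hy11, hba]
  · funext i j
    fin_cases i <;> fin_cases j <;>
      simp only [Matrix.of_apply, Matrix.cons_val', Matrix.cons_val_zero, Matrix.cons_val_one,
        Matrix.head_cons, Matrix.empty_val', Matrix.cons_val_fin_one, Matrix.head_fin_const]
    · exact hca
    · show z 0 1 = a ^ 2 / (1 - a); rw [hz01, hca]
    · show z 1 0 = 1 - a; rw [hz10, hca]
    · show z 1 1 = a; rw [hz11, hca]
end

section
/- Let S be the set of 2×2 real matrices W with W_{ij} ≥ 0 for all i, j, rank(W) ≤ 1, row sums satisfying W₁₁ + W₁₂ ≤ 1 and W₂₁ + W₂₂ = 1, and column sums satisfying W₁₁ + W₂₁ = 1 and W₁₂ + W₂₂ ≤ 1. Then the convex hull of S is not a polytope: there is no finite set F ⊆ ℝ^{2×2} such that the convex hull of S equals the convex hull of F. -/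
noncomputable def gmat (a : ℝ) : Matrix (Fin 2) (Fin 2) ℝ :=
  !![a, a^2/(1-a); 1-a, a]

lemma gmat_rank {a : ℝ} (h : a < 1) : (gmat a).rank ≤ 1 := by
  have h1 : (1:ℝ) - a ≠ 0 := by linarith
  have : gmat a = (!![a/(1-a); 1] : Matrix (Fin 2) (Fin 1) ℝ) *
      (!![1-a, a] : Matrix (Fin 1) (Fin 2) ℝ) := by
    ext i j
    fin_cases i <;> fin_cases j <;> simp [gmat, Matrix.mul_apply] <;> field_simp <;> ring
  rw [this]
  calc _ ≤ (!![1-a, a] : Matrix (Fin 1) (Fin 2) ℝ).rank := Matrix.rank_mul_le_right _ _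
    _ ≤ Fintype.card (Fin 1) := Matrix.rank_le_card_height _
    _ = 1 := by simp

lemma sum_id {a : ℝ} (h1 : (0:ℝ) < 1 - a) : a + a^2/(1-a) = a/(1-a) := by
  field_simp; ring

lemma gmat_mem {a : ℝ} (h0 : 0 ≤ a) (h2 : a ≤ 1/2) : gmat a ∈ rowColSet := by
  have h1 : (0:ℝ) < 1 - a := by linarith
  have hrow : a + a^2/(1-a) ≤ 1 := by
    rw [sum_id h1, div_le_one h1]; linarith
  refine ⟨?_, gmat_rank (by linarith), ?_, ?_, ?_, ?_⟩
  · intro i j; fin_cases i <;> fin_cases j <;> simp [gmat] <;> first | linarith | positivity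
  · simpa [gmat] using hrow
  · simp [gmat]
  · simp [gmat]
  · simp [gmat]; linarith [hrow]

lemma mem_char {W : Matrix (Fin 2) (Fin 2) ℝ} (hW : W ∈ rowColSet) :
    W = gmat (W 0 0) ∧ 0 ≤ W 0 0 ∧ W 0 0 ≤ 1/2 := by
  obtain ⟨hpos, hrk, hr1, hr2, hc1, hc2⟩ := hW
  set a := W 0 0 with ha
  have h10 : W 1 0 = 1 - a := by linarith
  have h11 : W 1 1 = a := by rw [h10] at hr2; linarith
  have ha0 : 0 ≤ a := hpos 0 0
  have ha1 : a ≤ 1 := by have := hpos 1 0; linarith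
  have hdet : W.det = 0 := by
    by_contra hd
    have : IsUnit W := W.isUnit_iff_isUnit_det.2 (isUnit_iff_ne_zero.2 hd)
    have := Matrix.rank_of_isUnit W this
    rw [this] at hrk
    simp at hrk
  rw [Matrix.det_fin_two, h10, h11] at hdet
  have halt : a < 1 := by
    rcases lt_or_eq_of_le ha1 with h | h
    · exact h
    · exfalso; rw [← h] at hdet; nlinarith
  have h1 : (0:ℝ) < 1 - a := by linarith
  have h01 : W 0 1 = a^2/(1-a) := by
    rw [eq_div_iff (ne_of_gt h1)]; nlinarith
  have ha2 : a ≤ 1/2 := by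
    have : a + a^2/(1-a) ≤ 1 := by rw [← h01]; exact hr1
    rw [sum_id h1, div_le_one h1] at this
    linarith
  refine ⟨?_, ha0, ha2⟩
  ext i j
  fin_cases i <;> fin_cases j <;> simp [gmat, h01, h10, h11] <;> exact ha.symm

lemma strict_gap {a b : ℝ} (ha : a < 1) (hb0 : 0 ≤ b) (hb : b ≤ 1/2) (hne : b ≠ a) :
    a^2/(1-a) - (2*a - a^2)/(1-a)^2 * a < b^2/(1-b) - (2*a - a^2)/(1-a)^2 * b := by
  have h1 : (0:ℝ) < 1 - a := by linarith
  have h2 : (0:ℝ) < 1 - b := by linarith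
  have key : b^2/(1-b) - (2*a - a^2)/(1-a)^2 * b - (a^2/(1-a) - (2*a - a^2)/(1-a)^2 * a)
      = (b-a)^2 / ((1-b)*(1-a)^2) := by
    field_simp
    ring
  have h3 : (0:ℝ) < (b-a)^2 := by
    rcases (sub_ne_zero.2 hne).lt_or_gt with h | h <;> nlinarith
  have h4 : (0:ℝ) < (b-a)^2 / ((1-b)*(1-a)^2) := div_pos h3 (by positivity)
  linarith

noncomputable def L (m : ℝ) : Matrix (Fin 2) (Fin 2) ℝ →ₗ[ℝ] ℝ where
  toFun W := W 0 1 - m * W 0 0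
  map_add' x y := by simp [Matrix.add_apply]; ring
  map_smul' c x := by simp [Matrix.smul_apply]; ring

lemma key_mem {a : ℝ} (ha0 : 0 ≤ a) (ha2 : a ≤ 1/2)
    {F : Finset (Matrix (Fin 2) (Fin 2) ℝ)}
    (hF : convexHull ℝ rowColSet = convexHull ℝ (F : Set (Matrix (Fin 2) (Fin 2) ℝ))) :
    gmat a ∈ F := by
  have ha1 : a < 1 := by linarith
  set m : ℝ := (2*a - a^2)/(1-a)^2 with hm
  set c : ℝ := a^2/(1-a) - m * a with hc
  have hLg : L m (gmat a) = c := by simp [L, gmat, hc]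
  -- every element of rowColSet has L value ≥ c, strict unless equal to gmat a
  have hS : ∀ W ∈ rowColSet, c ≤ L m W ∧ (W ≠ gmat a → c < L m W) := by
    intro W hW
    obtain ⟨hWeq, hb0, hb2⟩ := mem_char hW
    have hLW : L m W = W 0 1 - m * W 0 0 := rfl
    rcases eq_or_ne (W 0 0) a with h | h
    · have heq : W = gmat a := by rw [hWeq, h]
      exact ⟨by rw [heq, hLg], fun hne => absurd heq hne⟩
    · have hgap := strict_gap ha1 hb0 hb2 h
      have h01 : W 0 1 = (W 0 0)^2/(1 - W 0 0) := by
        conv_lhs => rw [hWeq]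
        simp [gmat]
      have : c < L m W := by rw [hLW, h01]; rw [hc] at *; linarith
      exact ⟨le_of_lt this, fun _ => this⟩
  -- the set T = {gmat a} ∪ {L > c} is convex and contains rowColSet
  set T : Set (Matrix (Fin 2) (Fin 2) ℝ) := {gmat a} ∪ {x | c < L m x} with hTdef
  have hLT : ∀ x ∈ T, c ≤ L m x := by
    rintro x (h | h)
    · rw [Set.mem_singleton_iff] at h; rw [h, hLg]
    · exact le_of_lt h
  have hTconv : Convex ℝ T := by
    intro x hx y hy s t hs ht hst
    rcases eq_or_lt_of_le hs with hs0 | hs0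
    · have : t = 1 := by linarith
      rw [← hs0, this, zero_smul, one_smul, zero_add]; exact hy
    rcases eq_or_lt_of_le ht with ht0 | ht0
    · have : s = 1 := by linarith
      rw [← ht0, this, zero_smul, one_smul, add_zero]; exact hx
    rcases hx with hx1 | hx1
    · rcases hy with hy1 | hy1
      · left
        rw [Set.mem_singleton_iff] at hx1 hy1
        rw [hx1, hy1, ← add_smul, hst, one_smul]
        rfl
      · right
        rw [Set.mem_singleton_iff] at hx1
        subst hx1
        have heq : L m (s • gmat a + t • y) = s * L m (gmat a) + t * L m y := by
          simp [map_add, map_smul]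
        simp only [Set.mem_setOf_eq] at hy1 ⊢
        rw [heq, hLg]
        have hstc : s * c + t * c = c := by rw [← add_mul, hst, one_mul]
        linarith [mul_lt_mul_of_pos_left hy1 ht0]
    · right
      have hxge : c ≤ L m x := le_of_lt hx1
      have hyge : c ≤ L m y := hLT y hy
      have heq : L m (s • x + t • y) = s * L m x + t * L m y := by
        simp [map_add, map_smul]
      simp only [Set.mem_setOf_eq]
      rw [heq]
      have hstc : s * c + t * c = c := by rw [← add_mul, hst, one_mul]
      linarith [mul_lt_mul_of_pos_left hx1 hs0, mul_le_mul_of_nonneg_left hyge ht]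
  have hT : convexHull ℝ rowColSet ⊆ T := by
    apply convexHull_min _ hTconv
    intro W hW
    rcases eq_or_ne W (gmat a) with h | h
    · left; exact h
    · right; exact (hS W hW).2 h
  -- gmat a ∈ hull F; write as convex combination
  have hmemF : gmat a ∈ convexHull ℝ (F : Set (Matrix (Fin 2) (Fin 2) ℝ)) := by
    rw [← hF]; exact subset_convexHull ℝ _ (gmat_mem ha0 ha2)
  rw [Finset.convexHull_eq] at hmemF
  obtain ⟨w, hw0, hw1, hwc⟩ := hmemF
  -- all elements of F are in T
  have hFT : ∀ y ∈ F, y ∈ T := by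
    intro y hy
    apply hT
    rw [hF]
    exact subset_convexHull ℝ _ hy
  have hFc : ∀ y ∈ F, c ≤ L m y := fun y hy => hLT y (hFT y hy)
  -- centerMass equality
  have hcm : F.centerMass w id = ∑ y ∈ F, w y • y := Finset.centerMass_eq_of_sum_1 _ _ hw1
  have hLsum : ∑ y ∈ F, w y * L m y = c := by
    have : L m (gmat a) = L m (∑ y ∈ F, w y • y) := by rw [← hcm, hwc]
    rw [hLg] at this
    rw [this, map_sum]
    simp [map_smul]
  -- equality case of sum inequality
  have hle : ∀ y ∈ F, w y * c ≤ w y * L m y := fun y hy =>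
    mul_le_mul_of_nonneg_left (hFc y hy) (hw0 y hy)
  have hsum_eq : ∑ y ∈ F, w y * c = ∑ y ∈ F, w y * L m y := by
    rw [hLsum, ← Finset.sum_mul, hw1, one_mul]
  have hall : ∀ y ∈ F, w y * c = w y * L m y :=
    (Finset.sum_eq_sum_iff_of_le hle).1 hsum_eq
  -- there is a y with w y > 0
  have : ∃ y ∈ F, 0 < w y := by
    by_contra hcon
    push_neg at hcon
    have : ∑ y ∈ F, w y = 0 := Finset.sum_eq_zero fun y hy =>
      le_antisymm (hcon y hy) (hw0 y hy)
    rw [hw1] at this; norm_num at this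
  obtain ⟨y, hyF, hwy⟩ := this
  have hLy : L m y = c := by
    have := hall y hyF
    exact (mul_left_cancel₀ (ne_of_gt hwy) this).symm
  have hy_eq : y = gmat a := by
    rcases hFT y hyF with h | h
    · exact h
    · exfalso
      simp only [Set.mem_setOf_eq] at h
      rw [hLy] at h
      exact lt_irrefl _ h
  rw [← hy_eq]; exact hyF

/-- The convex hull of `rowColSet` is not a polytope. -/
theorem statement17 :
    ¬ ∃ F : Finset (Matrix (Fin 2) (Fin 2) ℝ),
      convexHull ℝ rowColSet = convexHull ℝ (F : Set (Matrix (Fin 2) (Fin 2) ℝ)) := by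
  rintro ⟨F, hF⟩
  have hsub : gmat '' Set.Ioo (0:ℝ) (1/2) ⊆ (F : Set (Matrix (Fin 2) (Fin 2) ℝ)) := by
    rintro _ ⟨a, ⟨ha0, ha2⟩, rfl⟩
    exact key_mem (le_of_lt ha0) (le_of_lt ha2) hF
  have hinj : Set.InjOn gmat (Set.Ioo (0:ℝ) (1/2)) := by
    intro a _ b _ hab
    have : gmat a 0 0 = gmat b 0 0 := by rw [hab]
    simpa [gmat] using this
  have hinf : (gmat '' Set.Ioo (0:ℝ) (1/2)).Infinite :=
    (Set.Ioo_infinite (by norm_num)).image hinj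
  exact hinf (F.finite_toSet.subset hsub)
end

section
/- Let n₁, n₂, H be positive integers and l, u ∈ ℝ^{n₁} with 0 ≤ l_i ≤ u_i for all i. Let W ∈ ℝ^{n₁×n₂} satisfy W_{ij} ≥ 0 for all i, j, rank(W) ≤ 1, and l_i ≤ Σ_{j=1}^{n₂} W_{ij} ≤ u_i for each i. Then there exist z ∈ {0,1}^{n₂×H}, γ ∈ ℝ^{n₂} with 0 ≤ γ_j ≤ 2^{−H} for all j, α ∈ ℝ^{n₁×n₂×H}, and β ∈ ℝ^{n₁×n₂} such that for all i ∈ {1,…,n₁}, j ∈ {1,…,n₂}, h ∈ {1,…,H}: (a) W_{ij} = Σ_{h=1}^{H} 2^{−h} α_{ijh} + β_{ij}; (b) l_i z_{jh} ≤ α_{ijh} ≤ u_i z_{jh}; (c) u_i z_{jh} + Σ_{j'=1}^{n₂} W_{ij'} − u_i ≤ α_{ijh} ≤ l_i z_{jh} + Σ_{j'=1}^{n₂} W_{ij'} − l_i; (d) l_i γ_j ≤ β_{ij} ≤ u_i γ_j; (e) u_i γ_j + 2^{−H}(Σ_{j'=1}^{n₂} W_{ij'} − u_i) ≤ β_{ij}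 ≤ l_i γ_j + 2^{−H}(Σ_{j'=1}^{n₂} W_{ij'} − l_i). -/
/-!
Row sums `sᵢ = ∑ⱼ Wᵢⱼ` of a nonnegative rank-one matrix factor it as `Wᵢⱼ = sᵢ tⱼ` with column
ratios `tⱼ ∈ [0, 1]`. Expanding each `tⱼ` in binary to `H` digits `z_{jh}` with remainder
`γⱼ ∈ [0, 2⁻ᴴ]` and taking the exact products `α_{ijh} = sᵢ z_{jh}`, `β_{ij} = sᵢ γⱼ`, all
constraints hold because a product `x y` with `x ∈ [l, u]`, `y ∈ [0, c]` lies in its McCormick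
envelope.
-/

open Matrix

theorem Matrix.exists_eq_vecMulVec_of_rank_le_one_s18 {K m n : Type*} [Field K] [Finite m] [Fintype n]
    {A : Matrix m n K} (hA : A.rank ≤ 1) : ∃ (v : m → K) (a : n → K), A = vecMulVec v a := by
  rw [rank_eq_finrank_span_cols, Submodule.finrank_le_one_iff_isPrincipal] at hA
  obtain ⟨v, hv⟩ := hA
  have hcol : ∀ j, ∃ c : K, c • v = A.col j := fun j =>
    Submodule.mem_span_singleton.1 (hv ▸ Submodule.subset_span ⟨j, rfl⟩)
  choose a ha using hcol
  refine ⟨v, a, ext fun i j => ?_⟩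
  rw [vecMulVec_apply, mul_comm, ← smul_eq_mul, ← Pi.smul_apply, ha j, col_apply]

theorem Matrix.vecMulVec_mul_sum_comm {R m n : Type*} [CommSemiring R] [Fintype n]
    (v : m → R) (a : n → R) (i i₀ : m) (j : n) :
    vecMulVec v a i j * ∑ j', vecMulVec v a i₀ j' =
      vecMulVec v a i₀ j * ∑ j', vecMulVec v a i j' := by
  simp only [vecMulVec_apply, Finset.mul_sum]
  exact Finset.sum_congr rfl fun _ _ => by ring

theorem Matrix.exists_eq_rowSum_mul_of_rank_le_one {K m n : Type*} [Field K] [LinearOrder K]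
    [IsStrictOrderedRing K] [Finite m] [Fintype n] {W : Matrix m n K} (hW : ∀ i j, 0 ≤ W i j)
    (hrank : W.rank ≤ 1) :
    ∃ t : n → K, (∀ j, t j ∈ Set.Icc 0 1) ∧ ∀ i j, W i j = (∑ j', W i j') * t j := by
  by_cases hzero : ∀ i, ∑ j, W i j = 0
  · refine ⟨0, fun _ => ⟨le_rfl, zero_le_one⟩, fun i j => ?_⟩
    rw [hzero i, zero_mul]
    exact (Finset.sum_eq_zero_iff_of_nonneg fun j _ => hW i j).1 (hzero i) j (Finset.mem_univ j)
  obtain ⟨i₀, hi₀⟩ := not_forall.1 hzero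
  have hpos : 0 < ∑ j, W i₀ j := (Finset.sum_nonneg fun j _ => hW i₀ j).lt_of_ne' hi₀
  refine ⟨fun j => W i₀ j / ∑ j', W i₀ j', fun j => ⟨div_nonneg (hW i₀ j) hpos.le, ?_⟩,
    fun i j => ?_⟩
  · exact div_le_one_of_le₀ (Finset.single_le_sum (fun j _ => hW i₀ j) (Finset.mem_univ j))
      hpos.le
  · obtain ⟨v, a, rfl⟩ := exists_eq_vecMulVec_of_rank_le_one_s18 hrank
    rw [mul_div_assoc', eq_div_iff hi₀, mul_comm (∑ j', _), vecMulVec_mul_sum_comm]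

theorem exists_binary_digits (H : ℕ) {t : ℝ} (ht : t ∈ Set.Icc 0 1) :
    ∃ (z : Fin H → ℝ) (γ : ℝ), (∀ h, z h = 0 ∨ z h = 1) ∧ γ ∈ Set.Icc 0 ((2 : ℝ)⁻¹ ^ H) ∧
      t = (∑ h, (2 : ℝ)⁻¹ ^ (h.val + 1) * z h) + γ := by
  induction H generalizing t with
  | zero => exact ⟨finZeroElim, t, finZeroElim, by simpa using ht, by simp⟩
  | succ H ih =>
    obtain ⟨d, hd, hd0, hd1⟩ : ∃ d : ℝ, (d = 0 ∨ d = 1) ∧ 0 ≤ 2 * t - d ∧ 2 * t - d ≤ 1 := by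
      by_cases h : t ≤ 2⁻¹
      · exact ⟨0, .inl rfl, by linarith [ht.1], by linarith⟩
      · exact ⟨1, .inr rfl, by linarith, by linarith [ht.2]⟩
    obtain ⟨z, γ, hz, ⟨hγ0, hγ1⟩, heq⟩ := ih ⟨hd0, hd1⟩
    refine ⟨Fin.cons d z, γ / 2, Fin.cases hd hz, ⟨by positivity, ?_⟩, ?_⟩
    · rw [pow_succ]
      linarith
    · have hshift : ∑ h : Fin H, (2 : ℝ)⁻¹ ^ (h.val + 1 + 1) * z h
          = 2⁻¹ * ∑ h : Fin H, (2 : ℝ)⁻¹ ^ (h.val + 1) * z h := by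
        rw [Finset.mul_sum]
        exact Finset.sum_congr rfl fun _ _ => by ring
      rw [Fin.sum_univ_succ]
      simp only [Fin.cons_zero, Fin.cons_succ, Fin.val_succ, Fin.val_zero, hshift]
      linarith

theorem mul_mem_mcCormick {R : Type*} [CommRing R] [LinearOrder R] [IsStrictOrderedRing R]
    {l u c x y : R} (hx : x ∈ Set.Icc l u) (hy : y ∈ Set.Icc 0 c) :
    (l * y ≤ x * y ∧ x * y ≤ u * y) ∧
      (u * y + c * (x - u) ≤ x * y ∧ x * y ≤ l * y + c * (x - l)) := by
  obtain ⟨hlx, hxu⟩ := hx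
  obtain ⟨hy0, hyc⟩ := hy
  refine ⟨⟨by gcongr, by gcongr⟩, ⟨?_, ?_⟩⟩
  · linarith [mul_nonneg (sub_nonneg.2 hxu) (sub_nonneg.2 hyc)]
  · linarith [mul_nonneg (sub_nonneg.2 hlx) (sub_nonneg.2 hyc)]

theorem statement18_general (n₁ n₂ H : ℕ)
    (l u : Fin n₁ → ℝ)
    (W : Matrix (Fin n₁) (Fin n₂) ℝ)
    (hWpos : ∀ i j, 0 ≤ W i j) (hWrank : W.rank ≤ 1)
    (hWrow : ∀ i, l i ≤ ∑ j, W i j ∧ ∑ j, W i j ≤ u i) :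
    ∃ (z : Fin n₂ → Fin H → ℝ) (γ : Fin n₂ → ℝ)
      (α : Fin n₁ → Fin n₂ → Fin H → ℝ) (β : Fin n₁ → Fin n₂ → ℝ),
      (∀ j h, z j h = 0 ∨ z j h = 1) ∧
      (∀ j, 0 ≤ γ j ∧ γ j ≤ (2 : ℝ)⁻¹ ^ H) ∧
      (∀ i j, W i j = (∑ h, (2 : ℝ)⁻¹ ^ (h.val + 1) * α i j h) + β i j) ∧
      (∀ i j h, l i * z j h ≤ α i j h ∧ α i j h ≤ u i * z j h) ∧
      (∀ i j h,
        u i * z j h + (∑ j', W i j') - u i ≤ α i j h ∧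
        α i j h ≤ l i * z j h + (∑ j', W i j') - l i) ∧
      (∀ i j, l i * γ j ≤ β i j ∧ β i j ≤ u i * γ j) ∧
      (∀ i j,
        u i * γ j + (2 : ℝ)⁻¹ ^ H * ((∑ j', W i j') - u i) ≤ β i j ∧
        β i j ≤ l i * γ j + (2 : ℝ)⁻¹ ^ H * ((∑ j', W i j') - l i)) := by
  obtain ⟨t, ht, hWt⟩ := exists_eq_rowSum_mul_of_rank_le_one hWpos hWrank
  choose z γ hz hγ ht_eq using fun j => exists_binary_digits H (ht j)
  have hz01 : ∀ j h, z j h ∈ Set.Icc (0 : ℝ) 1 := fun j h => by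
    rcases hz j h with hzh | hzh <;> simp [hzh]
  have hα := fun i j h => mul_mem_mcCormick (hWrow i) (hz01 j h)
  have hβ := fun i j => mul_mem_mcCormick (hWrow i) (hγ j)
  refine ⟨z, γ, fun i j h => (∑ j', W i j') * z j h, fun i j => (∑ j', W i j') * γ j, hz, hγ,
    fun i j => ?_, fun i j h => (hα i j h).1, fun i j h => ?_, fun i j => (hβ i j).1,
    fun i j => (hβ i j).2⟩
  · rw [hWt i j, ht_eq j, mul_add, Finset.mul_sum]
    simp only [mul_left_comm]
  · simpa only [one_mul, ← add_sub_assoc] using (hα i j h).2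

/-- Containment U^row(l,u) ⊆ D̄^row(l,u,H): every entrywise nonnegative rank-1
matrix with row sums in [lᵢ, uᵢ] admits a binary discretization together with
the McCormick envelope constraints. Here h : Fin H encodes the index h+1 ∈ {1,…,H}. -/
theorem statement18 (n₁ n₂ H : ℕ) (hn₁ : 0 < n₁) (hn₂ : 0 < n₂) (hH : 0 < H)
    (l u : Fin n₁ → ℝ) (hl : ∀ i, 0 ≤ l i) (hlu : ∀ i, l i ≤ u i)
    (W : Matrix (Fin n₁) (Fin n₂) ℝ)
    (hWpos : ∀ i j, 0 ≤ W i j) (hWrank : W.rank ≤ 1)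
    (hWrow : ∀ i, l i ≤ ∑ j, W i j ∧ ∑ j, W i j ≤ u i) :
    ∃ (z : Fin n₂ → Fin H → ℝ) (γ : Fin n₂ → ℝ)
      (α : Fin n₁ → Fin n₂ → Fin H → ℝ) (β : Fin n₁ → Fin n₂ → ℝ),
      (∀ j h, z j h = 0 ∨ z j h = 1) ∧
      (∀ j, 0 ≤ γ j ∧ γ j ≤ (2 : ℝ)⁻¹ ^ H) ∧
      (∀ i j, W i j = (∑ h, (2 : ℝ)⁻¹ ^ (h.val + 1) * α i j h) + β i j) ∧
      (∀ i j h, l i * z j h ≤ α i j h ∧ α i j h ≤ u i * z j h) ∧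
      (∀ i j h,
        u i * z j h + (∑ j', W i j') - u i ≤ α i j h ∧
        α i j h ≤ l i * z j h + (∑ j', W i j') - l i) ∧
      (∀ i j, l i * γ j ≤ β i j ∧ β i j ≤ u i * γ j) ∧
      (∀ i j,
        u i * γ j + (2 : ℝ)⁻¹ ^ H * ((∑ j', W i j') - u i) ≤ β i j ∧
        β i j ≤ l i * γ j + (2 : ℝ)⁻¹ ^ H * ((∑ j', W i j') - l i)) :=
  statement18_general n₁ n₂ H l u W hWpos hWrank hWrow
end
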